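/- arXiv:1906.03342 — 5 statements merged into one kernel-verified Lean document; each statement's English description precedes it below -/
import Mathlib

section
/- For k, r ≥ 2, every ordered r-graph on [n] with more than (k-1)·C(n, r-1) edges contains a zigzag tight path ZP_k^r: that is, vertices v₀, …, v_{k+r-2} and a partition of them into r intervals X₀ < X₁ < ⋯ < X_{r-1} of [n] such that {v_i, v_{i+1}, …, v_{i+r-1}} is an edge for all 0 ≤ i ≤ k-1, v_i ∈ X_{i mod r}, and within each X_j the vertices v_j, v_{j+r}, v_{j+2r}, … appear in increasing order if j is even and decreasing order if j is odd. -/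
/-- An interval in ℕ: a set of consecutive integers. -/
def IsIntervalN (I : Finset ℕ) : Prop := ∃ a b : ℕ, I = Finset.Icc a b

/-- Every element of `I` is smaller than every element of `J`. -/
def Precedes (I J : Finset ℕ) : Prop := ∀ x ∈ I, ∀ y ∈ J, x < y

/-- An ordered hypergraph `H` is interval k-partite with parts of size at most `m`:
there are ℓ ≥ k disjoint intervals I₀ < I₁ < ⋯ < I_{ℓ-1}, each of size at most `m`,
such that every edge of `H` is contained in their union and intersects each of them. -/
def IntervalKPartiteB (k m : ℕ) (H : Finset (Finset ℕ)) : Prop :=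
  ∃ ℓ, k ≤ ℓ ∧ ∃ I : ℕ → Finset ℕ,
    (∀ j < ℓ, IsIntervalN (I j)) ∧
    (∀ j < ℓ, (I j).card ≤ m) ∧
    (∀ j j', j < j' → j' < ℓ → Precedes (I j) (I j')) ∧
    ∀ e ∈ H, (∀ x ∈ e, ∃ j < ℓ, x ∈ I j) ∧ (∀ j < ℓ, (e ∩ I j).Nonempty)

/-- An ordered hypergraph `H` is interval k-partite: there are ℓ ≥ k disjoint
intervals I₀ < I₁ < ⋯ < I_{ℓ-1} such that every edge of `H` is contained in
their union and intersects each of them. -/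
def IntervalKPartite (k : ℕ) (H : Finset (Finset ℕ)) : Prop :=
  ∃ ℓ, k ≤ ℓ ∧ ∃ I : ℕ → Finset ℕ,
    (∀ j < ℓ, IsIntervalN (I j)) ∧
    (∀ j j', j < j' → j' < ℓ → Precedes (I j) (I j')) ∧
    ∀ e ∈ H, (∀ x ∈ e, ∃ j < ℓ, x ∈ I j) ∧ (∀ j < ℓ, (e ∩ I j).Nonempty)

/-- An ordered hypergraph `H` is interval r-partite in the exact sense: there are
intervals I₀ < I₁ < ⋯ < I_{r-1} such that every edge of `H` has exactly one
vertex in each of them (and is contained in their union). -/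
def IntervalPartiteExact (r : ℕ) (H : Finset (Finset ℕ)) : Prop :=
  ∃ I : ℕ → Finset ℕ,
    (∀ j < r, IsIntervalN (I j)) ∧
    (∀ j j', j < j' → j' < r → Precedes (I j) (I j')) ∧
    ∀ e ∈ H, (∀ x ∈ e, ∃ j < r, x ∈ I j) ∧ (∀ j < r, (e ∩ I j).card = 1)


def GoodPath (r : ℕ) (H : Finset (Finset ℕ)) (m : ℕ) (v : ℕ → ℕ) : Prop :=
  (∀ t < m, Finset.image v (Finset.Icc t (t + r - 1)) ∈ H) ∧
  (∀ s, s + 1 ≤ m + r - 2 → (s + 1) % r ≠ 0 → v s < v (s + 1)) ∧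
  (∀ s, r ≤ s → s ≤ m + r - 2 → (s + 1) % r ≠ 0 → v s < v (s + 1 - r)) ∧
  (∀ i, i + r ≤ m + r - 2 → if i % r % 2 = 0 then v i < v (i + r) else v (i + r) < v i)

lemma mstep {r a b : ℕ} (h : a % r = b % r) (hlt : b < a) : b + r ≤ a := by
  have hd : r ∣ a - b := (Nat.modEq_iff_dvd' hlt.le).mp h.symm
  obtain ⟨q, hq⟩ := hd
  rcases Nat.eq_zero_or_pos q with h0 | h1
  · subst h0; simp at hq; omega
  · have h2 : r ≤ r * q := by simpa using Nat.mul_le_mul_left r h1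
    omega

lemma res_eq {r t a b : ℕ} (ha : t ≤ a) (ha' : a ≤ t + r - 1) (hb : t ≤ b)
    (hb' : b ≤ t + r - 1) (h : a % r = b % r) : a = b := by
  rcases lt_trichotomy a b with hl | he | hl
  · have := mstep h.symm hl; omega
  · exact he
  · have := mstep h hl; omega

lemma succ_mod {r : ℕ} (hr : 2 ≤ r) (a : ℕ) :
    (a + 1) % r = if a % r + 1 = r then 0 else a % r + 1 := by
  have h1 : (a + 1) % r = (a % r + 1) % r := by
    conv_lhs => rw [Nat.add_mod]
    rw [Nat.mod_eq_of_lt (show (1:ℕ) < r by omega)]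
  have hlt : a % r < r := Nat.mod_lt _ (by omega)
  split_ifs with h
  · rw [h1, h, Nat.mod_self]
  · rw [h1, Nat.mod_eq_of_lt (by omega)]

lemma pred_mod {r a j : ℕ} (h : a % r = j) (hj : 1 ≤ j) : (a - 1) % r = j - 1 := by
  rcases Nat.eq_zero_or_pos r with h0 | hr
  · subst h0; simp only [Nat.mod_zero] at h ⊢; omega
  have hlt : a % r < r := Nat.mod_lt _ hr
  have hdm := Nat.div_add_mod a r
  have ha1 : a - 1 = r * (a / r) + (j - 1) := by omega
  rw [ha1, Nat.mul_add_mod, Nat.mod_eq_of_lt (by omega)]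

lemma window_lt {r : ℕ} {H : Finset (Finset ℕ)} {m : ℕ} {v : ℕ → ℕ}
    (hr : 2 ≤ r) (hv : GoodPath r H m v) {t : ℕ} (ht : t < m) :
    ∀ a b : ℕ, t ≤ a → a ≤ t + r - 1 → t ≤ b → b ≤ t + r - 1 →
    a % r < b % r → v a < v b := by
  have hr0 : 0 < r := by omega
  have step : ∀ a b : ℕ, t ≤ a → a ≤ t + r - 1 → t ≤ b → b ≤ t + r - 1 →
      a % r + 1 = b % r → v a < v b := by
    intro a b ha ha' hb hb' h
    have hbm : b % r < r := Nat.mod_lt _ hr0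
    have hb1 : 1 ≤ b := by
      rcases Nat.eq_zero_or_pos b with h0 | h1
      · subst h0; simp at h
      · exact h1
    have hmod : (a + 1) % r = b % r := by
      rw [succ_mod hr]; split_ifs with hx <;> omega
    rcases lt_trichotomy (a + 1) b with hl | he | hl
    · have := mstep hmod.symm hl; omega
    · have := hv.2.1 a (by omega) (by omega)
      rwa [he] at this
    · -- b ≤ a, so a + 1 = b + r
      have hba : b + r ≤ a + 1 := mstep hmod hl
      have hab' : a + 1 = b + r := by omega
      have := hv.2.2.1 a (by omega) (by omega) (by omega)
      rwa [show a + 1 - r = b by omega] at this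
  have chain : ∀ d a b : ℕ, t ≤ a → a ≤ t + r - 1 → t ≤ b → b ≤ t + r - 1 →
      a % r + 1 + d = b % r → v a < v b := by
    intro d
    induction d with
    | zero => intro a b ha ha' hb hb' h; exact step a b ha ha' hb hb' (by omega)
    | succ d ih =>
      intro a b ha ha' hb hb' h
      have hbm : b % r < r := Nat.mod_lt _ hr0
      have har : a % r + 1 < r := by omega
      by_cases hc : a + 1 ≤ t + r - 1
      · have hc1 : (a + 1) % r = a % r + 1 := by
          rw [succ_mod hr]; split_ifs with hx <;> omega
        exact lt_trans (step a (a + 1) ha (by omega) (by omega) hc hc1.symm)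
          (ih (a + 1) b (by omega) hc hb hb' (by omega))
      · have hae : a + 1 = t + r := by omega
        have hct : t % r = a % r + 1 := by
          have h1 : (t + r) % r = t % r := Nat.add_mod_right t r
          have h2 : (a + 1) % r = a % r + 1 := by
            rw [succ_mod hr]; split_ifs with hx <;> omega
          rw [← hae] at h1; omega
        exact lt_trans (step a t ha ha' le_rfl (by omega) hct.symm)
          (ih t b le_rfl (by omega) hb hb' (by omega))
  intro a b ha ha' hb hb' hab
  exact chain (b % r - a % r - 1) a b ha ha' hb hb' (by omega)

lemma window_ne {r : ℕ} {H : Finset (Finset ℕ)} {m : ℕ} {v : ℕ → ℕ}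
    (hr : 2 ≤ r) (hv : GoodPath r H m v) {t : ℕ} (ht : t < m) :
    ∀ a b : ℕ, t ≤ a → a ≤ t + r - 1 → t ≤ b → b ≤ t + r - 1 →
    a ≠ b → v a ≠ v b := by
  intro a b ha ha' hb hb' hne
  have hres : a % r ≠ b % r := fun h => hne (res_eq ha ha' hb hb' h)
  rcases lt_or_gt_of_ne hres with h | h
  · exact ne_of_lt (window_lt hr hv ht a b ha ha' hb hb' h)
  · exact ne_of_gt (window_lt hr hv ht b a hb hb' ha ha' h)

lemma mono_zig {r : ℕ} {H : Finset (Finset ℕ)} {m : ℕ} {v : ℕ → ℕ}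
    (hr : 2 ≤ r) (hv : GoodPath r H m v) :
    ∀ b a : ℕ, a % r = b % r → a < b → b ≤ m + r - 2 →
    (if a % r % 2 = 0 then v a < v b else v b < v a) := by
  intro b
  induction b using Nat.strong_induction_on with
  | _ b ih =>
    intro a hab hlt hb
    have hge := mstep hab.symm hlt
    have hmod : (b - r) % r = b % r := by
      conv_rhs => rw [show b = b - r + r by omega]
      rw [Nat.add_mod_right]
    have hc : a % r = (b - r) % r := by omega
    have hD := hv.2.2.2 (b - r) (by omega)
    rw [show b - r + r = b by omega] at hD
    rw [← hc] at hD
    rcases eq_or_lt_of_le (show a ≤ b - r by omega) with heq | hlt'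
    · rw [← heq] at hD; exact hD
    · have h1 := ih (b - r) (by omega) a hc hlt' (by omega)
      split_ifs at h1 hD ⊢ with hp
      · exact lt_trans h1 hD
      · exact lt_trans hD h1

lemma base_path {r : ℕ} {H : Finset (Finset ℕ)} (hr : 2 ≤ r) {e : Finset ℕ}
    (he : e ∈ H) (hcard : e.card = r) :
    ∃ v, GoodPath r H 1 v ∧ Finset.image v (Finset.Icc 0 (1 - 1 + r - 1)) = e := by
  refine ⟨fun i => if h : i < r then e.orderEmbOfFin hcard ⟨i, h⟩ else 0, ?_, ?_⟩
  · refine ⟨?_, ?_, ?_, ?_⟩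
    · intro t ht
      have ht0 : t = 0 := by omega
      subst ht0
      have himg : Finset.image (fun i => if h : i < r then e.orderEmbOfFin hcard ⟨i, h⟩ else 0)
          (Finset.Icc 0 (0 + r - 1)) = e := by
        ext x
        simp only [Finset.mem_image, Finset.mem_Icc]
        constructor
        · rintro ⟨i, ⟨-, hi⟩, rfl⟩
          rw [dif_pos (show i < r by omega)]
          exact Finset.orderEmbOfFin_mem e hcard _
        · intro hx
          have : x ∈ Set.range (e.orderEmbOfFin hcard) := by
            rw [Finset.range_orderEmbOfFin]; exact hx
          obtain ⟨i, hi⟩ := this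
          exact ⟨i.1, ⟨Nat.zero_le _, by omega⟩, by rw [dif_pos i.2]; simpa using hi⟩
      rwa [himg]
    · intro s hs hs'
      dsimp only
      rw [dif_pos (show s < r by omega), dif_pos (show s + 1 < r by omega)]
      exact (e.orderEmbOfFin hcard).strictMono (by simp)
    · intro s hs hs' _; omega
    · intro i hi; omega
  · have : 1 - 1 + r - 1 = 0 + r - 1 := by omega
    rw [this]
    ext x
    simp only [Finset.mem_image, Finset.mem_Icc]
    constructor
    · rintro ⟨i, ⟨-, hi⟩, rfl⟩
      rw [dif_pos (show i < r by omega)]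
      exact Finset.orderEmbOfFin_mem e hcard _
    · intro hx
      have : x ∈ Set.range (e.orderEmbOfFin hcard) := by
        rw [Finset.range_orderEmbOfFin]; exact hx
      obtain ⟨i, hi⟩ := this
      exact ⟨i.1, ⟨Nat.zero_le _, by omega⟩, by rw [dif_pos i.2]; simpa using hi⟩

lemma extend_path {r : ℕ} {H : Finset (Finset ℕ)} {g : ℕ} {v : ℕ → ℕ}
    (hr : 2 ≤ r) (hg : 1 ≤ g) (hv : GoodPath r H g v)
    {S : Finset ℕ}
    (hS : S = (Finset.image v (Finset.Icc (g - 1) (g + r - 2))).erase (v (g - 1)))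
    {y : ℕ} (hyS : y ∉ S) (hfH : insert y S ∈ H)
    (hfil : S.filter (· < v (g - 1)) = S.filter (· < y))
    (hxy : if (g - 1) % r % 2 = 0 then v (g - 1) < y else y < v (g - 1)) :
    ∃ v', GoodPath r H (g + 1) v' ∧
      Finset.image v' (Finset.Icc g (g + r - 1)) = insert y S := by
  have hg1 : g - 1 < g := by omega
  have hup : g - 1 + r - 1 = g + r - 2 := by omega
  have hSimg : Finset.image v (Finset.Icc g (g + r - 2)) = S := by
    rw [hS]
    ext w
    simp only [Finset.mem_erase, Finset.mem_image, Finset.mem_Icc]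
    constructor
    · rintro ⟨b, ⟨hb1, hb2⟩, rfl⟩
      refine ⟨window_ne hr hv hg1 b (g - 1) (by omega) (by omega) (by omega) (by omega)
        (by omega), ⟨b, ⟨by omega, by omega⟩, rfl⟩⟩
    · rintro ⟨hne, b, ⟨hb1, hb2⟩, rfl⟩
      exact ⟨b, ⟨by
        rcases Nat.eq_or_lt_of_le hb1 with h | h
        · exact absurd (by rw [← h]) hne
        · omega, hb2⟩, rfl⟩
  set v' : ℕ → ℕ := Function.update v (g + r - 1) y with hv'
  have hv'eq : ∀ s, s ≤ g + r - 2 → v' s = v s := fun s hs =>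
    Function.update_of_ne (by omega) y v
  have hv'y : v' (g + r - 1) = y := Function.update_self _ _ _
  have hIccsplit : Finset.Icc g (g + r - 1) = insert (g + r - 1) (Finset.Icc g (g + r - 2)) := by
    ext b; simp only [Finset.mem_insert, Finset.mem_Icc]; omega
  have himg' : Finset.image v' (Finset.Icc g (g + r - 1)) = insert y S := by
    rw [hIccsplit, Finset.image_insert, hv'y]
    congr 1
    rw [Finset.image_congr (g := v) (fun b hb => by
      simp only [Finset.coe_Icc, Set.mem_Icc] at hb
      exact hv'eq b hb.2)]
    exact hSimg
  have hlo : (g - 1) % r ≠ 0 → v (g + r - 2) < y := by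
    intro hj
    have hg2 : 2 ≤ g := by
      rcases Nat.eq_or_lt_of_le hg with h | h
      · exfalso; apply hj; rw [← h]; simp
      · omega
    have hres : (g + r - 2) % r = (g - 1) % r - 1 := by
      have hp := pred_mod (a := g - 1) (j := (g - 1) % r) rfl (by omega)
      rw [show g - 1 - 1 = g - 2 by omega] at hp
      rw [show g + r - 2 = (g - 2) + r by omega, Nat.add_mod_right, hp]
    have hlt1 : v (g + r - 2) < v (g - 1) :=
      window_lt hr hv hg1 (g + r - 2) (g - 1) (by omega) (by omega) (by omega) (by omega)
        (by omega)
    have hmem : v (g + r - 2) ∈ S := by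
      rw [← hSimg]
      exact Finset.mem_image_of_mem v (Finset.mem_Icc.mpr ⟨by omega, le_rfl⟩)
    have : v (g + r - 2) ∈ S.filter (· < y) := by
      rw [← hfil]; exact Finset.mem_filter.mpr ⟨hmem, hlt1⟩
    exact (Finset.mem_filter.mp this).2
  have hhi : g % r ≠ 0 → y < v g := by
    intro hgz
    have hresg : g % r = (g - 1) % r + 1 := by
      have := succ_mod hr (g - 1)
      rw [show g - 1 + 1 = g by omega] at this
      rw [this]
      split_ifs with h
      · exfalso; apply hgz; rw [this]; simp [h]
      · rfl
    have hlt2 : v (g - 1) < v g :=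
      window_lt hr hv hg1 (g - 1) g (by omega) (by omega) (by omega) (by omega) (by omega)
    have hmemg : v g ∈ S := by
      rw [← hSimg]
      exact Finset.mem_image_of_mem v (Finset.mem_Icc.mpr ⟨le_rfl, by omega⟩)
    have hnot : v g ∉ S.filter (· < y) := by
      rw [← hfil]
      simp only [Finset.mem_filter, not_and]
      intro _
      omega
    have hne : v g ≠ y := fun h => hyS (h ▸ hmemg)
    simp only [Finset.mem_filter, not_and] at hnot
    have := hnot hmemg
    omega
  refine ⟨v', ⟨?_, ?_, ?_, ?_⟩, himg'⟩
  · intro t ht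
    rcases Nat.lt_or_ge t g with h | h
    · rw [Finset.image_congr (g := v) (fun b hb => by
        simp only [Finset.coe_Icc, Set.mem_Icc] at hb
        exact hv'eq b (by omega))]
      exact hv.1 t h
    · have ht' : t = g := by omega
      subst ht'
      rw [show t + r - 1 = t + r - 1 from rfl]
      rw [show Finset.Icc t (t + r - 1) = Finset.Icc t (t + r - 1) from rfl]
      rw [himg']
      exact hfH
  · intro s hs hsm
    rcases Nat.lt_or_ge (s + 1) (g + r - 1) with h | h
    · rw [hv'eq s (by omega), hv'eq (s + 1) (by omega)]
      exact hv.2.1 s (by omega) hsm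
    · have hseq : s + 1 = g + r - 1 := by omega
      have hj : (g - 1) % r ≠ 0 := by
        rw [show g - 1 = s + 1 - r by omega]
        rwa [show (s + 1 - r) % r = (s + 1) % r by
          conv_rhs => rw [show s + 1 = (s + 1 - r) + r by omega]
          rw [Nat.add_mod_right]]
      rw [hv'eq s (by omega), hseq, hv'y]
      rw [show s = g + r - 2 by omega]
      exact hlo hj
  · intro s hrs hs hsm
    rcases Nat.lt_or_ge s (g + r - 1) with h | h
    · rw [hv'eq s (by omega), hv'eq (s + 1 - r) (by omega)]
      exact hv.2.2.1 s hrs (by omega) hsm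
    · have hseq : s = g + r - 1 := by omega
      have hgz : g % r ≠ 0 := by
        rwa [show g % r = (s + 1) % r by
          rw [hseq, show g + r - 1 + 1 = g + r by omega, Nat.add_mod_right]]
      rw [hseq, hv'y, show g + r - 1 + 1 - r = g by omega, hv'eq g (by omega)]
      exact hhi hgz
  · intro i hi
    rcases Nat.lt_or_ge (i + r) (g + r - 1) with h | h
    · rw [hv'eq i (by omega), hv'eq (i + r) (by omega)]
      exact hv.2.2.2 i (by omega)
    · have hieq : i = g - 1 := by omega
      rw [hieq, hv'eq (g - 1) (by omega), show g - 1 + r = g + r - 1 by omega, hv'y]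
      exact hxy

lemma rank_card {r : ℕ} {H : Finset (Finset ℕ)} {m : ℕ} {v : ℕ → ℕ}
    (hr : 2 ≤ r) (hv : GoodPath r H m v) {t a : ℕ} (ht : t < m)
    (ha : t ≤ a) (ha' : a ≤ t + r - 1) :
    ((Finset.image v (Finset.Icc t (t + r - 1))).filter (· < v a)).card
      = ((Finset.Icc t (t + r - 1)).filter (fun b => b % r < a % r)).card := by
  have hset : (Finset.image v (Finset.Icc t (t + r - 1))).filter (· < v a)
      = Finset.image v ((Finset.Icc t (t + r - 1)).filter (fun b => b % r < a % r)) := by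
    ext w
    simp only [Finset.mem_filter, Finset.mem_image, Finset.mem_Icc]
    constructor
    · rintro ⟨⟨b, ⟨hb1, hb2⟩, rfl⟩, hlt⟩
      refine ⟨b, ⟨⟨hb1, hb2⟩, ?_⟩, rfl⟩
      rcases lt_trichotomy (b % r) (a % r) with h | h | h
      · exact h
      · exact absurd (res_eq hb1 hb2 ha ha' h ▸ hlt) (lt_irrefl _)
      · exact absurd (window_lt hr hv ht a b ha ha' hb1 hb2 h) (by omega)
    · rintro ⟨b, ⟨⟨hb1, hb2⟩, hres⟩, rfl⟩
      exact ⟨⟨b, ⟨hb1, hb2⟩, rfl⟩, window_lt hr hv ht b a hb1 hb2 ha ha' hres⟩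
  rw [hset, Finset.card_image_of_injOn]
  intro b hb c hc hbc
  simp only [Finset.coe_filter, Finset.mem_Icc, Set.mem_setOf_eq] at hb hc
  by_contra hne
  exact window_ne hr hv ht b c hb.1.1 hb.1.2 hc.1.1 hc.1.2 hne hbc

def ZPP (r : ℕ) (H : Finset (Finset ℕ)) (e : Finset ℕ) (m : ℕ) : Prop :=
  ∃ v, GoodPath r H m v ∧ Finset.image v (Finset.Icc (m - 1) (m - 1 + r - 1)) = e

noncomputable def ZPg (k r : ℕ) (H : Finset (Finset ℕ)) (e : Finset ℕ) : ℕ :=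
  @Nat.findGreatest (ZPP r H e) (Classical.decPred _) (k - 1)

noncomputable def ZPv (k r : ℕ) (H : Finset (Finset ℕ)) (e : Finset ℕ) : ℕ → ℕ :=
  @dite _ (ZPP r H e (ZPg k r H e)) (Classical.dec _) (fun h => h.choose) (fun _ _ => 0)

lemma card_bound {k r n : ℕ} (hk : 2 ≤ k) (hr : 2 ≤ r) {H : Finset (Finset ℕ)}
    (hH : ∀ e ∈ H, e ⊆ Finset.Icc 1 n ∧ e.card = r)
    (hnp : ¬ ∃ v, GoodPath r H k v) :
    H.card ≤ (k - 1) * Nat.choose n (r - 1) := by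
  classical
  have hbase : ∀ e ∈ H, ZPP r H e 1 := by
    intro e he
    obtain ⟨v, hv, him⟩ := base_path hr he (hH e he).2
    exact ⟨v, hv, him⟩
  have hge1 : ∀ e ∈ H, 1 ≤ ZPg k r H e := fun e he =>
    Nat.le_findGreatest (by omega) (hbase e he)
  have hgle : ∀ e, ZPg k r H e ≤ k - 1 := fun e => Nat.findGreatest_le _
  have hspec : ∀ e ∈ H, ZPP r H e (ZPg k r H e) := fun e he =>
    Nat.findGreatest_spec (m := 1) (by omega) (hbase e he)
  have hpv : ∀ e ∈ H, GoodPath r H (ZPg k r H e) (ZPv k r H e) ∧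
      Finset.image (ZPv k r H e)
        (Finset.Icc (ZPg k r H e - 1) (ZPg k r H e - 1 + r - 1)) = e := by
    intro e he
    have h := hspec e he
    unfold ZPv
    rw [dif_pos h]
    exact h.choose_spec
  have hcontra : ∀ e, ZPP r H e (ZPg k r H e + 1) → False := by
    intro e hp
    rcases le_or_gt (ZPg k r H e + 1) (k - 1) with h | h
    · have h2 : ZPg k r H e + 1 ≤ ZPg k r H e := Nat.le_findGreatest h hp
      omega
    · have hgk : ZPg k r H e + 1 = k := by have := hgle e; omega
      obtain ⟨v, hv, -⟩ := hp
      exact hnp ⟨v, by rwa [hgk] at hv⟩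
  have hxmem : ∀ e ∈ H, ZPv k r H e (ZPg k r H e - 1) ∈ e := by
    intro e he
    obtain ⟨hgp, himg⟩ := hpv e he
    have hm : ZPv k r H e (ZPg k r H e - 1) ∈ Finset.image (ZPv k r H e)
        (Finset.Icc (ZPg k r H e - 1) (ZPg k r H e - 1 + r - 1)) :=
      Finset.mem_image_of_mem _ (Finset.mem_Icc.mpr ⟨le_rfl, by omega⟩)
    rwa [himg] at hm
  set F : Finset ℕ → ℕ × Finset ℕ :=
    fun e => (ZPg k r H e, e.erase (ZPv k r H e (ZPg k r H e - 1))) with hFdef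
  have hmaps : ∀ e ∈ H,
      F e ∈ (Finset.Icc 1 (k - 1)) ×ˢ ((Finset.Icc 1 n).powersetCard (r - 1)) := by
    intro e he
    rw [Finset.mem_product]
    constructor
    · exact Finset.mem_Icc.mpr ⟨hge1 e he, hgle e⟩
    · rw [Finset.mem_powersetCard]
      refine ⟨fun w hw => (hH e he).1 (Finset.mem_of_mem_erase hw), ?_⟩
      rw [Finset.card_erase_of_mem (hxmem e he), (hH e he).2]
  have hinj : Set.InjOn F H := by
    intro e he f hf hef
    by_contra hne
    simp only [hFdef, Prod.mk.injEq] at hef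
    obtain ⟨hG, hS⟩ := hef
    rw [← hG] at hS
    have hxe : ZPv k r H e (ZPg k r H e - 1) ∈ e := hxmem e he
    have hyf : ZPv k r H f (ZPg k r H e - 1) ∈ f := by rw [hG]; exact hxmem f hf
    have hein : e = insert (ZPv k r H e (ZPg k r H e - 1))
        (e.erase (ZPv k r H e (ZPg k r H e - 1))) := (Finset.insert_erase hxe).symm
    have hfin : f = insert (ZPv k r H f (ZPg k r H e - 1))
        (e.erase (ZPv k r H e (ZPg k r H e - 1))) := by
      rw [hS]; exact (Finset.insert_erase hyf).symm
    have hxy_ne : ZPv k r H e (ZPg k r H e - 1) ≠ ZPv k r H f (ZPg k r H e - 1) := by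
      intro h
      apply hne
      rw [hein, hfin, h]
    obtain ⟨hve, hvime⟩ := hpv e he
    obtain ⟨hvf, hvimf⟩ := hpv f hf
    rw [← hG] at hvf hvimf
    have hranke := rank_card hr hve (t := ZPg k r H e - 1) (a := ZPg k r H e - 1)
      (by have := hge1 e he; omega) le_rfl (by omega)
    have hrankf := rank_card hr hvf (t := ZPg k r H e - 1) (a := ZPg k r H e - 1)
      (by have := hge1 e he; omega) le_rfl (by omega)
    rw [hvime] at hranke
    rw [hvimf] at hrankf
    have hcards : (e.filter (· < ZPv k r H e (ZPg k r H e - 1))).card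
        = (f.filter (· < ZPv k r H f (ZPg k r H e - 1))).card := by
      rw [hranke, hrankf]
    have hefil : e.filter (· < ZPv k r H e (ZPg k r H e - 1))
        = (e.erase (ZPv k r H e (ZPg k r H e - 1))).filter
            (· < ZPv k r H e (ZPg k r H e - 1)) := by
      ext w
      simp only [Finset.mem_filter, Finset.mem_erase]
      constructor
      · rintro ⟨h1, h2⟩; exact ⟨⟨by omega, h1⟩, h2⟩
      · rintro ⟨⟨-, h1⟩, h2⟩; exact ⟨h1, h2⟩
    have hffil : f.filter (· < ZPv k r H f (ZPg k r H e - 1))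
        = (e.erase (ZPv k r H e (ZPg k r H e - 1))).filter
            (· < ZPv k r H f (ZPg k r H e - 1)) := by
      rw [hS]
      ext w
      simp only [Finset.mem_filter, Finset.mem_erase]
      constructor
      · rintro ⟨h1, h2⟩; exact ⟨⟨by omega, h1⟩, h2⟩
      · rintro ⟨⟨-, h1⟩, h2⟩; exact ⟨h1, h2⟩
    have hcards2 : ((e.erase (ZPv k r H e (ZPg k r H e - 1))).filter
          (· < ZPv k r H e (ZPg k r H e - 1))).card
        = ((e.erase (ZPv k r H e (ZPg k r H e - 1))).filter
            (· < ZPv k r H f (ZPg k r H e - 1))).card := by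
      rw [← hefil, ← hffil]; exact hcards
    have hdse : (e.erase (ZPv k r H e (ZPg k r H e - 1))).filter
          (· < ZPv k r H e (ZPg k r H e - 1))
        = (e.erase (ZPv k r H e (ZPg k r H e - 1))).filter
            (· < ZPv k r H f (ZPg k r H e - 1)) := by
      rcases le_total (ZPv k r H e (ZPg k r H e - 1)) (ZPv k r H f (ZPg k r H e - 1))
        with h | h
      · refine Finset.eq_of_subset_of_card_le ?_ hcards2.ge
        intro w hw
        simp only [Finset.mem_filter] at hw ⊢
        exact ⟨hw.1, by omega⟩
      · refine (Finset.eq_of_subset_of_card_le ?_ hcards2.le).symm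
        intro w hw
        simp only [Finset.mem_filter] at hw ⊢
        exact ⟨hw.1, by omega⟩
    have hyS : ZPv k r H f (ZPg k r H e - 1) ∉
        e.erase (ZPv k r H e (ZPg k r H e - 1)) := by
      rw [hS]; exact Finset.notMem_erase _ _
    have hxS : ZPv k r H e (ZPg k r H e - 1) ∉
        e.erase (ZPv k r H e (ZPg k r H e - 1)) := Finset.notMem_erase _ _
    have hup : Finset.Icc (ZPg k r H e - 1) (ZPg k r H e - 1 + r - 1)
        = Finset.Icc (ZPg k r H e - 1) (ZPg k r H e + r - 2) := by
      rw [show ZPg k r H e - 1 + r - 1 = ZPg k r H e + r - 2 by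
        have := hge1 e he; omega]
    have hSe : e.erase (ZPv k r H e (ZPg k r H e - 1))
        = (Finset.image (ZPv k r H e)
            (Finset.Icc (ZPg k r H e - 1) (ZPg k r H e + r - 2))).erase
          (ZPv k r H e (ZPg k r H e - 1)) := by
      rw [← hup, hvime]
    have hSfe : e.erase (ZPv k r H e (ZPg k r H e - 1))
        = (Finset.image (ZPv k r H f)
            (Finset.Icc (ZPg k r H e - 1) (ZPg k r H e + r - 2))).erase
          (ZPv k r H f (ZPg k r H e - 1)) := by
      rw [← hup, hvimf, ← hS]
    have hgnorm : ∀ w : ℕ → ℕ,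
        Finset.image w (Finset.Icc (ZPg k r H e + 1 - 1) (ZPg k r H e + 1 - 1 + r - 1))
          = Finset.image w (Finset.Icc (ZPg k r H e) (ZPg k r H e + r - 1)) := by
      intro w
      rw [show ZPg k r H e + 1 - 1 = ZPg k r H e by omega]
    rcases lt_or_gt_of_ne hxy_ne with hlt | hlt
      <;> by_cases hpar : (ZPg k r H e - 1) % r % 2 = 0
    · -- x < y, even: extend e-path by y
      obtain ⟨v', hgp', himg'⟩ := extend_path hr (hge1 e he) hve hSe hyS
        (by rw [← hfin]; exact hf) hdse (by rw [if_pos hpar]; exact hlt)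
      exact hcontra f (by rw [← hG]; exact ⟨v', hgp', by rw [hgnorm, himg', ← hfin]⟩)
    · -- x < y, odd: extend f-path by x
      obtain ⟨v', hgp', himg'⟩ := extend_path hr (by rw [← hG] at *; exact hge1 e he) hvf
        hSfe hxS (by rw [← hein]; exact he) hdse.symm (by rw [if_neg hpar]; exact hlt)
      exact hcontra e ⟨v', hgp', by rw [hgnorm, himg', ← hein]⟩
    · -- y < x, even: extend f-path by x
      obtain ⟨v', hgp', himg'⟩ := extend_path hr (by rw [← hG] at *; exact hge1 e he) hvf
        hSfe hxS (by rw [← hein]; exact he) hdse.symm (by rw [if_pos hpar]; exact hlt)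
      exact hcontra e ⟨v', hgp', by rw [hgnorm, himg', ← hein]⟩
    · -- y < x, odd: extend e-path by y
      obtain ⟨v', hgp', himg'⟩ := extend_path hr (hge1 e he) hve hSe hyS
        (by rw [← hfin]; exact hf) hdse (by rw [if_neg hpar]; exact hlt)
      exact hcontra f (by rw [← hG]; exact ⟨v', hgp', by rw [hgnorm, himg', ← hfin]⟩)
  have hcard := Finset.card_le_card_of_injOn F hmaps hinj
  rwa [Finset.card_product, Nat.card_Icc, Finset.card_powersetCard, Nat.card_Icc,
    show k - 1 + 1 - 1 = k - 1 by omega, show n + 1 - 1 = n by omega] at hcard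


/-- Theorem (zigzag tight paths): for k, r ≥ 2, every ordered r-graph on [n] with
more than (k-1)·C(n,r-1) edges contains the zigzag tight path ZP_k^r: vertices
v₀,…,v_{k+r-2} with consecutive r-tuples forming edges, together with intervals
X₀ < X₁ < ⋯ < X_{r-1} with v_i ∈ X_{i mod r}, such that within X_j the vertices
v_j, v_{j+r}, v_{j+2r}, … increase if j is even and decrease if j is odd. -/
theorem zigzag_tight_path (k r n : ℕ) (hk : 2 ≤ k) (hr : 2 ≤ r)
    (H : Finset (Finset ℕ)) (hH : ∀ e ∈ H, e ⊆ Finset.Icc 1 n ∧ e.card = r)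
    (hcard : (k - 1) * Nat.choose n (r - 1) < H.card) :
    ∃ v : ℕ → ℕ,
      (∀ i ≤ k + r - 2, v i ∈ Finset.Icc 1 n) ∧
      (∀ i ≤ k + r - 2, ∀ j ≤ k + r - 2, i ≠ j → v i ≠ v j) ∧
      (∀ i ≤ k - 1, Finset.image v (Finset.Icc i (i + r - 1)) ∈ H) ∧
      ∃ X : ℕ → Finset ℕ,
        (∀ j < r, IsIntervalN (X j)) ∧
        (∀ j j', j < j' → j' < r → Precedes (X j) (X j')) ∧
        (∀ i ≤ k + r - 2, v i ∈ X (i % r)) ∧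
        (∀ i, i + r ≤ k + r - 2 →
          if i % r % 2 = 0 then v i < v (i + r) else v (i + r) < v i) := by
  by_cases hex : ∃ v, GoodPath r H k v
  · obtain ⟨v, hv⟩ := hex
    have hr0 : 0 < r := by omega
    -- the last index of each residue class
    set bIdx : ℕ → ℕ := fun c => (k - 1) + ((c + r - (k - 1) % r) % r) with hbIdx
    have hbmod : ∀ c, c < r → bIdx c % r = c := by
      intro c hc
      have hs : (k - 1) % r < r := Nat.mod_lt _ hr0
      obtain ⟨A, hA, hAm⟩ : ∃ A, A + (k - 1) % r = k - 1 ∧ A % r = 0 :=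
        ⟨r * ((k - 1) / r), Nat.div_add_mod _ _, Nat.mul_mod_right _ _⟩
      simp only [hbIdx]
      have h1 : ((k - 1) + ((c + r - (k - 1) % r) % r)) % r
          = ((k - 1) + (c + r - (k - 1) % r)) % r := by
        rw [Nat.add_mod, Nat.mod_mod_of_dvd _ dvd_rfl, ← Nat.add_mod]
      rw [h1, show (k - 1) + (c + r - (k - 1) % r) = A + (c + r) by omega,
        Nat.add_mod, hAm, Nat.zero_add, Nat.mod_mod_of_dvd _ dvd_rfl,
        Nat.add_mod_right, Nat.mod_eq_of_lt hc]
    have hble : ∀ c, k - 1 ≤ bIdx c ∧ bIdx c ≤ k + r - 2 := by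
      intro c
      have hs : (c + r - (k - 1) % r) % r < r := Nat.mod_lt _ hr0
      simp only [hbIdx]
      omega
    have hbmax : ∀ c a, c < r → a ≤ k + r - 2 → a % r = c → a ≤ bIdx c := by
      intro c a hc ha hres
      by_contra hgt
      have := mstep (by rw [hres, hbmod c hc] : a % r = bIdx c % r) (by omega)
      have := (hble c).1
      omega
    set Mx : ℕ → ℕ := fun c => if c % 2 = 0 then v (bIdx c) else v c with hMx
    set mn : ℕ → ℕ := fun c => if c % 2 = 0 then v c else v (bIdx c) with hmn
    have hH1 : ∀ a, a ≤ k + r - 2 → v a ≤ Mx (a % r) := by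
      intro a ha
      have hc : a % r < r := Nat.mod_lt _ hr0
      simp only [hMx]
      split_ifs with hp
      · rcases eq_or_lt_of_le (hbmax (a % r) a hc ha rfl) with he | hlt
        · exact le_of_eq (congrArg v he)
        · have := mono_zig hr hv (bIdx (a % r)) a (by rw [hbmod _ hc]) hlt
            (by have := (hble (a % r)).2; omega)
          rw [if_pos hp] at this
          exact this.le
      · rcases eq_or_lt_of_le (Nat.mod_le a r) with he | hlt
        · exact le_of_eq (congrArg v he.symm)
        · have := mono_zig hr hv a (a % r)
            (by rw [Nat.mod_eq_of_lt hc]) hlt ha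
          rw [Nat.mod_eq_of_lt hc, if_neg hp] at this
          exact this.le
    have hH2 : ∀ a, a ≤ k + r - 2 → mn (a % r) ≤ v a := by
      intro a ha
      have hc : a % r < r := Nat.mod_lt _ hr0
      simp only [hmn]
      split_ifs with hp
      · rcases eq_or_lt_of_le (Nat.mod_le a r) with he | hlt
        · exact le_of_eq (congrArg v he)
        · have := mono_zig hr hv a (a % r)
            (by rw [Nat.mod_eq_of_lt hc]) hlt ha
          rw [Nat.mod_eq_of_lt hc, if_pos hp] at this
          exact this.le
      · rcases eq_or_lt_of_le (hbmax (a % r) a hc ha rfl) with he | hlt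
        · exact le_of_eq (congrArg v he.symm)
        · have := mono_zig hr hv (bIdx (a % r)) a (by rw [hbmod _ hc]) hlt
            (by have := (hble (a % r)).2; omega)
          rw [if_neg hp] at this
          exact this.le
    have hH3 : ∀ c, c + 1 < r → Mx c < mn (c + 1) := by
      intro c hc
      simp only [hMx, hmn]
      by_cases hp : c % 2 = 0
      · rw [if_pos hp, if_neg (by omega : ¬ (c + 1) % 2 = 0)]
        exact window_lt hr hv (show k - 1 < k by omega) (bIdx c) (bIdx (c + 1))
          (hble c).1 (by have := (hble c).2; omega)
          (hble (c + 1)).1 (by have := (hble (c + 1)).2; omega)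
          (by rw [hbmod c (by omega), hbmod (c + 1) hc]; omega)
      · rw [if_neg hp, if_pos (by omega : (c + 1) % 2 = 0)]
        exact window_lt hr hv (show 0 < k by omega) c (c + 1)
          (Nat.zero_le _) (by omega) (Nat.zero_le _) (by omega)
          (by rw [Nat.mod_eq_of_lt (show c < r by omega), Nat.mod_eq_of_lt hc]; omega)
    have hmle : ∀ c, c < r → mn c ≤ Mx c := by
      intro c hc
      have h1 := hH1 c (by omega)
      have h2 := hH2 c (by omega)
      rw [Nat.mod_eq_of_lt hc] at h1 h2
      omega
    have hchain : ∀ c' c, c < c' → c' < r → Mx c < mn c' := by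
      intro c'
      induction c' with
      | zero => intro c hc; omega
      | succ c' ih =>
        intro c hc hcr
        rcases eq_or_lt_of_le (Nat.lt_succ_iff.mp hc) with he | hlt
        · rw [he]; exact hH3 c' hcr
        · exact lt_of_lt_of_le (lt_of_lt_of_le (ih c hlt (by omega))
            (hmle c' (by omega))) (hH3 c' hcr).le
    have hglob : ∀ a b, a ≤ k + r - 2 → b ≤ k + r - 2 → a % r < b % r → v a < v b := by
      intro a b ha hb hab
      calc v a ≤ Mx (a % r) := hH1 a ha
        _ < mn (b % r) := hchain (b % r) (a % r) hab (Nat.mod_lt _ hr0)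
        _ ≤ v b := hH2 b hb
    refine ⟨v, ?_, ?_, ?_, fun j => Finset.Icc (mn j) (Mx j), ?_, ?_, ?_, ?_⟩
    · intro i hi
      have ht : min i (k - 1) < k ∧ min i (k - 1) ≤ i ∧ i ≤ min i (k - 1) + r - 1 := by
        omega
      have hmem : v i ∈ Finset.image v
          (Finset.Icc (min i (k - 1)) (min i (k - 1) + r - 1)) :=
        Finset.mem_image_of_mem _ (Finset.mem_Icc.mpr ⟨ht.2.1, ht.2.2⟩)
      exact (hH _ (hv.1 _ ht.1)).1 hmem
    · intro i hi j hj hne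
      rcases lt_trichotomy (i % r) (j % r) with h | h | h
      · exact ne_of_lt (hglob i j hi hj h)
      · rcases lt_trichotomy i j with hij | hij | hij
        · have := mono_zig hr hv j i h hij hj
          split_ifs at this
          · exact ne_of_lt this
          · exact ne_of_gt this
        · exact absurd hij hne
        · have := mono_zig hr hv i j h.symm hij hi
          split_ifs at this
          · exact ne_of_gt this
          · exact ne_of_lt this
      · exact ne_of_gt (hglob j i hj hi h)
    · intro i hi
      exact hv.1 i (by omega)
    · intro j hj
      exact ⟨mn j, Mx j, rfl⟩
    · intro j j' hjj' hj'r x hx y hy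
      rw [Finset.mem_Icc] at hx hy
      have := hchain j' j hjj' hj'r
      omega
    · intro i hi
      exact Finset.mem_Icc.mpr ⟨hH2 i hi, hH1 i hi⟩
    · intro i hi
      exact hv.2.2.2 i hi
  · exact absurd hcard (not_lt.mpr (card_bound hk hr hH hex))
end

section
/- For every tree F with k edges, every ordered graph H on [n] with more than 2k²n edges contains an interval 2-partite copy of F: i.e., a subgraph isomorphic to F together with two disjoint intervals A < B of [n] such that every edge of the copy has one endpoint in A and one in B. -/
open Finset

namespace OTIB

variable {n k : ℕ}

/-- ordered adjacent pairs of H -/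
def base (H : SimpleGraph (Fin n)) [DecidableRel H.Adj] : Finset (Fin n × Fin n) :=
  univ.filter fun q => H.Adj q.1 q.2 ∧ q.1 < q.2

def nextS (k : ℕ) (s : Finset (Fin n × Fin n)) : Finset (Fin n × Fin n) :=
  s.filter fun q => k ≤ (s.filter fun r => r.1 = q.1 ∧ q.2 ≤ r.2).card ∧
                    k ≤ (s.filter fun r => r.2 = q.2 ∧ r.1 ≤ q.1).card

def SS (k : ℕ) (H : SimpleGraph (Fin n)) [DecidableRel H.Adj] : ℕ → Finset (Fin n × Fin n)
  | 0 => base H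
  | j+1 => nextS k (SS k H j)

variable {H : SimpleGraph (Fin n)} [DecidableRel H.Adj]

lemma SS_succ_subset (j : ℕ) : SS k H (j+1) ⊆ SS k H j := filter_subset _ _

lemma SS_mono {j j' : ℕ} (h : j' ≤ j) : SS k H j ⊆ SS k H j' := by
  induction j with
  | zero => simpa [Nat.le_zero.mp h] using Finset.Subset.refl _
  | succ j ih =>
    rcases Nat.eq_or_lt_of_le h with rfl | hlt
    · exact Finset.Subset.refl _
    · exact (SS_succ_subset j).trans (ih (Nat.lt_succ_iff.mp hlt))

lemma mem_base {q : Fin n × Fin n} (h : q ∈ base H) : H.Adj q.1 q.2 ∧ q.1 < q.2 := by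
  simpa [base] using h

lemma SS_subset_base (j : ℕ) : SS k H j ⊆ base H := SS_mono (Nat.zero_le j)

lemma SS_rich {j : ℕ} {q : Fin n × Fin n} (h : q ∈ SS k H (j+1)) :
    k ≤ ((SS k H j).filter fun r => r.1 = q.1 ∧ q.2 ≤ r.2).card ∧
    k ≤ ((SS k H j).filter fun r => r.2 = q.2 ∧ r.1 ≤ q.1).card := by
  have := (mem_filter.mp h).2
  exact this

/-- each pruning step removes at most 2*k*n pairs -/
lemma card_SS_succ (j : ℕ) : (SS k H j).card ≤ (SS k H (j+1)).card + 2 * k * n := by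
  classical
  set s := SS k H j with hs
  have hsub : SS k H (j+1) ⊆ s := SS_succ_subset j
  have hsd : (s \ SS k H (j+1)).card + (SS k H (j+1)).card = s.card :=
    card_sdiff_add_card_eq_card hsub
  set A : Finset (Fin n × Fin n) :=
    s.filter fun q => (s.filter fun r => r.1 = q.1 ∧ q.2 ≤ r.2).card < k with hA
  set B : Finset (Fin n × Fin n) :=
    s.filter fun q => (s.filter fun r => r.2 = q.2 ∧ r.1 ≤ q.1).card < k with hB
  have hsubAB : s \ SS k H (j+1) ⊆ A ∪ B := by
    intro q hq
    rcases mem_sdiff.mp hq with ⟨hqs, hqn⟩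
    have : ¬ (k ≤ (s.filter fun r => r.1 = q.1 ∧ q.2 ≤ r.2).card ∧
        k ≤ (s.filter fun r => r.2 = q.2 ∧ r.1 ≤ q.1).card) := by
      intro hcontra
      exact hqn (mem_filter.mpr ⟨hqs, hcontra⟩)
    rw [not_and_or, not_le, not_le] at this
    rcases this with h | h
    · exact mem_union_left _ (mem_filter.mpr ⟨hqs, h⟩)
    · exact mem_union_right _ (mem_filter.mpr ⟨hqs, h⟩)
  have hAcard : A.card ≤ k * n := by
    have hcover : A ⊆ univ.biUnion (fun u : Fin n => A.filter fun q => q.1 = u) := by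
      intro q hq
      exact mem_biUnion.mpr ⟨q.1, mem_univ _, mem_filter.mpr ⟨hq, rfl⟩⟩
    refine (card_le_card hcover).trans ((card_biUnion_le).trans ?_)
    have hone : ∀ u : Fin n, (A.filter fun q => q.1 = u).card ≤ k := by
      intro u
      by_cases hne : (A.filter fun q => q.1 = u).Nonempty
      · obtain ⟨q0, hq0, hq0min⟩ := exists_min_image _ (fun q => q.2) hne
        rcases mem_filter.mp hq0 with ⟨hq0A, hq01⟩
        rcases mem_filter.mp hq0A with ⟨hq0s, hq0lt⟩
        have hsubf : (A.filter fun q => q.1 = u) ⊆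
            s.filter fun r => r.1 = q0.1 ∧ q0.2 ≤ r.2 := by
          intro q hq
          rcases mem_filter.mp hq with ⟨hqA, hq1⟩
          rcases mem_filter.mp hqA with ⟨hqs, _⟩
          exact mem_filter.mpr ⟨hqs, by rw [hq1, hq01], hq0min q hq⟩
        exact (card_le_card hsubf).trans hq0lt.le
      · simp [Finset.not_nonempty_iff_eq_empty.mp hne]
    calc ∑ u : Fin n, (A.filter fun q => q.1 = u).card ≤ ∑ _u : Fin n, k :=
          Finset.sum_le_sum fun u _ => hone u
      _ = n * k := by simp [mul_comm]
      _ = k * n := mul_comm _ _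
  have hBcard : B.card ≤ k * n := by
    have hcover : B ⊆ univ.biUnion (fun u : Fin n => B.filter fun q => q.2 = u) := by
      intro q hq
      exact mem_biUnion.mpr ⟨q.2, mem_univ _, mem_filter.mpr ⟨hq, rfl⟩⟩
    refine (card_le_card hcover).trans ((card_biUnion_le).trans ?_)
    have hone : ∀ u : Fin n, (B.filter fun q => q.2 = u).card ≤ k := by
      intro u
      by_cases hne : (B.filter fun q => q.2 = u).Nonempty
      · obtain ⟨q0, hq0, hq0min⟩ := exists_max_image _ (fun q => q.1) hne
        rcases mem_filter.mp hq0 with ⟨hq0B, hq02⟩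
        rcases mem_filter.mp hq0B with ⟨hq0s, hq0lt⟩
        have hsubf : (B.filter fun q => q.2 = u) ⊆
            s.filter fun r => r.2 = q0.2 ∧ r.1 ≤ q0.1 := by
          intro q hq
          rcases mem_filter.mp hq with ⟨hqB, hq2⟩
          rcases mem_filter.mp hqB with ⟨hqs, _⟩
          exact mem_filter.mpr ⟨hqs, by rw [hq2, hq02], hq0min q hq⟩
        exact (card_le_card hsubf).trans hq0lt.le
      · simp [Finset.not_nonempty_iff_eq_empty.mp hne]
    calc ∑ u : Fin n, (B.filter fun q => q.2 = u).card ≤ ∑ _u : Fin n, k :=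
          Finset.sum_le_sum fun u _ => hone u
      _ = n * k := by simp [mul_comm]
      _ = k * n := mul_comm _ _
  have h1 : (s \ SS k H (j+1)).card ≤ 2 * k * n := by
    calc (s \ SS k H (j+1)).card ≤ (A ∪ B).card := card_le_card hsubAB
      _ ≤ A.card + B.card := card_union_le _ _
      _ ≤ k * n + k * n := Nat.add_le_add hAcard hBcard
      _ = 2 * k * n := by ring
  omega

lemma card_SS (j : ℕ) : (SS k H 0).card ≤ (SS k H j).card + j * (2 * k * n) := by
  induction j with
  | zero => simp
  | succ j ih =>
    have := card_SS_succ (k := k) (H := H) j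
    calc (SS k H 0).card ≤ (SS k H j).card + j * (2 * k * n) := ih
      _ ≤ ((SS k H (j+1)).card + 2 * k * n) + j * (2 * k * n) := by omega
      _ = (SS k H (j+1)).card + (j+1) * (2 * k * n) := by ring

lemma card_base : H.edgeFinset.card ≤ (base H).card := by
  classical
  refine Finset.card_le_card_of_injOn
    (fun e => if h : e.out.1 < e.out.2 then e.out else (e.out.2, e.out.1)) ?_ ?_
  · intro e he
    have hadj : H.Adj e.out.1 e.out.2 := by
      rw [Finset.mem_coe, SimpleGraph.mem_edgeFinset] at he
      have : e = s(e.out.1, e.out.2) := by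
        exact e.out_eq.symm
      rw [this] at he
      exact he
    by_cases h : e.out.1 < e.out.2
    · simp only [h, dif_pos]
      exact mem_filter.mpr ⟨mem_univ _, hadj, h⟩
    · have hne : e.out.1 ≠ e.out.2 := hadj.ne
      have h2 : e.out.2 < e.out.1 := lt_of_le_of_ne (not_lt.mp h) (Ne.symm hne)
      simp only [h, dif_neg, not_false_iff]
      exact mem_filter.mpr ⟨mem_univ _, hadj.symm, h2⟩
  · intro e _ e' _ heq
    have key : ∀ x : Sym2 (Fin n),
        s((if h : x.out.1 < x.out.2 then x.out else (x.out.2, x.out.1)).1,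
          (if h : x.out.1 < x.out.2 then x.out else (x.out.2, x.out.1)).2) = x := by
      intro x
      by_cases h : x.out.1 < x.out.2
      · simp only [h, dif_pos]
        exact x.out_eq
      · simp only [h, dif_neg, not_false_iff]
        rw [Sym2.eq_swap]; exact x.out_eq
    have h1 := key e
    have h2 := key e'
    simp only at heq
    rw [← h1, ← h2, heq]


universe u

lemma tree_enum : ∀ (k : ℕ) (V : Type u) [Fintype V] [DecidableEq V]
    (F : SimpleGraph V) [DecidableRel F.Adj],
    F.Connected → Fintype.card V = k + 1 → F.edgeFinset.card = k →
    ∃ (w : ℕ → V) (p : ℕ → ℕ) (c : ℕ → Bool),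
      (∀ v : V, ∃ i, i ≤ k ∧ w i = v) ∧
      (∀ i j, i ≤ k → j ≤ k → w i = w j → i = j) ∧
      (∀ i, 1 ≤ i → i ≤ k → p i < i) ∧
      (∀ i, 1 ≤ i → i ≤ k → F.Adj (w (p i)) (w i)) ∧
      (∀ i, 1 ≤ i → i ≤ k → c i = !c (p i)) ∧
      (∀ u v, F.Adj u v → ∃ i, 1 ≤ i ∧ i ≤ k ∧
        ((w (p i) = u ∧ w i = v) ∨ (w (p i) = v ∧ w i = u))) := by
  intro k
  induction k with
  | zero =>
    intro V _ _ F _ hconn hcard hedge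
    obtain ⟨v0, hv0⟩ := Fintype.card_eq_one_iff.mp hcard
    refine ⟨fun _ => v0, id, fun _ => false, fun v => ⟨0, le_rfl, (hv0 v).symm⟩,
      fun i j hi hj _ => by omega, fun i h1 h2 => by omega, fun i h1 h2 => by omega,
      fun i h1 h2 => by omega, fun u v hadj => ?_⟩
    exfalso
    have hu : u = v0 := hv0 u
    have hv : v = v0 := hv0 v
    rw [hu, hv] at hadj
    exact F.loopless.irrefl v0 hadj
  | succ k ih =>
    intro V _ _ F _ hconn hcard hedge
    classical
    -- find a leaf x
    have hsum : ∑ v, F.degree v = 2 * (k + 1) := by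
      rw [SimpleGraph.sum_degrees_eq_twice_card_edges, hedge]
    have hexist : ∃ x, F.degree x ≤ 1 := by
      by_contra hno
      push_neg at hno
      have : ∑ v, F.degree v ≥ ∑ _v : V, 2 :=
        Finset.sum_le_sum fun v _ => hno v
      rw [Finset.sum_const, smul_eq_mul] at this
      rw [Finset.card_univ, hcard] at this
      omega
    obtain ⟨x, hx1⟩ := hexist
    have hdegx : F.degree x = 1 := by
      refine le_antisymm hx1 ?_
      obtain ⟨z, hz⟩ := Fintype.exists_ne_of_one_lt_card (by omega) x
      obtain ⟨W⟩ := hconn.preconnected x z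
      cases W with
      | nil => exact absurd rfl hz.symm
      | cons h _ =>
        rw [← SimpleGraph.card_neighborFinset_eq_degree]
        exact Finset.card_pos.mpr ⟨_, (SimpleGraph.mem_neighborFinset F x _).mpr h⟩
    obtain ⟨y, hy⟩ := Finset.card_eq_one.mp hdegx
    have hxy : F.Adj x y := by
      have : y ∈ F.neighborFinset x := by rw [hy]; exact Finset.mem_singleton_self y
      exact (SimpleGraph.mem_neighborFinset F x y).mp this
    have huniq : ∀ z, F.Adj x z → z = y := by
      intro z hz
      have : z ∈ F.neighborFinset x := (SimpleGraph.mem_neighborFinset F x z).mpr hz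
      rw [hy] at this
      exact Finset.mem_singleton.mp this
    have hyx : y ≠ x := hxy.ne'
    -- the subgraph on V \ {x}
    let V' := {v : V // v ≠ x}
    let F' : SimpleGraph V' := ⟨fun a b => F.Adj a.1 b.1, ⟨fun a b h => F.symm.symm _ _ h⟩,
      ⟨fun a h => F.loopless.irrefl _ h⟩⟩
    haveI : DecidableRel F'.Adj := fun a b => (inferInstance : Decidable (F.Adj a.1 b.1))
    have hcard' : Fintype.card V' = k + 1 := by
      have h0 : Fintype.card V' = (univ.filter (fun v : V => v ≠ x)).card :=
        Fintype.card_subtype _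
      rw [h0, Finset.filter_ne', Finset.card_erase_of_mem (Finset.mem_univ x),
        Finset.card_univ, hcard]
      omega
    -- connectivity of F'
    have haux : ∀ (L : ℕ) (a b : V) (ha : a ≠ x) (hb : b ≠ x) (W : F.Walk a b),
        W.length ≤ L → F'.Reachable ⟨a, ha⟩ ⟨b, hb⟩ := by
      intro L
      induction L with
      | zero =>
        intro a b ha hb W hW
        have : a = b := SimpleGraph.Walk.eq_of_length_eq_zero (Nat.le_zero.mp hW)
        subst this
        exact SimpleGraph.Reachable.refl _
      | succ L ihL =>
        intro a b ha hb W hW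
        cases W with
        | nil => exact SimpleGraph.Reachable.refl _
        | @cons _ v _ h W' =>
          by_cases hv : v = x
          · subst hv
            have hay : a = y := huniq a h.symm
            cases W' with
            | nil => exact absurd rfl hb
            | @cons _ u _ h2 W'' =>
              have huy : u = y := huniq u h2
              have hau : a = u := by rw [hay, huy]
              subst hau
              refine ihL a b ha hb W'' ?_
              simp only [SimpleGraph.Walk.length_cons] at hW
              omega
          · have hadj' : F'.Adj ⟨a, ha⟩ ⟨v, hv⟩ := h
            refine hadj'.reachable.trans (ihL v b hv hb W' ?_)
            simp only [SimpleGraph.Walk.length_cons] at hW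
            omega
    have hconn' : F'.Connected := by
      haveI : Nonempty V' := ⟨⟨y, hyx⟩⟩
      refine SimpleGraph.Connected.mk ?_
      intro a b
      obtain ⟨W⟩ := hconn.preconnected a.1 b.1
      have := haux W.length a.1 b.1 a.2 b.2 W le_rfl
      simpa using this
    -- edge count of F'
    have hedge' : F'.edgeFinset.card = k := by
      have h2F := SimpleGraph.two_mul_card_edgeFinset (G := F)
      have h2F' := SimpleGraph.two_mul_card_edgeFinset (G := F')
      set P : Finset (V × V) := univ.filter fun q : V × V => F.Adj q.1 q.2 with hP
      set P' : Finset (V' × V') := univ.filter fun q : V' × V' => F'.Adj q.1 q.2 with hP'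
      have hsplit : (P.filter fun q => q.1 = x ∨ q.2 = x).card +
          (P.filter fun q => ¬(q.1 = x ∨ q.2 = x)).card = P.card :=
        Finset.card_filter_add_card_filter_not _
      have hPx : P.filter (fun q => q.1 = x ∨ q.2 = x) = {(x, y), (y, x)} := by
        ext q
        simp only [Finset.mem_filter, Finset.mem_insert, Finset.mem_singleton, hP,
          Finset.mem_univ, true_and]
        constructor
        · rintro ⟨hadj, h1 | h2⟩
          · left
            have : q.2 = y := huniq q.2 (by rwa [h1] at hadj)
            exact Prod.ext h1 this
          · right
            have : q.1 = y := huniq q.1 (by rw [h2] at hadj; exact hadj.symm)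
            exact Prod.ext this h2
        · rintro (rfl | rfl)
          · exact ⟨hxy, Or.inl rfl⟩
          · exact ⟨hxy.symm, Or.inr rfl⟩
      have hPxcard : (P.filter fun q => q.1 = x ∨ q.2 = x).card = 2 := by
        rw [hPx]
        rw [Finset.card_insert_of_notMem, Finset.card_singleton]
        simp only [Finset.mem_singleton]
        intro hcontra
        have := congrArg Prod.fst hcontra
        simp only at this
        exact hyx this.symm
      have hPnx : P'.card = (P.filter fun q => ¬(q.1 = x ∨ q.2 = x)).card := by
        refine Finset.card_nbij (fun q => (q.1.1, q.2.1)) ?_ ?_ ?_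
        · intro q hq
          simp only [hP', Finset.mem_coe, Finset.mem_filter, Finset.mem_univ, true_and] at hq
          simp only [Finset.mem_coe, Finset.mem_filter, Finset.mem_univ, true_and, hP]
          exact ⟨hq, by push_neg; exact ⟨q.1.2, q.2.2⟩⟩
        · intro q1 _ q2 _ heq
          simp only [Prod.mk.injEq] at heq
          exact Prod.ext (Subtype.ext heq.1) (Subtype.ext heq.2)
        · intro q hq
          simp only [Finset.coe_filter, Set.mem_setOf_eq, Finset.mem_filter, hP,
            Finset.mem_univ, true_and] at hq
          push_neg at hq
          refine ⟨(⟨q.1, hq.2.1⟩, ⟨q.2, hq.2.2⟩), ?_, rfl⟩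
          simp only [Finset.coe_filter, Set.mem_setOf_eq, Finset.mem_filter, hP',
            Finset.mem_univ, true_and]
          exact hq.1
      rw [hedge] at h2F
      omega
    -- apply induction hypothesis
    obtain ⟨w', p', c', hsurj', hinj', hp', hadj', hc', hcov'⟩ := ih V' F' hconn' hcard' hedge'
    obtain ⟨jy, hjy, hwjy⟩ := hsurj' ⟨y, hyx⟩
    set wN : ℕ → V := fun i => if i ≤ k then (w' i).1 else x with hwN
    set pN : ℕ → ℕ := fun i => if i = k + 1 then jy else p' i with hpN
    set cN : ℕ → Bool := fun i => if i = k + 1 then !(c' jy) else c' i with hcN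
    have hwlt : ∀ i, i ≤ k → wN i = (w' i).1 := fun i h => if_pos h
    have hwtop : wN (k + 1) = x := if_neg (by omega)
    have hplt : ∀ i, i ≠ k + 1 → pN i = p' i := fun i h => if_neg h
    have hptop : pN (k + 1) = jy := if_pos rfl
    have hclt : ∀ i, i ≠ k + 1 → cN i = c' i := fun i h => if_neg h
    have hctop : cN (k + 1) = !(c' jy) := if_pos rfl
    refine ⟨wN, pN, cN, ?_, ?_, ?_, ?_, ?_, ?_⟩
    · intro v
      by_cases hvx : v = x
      · exact ⟨k + 1, le_rfl, by rw [hwtop, hvx]⟩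
      · obtain ⟨i, hik, hwi⟩ := hsurj' ⟨v, hvx⟩
        exact ⟨i, by omega, by rw [hwlt i hik, hwi]⟩
    · intro i j hi hj heq
      by_cases hik : i ≤ k <;> by_cases hjk : j ≤ k
      · rw [hwlt i hik, hwlt j hjk] at heq
        exact hinj' i j hik hjk (Subtype.ext heq)
      · have hj' : j = k + 1 := by omega
        rw [hwlt i hik, hj', hwtop] at heq
        exact absurd heq (w' i).2
      · have hi' : i = k + 1 := by omega
        rw [hwlt j hjk, hi', hwtop] at heq
        exact absurd heq.symm (w' j).2
      · omega
    · intro i h1 h2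
      by_cases hik : i = k + 1
      · rw [hik, hptop]; omega
      · rw [hplt i hik]
        exact hp' i h1 (by omega)
    · intro i h1 h2
      by_cases hik : i = k + 1
      · rw [hik, hptop, hwlt jy hjy, hwjy, hwtop]
        exact hxy.symm
      · have hik' : i ≤ k := by omega
        have hpi := hp' i h1 hik'
        rw [hplt i hik, hwlt i hik', hwlt (p' i) (by omega)]
        exact hadj' i h1 hik'
    · intro i h1 h2
      by_cases hik : i = k + 1
      · rw [hik, hctop, hptop, hclt jy (by omega)]
      · have hik' : i ≤ k := by omega
        have hpi := hp' i h1 hik'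
        rw [hplt i hik, hclt i hik, hclt (p' i) (by omega)]
        exact hc' i h1 hik'
    · intro u v hadj
      by_cases hux : u = x
      · have hvy : v = y := huniq v (by rwa [hux] at hadj)
        refine ⟨k + 1, by omega, le_rfl, Or.inr ⟨?_, ?_⟩⟩
        · rw [hptop, hwlt jy hjy, hwjy, hvy]
        · rw [hwtop, hux]
      · by_cases hvx : v = x
        · have huy : u = y := huniq u (by rw [hvx] at hadj; exact hadj.symm)
          refine ⟨k + 1, by omega, le_rfl, Or.inl ⟨?_, ?_⟩⟩
          · rw [hptop, hwlt jy hjy, hwjy, huy]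
          · rw [hwtop, hvx]
        · have hadj'' : F'.Adj ⟨u, hux⟩ ⟨v, hvx⟩ := hadj
          obtain ⟨i, hi1, hik, hcase⟩ := hcov' ⟨u, hux⟩ ⟨v, hvx⟩ hadj''
          have hpi := hp' i hi1 hik
          refine ⟨i, hi1, by omega, ?_⟩
          rw [hplt i (by omega), hwlt i hik, hwlt (p' i) (by omega)]
          rcases hcase with ⟨ha, hb⟩ | ⟨ha, hb⟩
          · exact Or.inl ⟨congrArg Subtype.val ha, congrArg Subtype.val hb⟩
          · exact Or.inr ⟨congrArg Subtype.val ha, congrArg Subtype.val hb⟩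


lemma exists_embedding (H : SimpleGraph (Fin n)) [DecidableRel H.Adj]
    (hk : 1 ≤ k) (p : ℕ → ℕ) (c : ℕ → Bool)
    (hp : ∀ i, 1 ≤ i → i ≤ k → p i < i)
    (hc : ∀ i, 1 ≤ i → i ≤ k → c i = !c (p i))
    (u0 v0 : Fin n) (hroot : (u0, v0) ∈ SS k H k) :
    ∃ f : ℕ → Fin n,
      (∀ a b, a ≤ k → b ≤ k → f a = f b → a = b) ∧
      (∀ a, a ≤ k → (c a = c 0 → f a ≤ u0) ∧ (¬(c a = c 0) → v0 ≤ f a)) ∧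
      (∀ a, 1 ≤ a → a ≤ k →
        if c a = c 0 then (f a, f (p a)) ∈ SS k H (k - a)
        else (f (p a), f a) ∈ SS k H (k - a)) := by
  have hu0v0 : u0 < v0 := (mem_base (SS_subset_base k hroot)).2
  have hiff : ∀ i, 1 ≤ i → i ≤ k → ((c i = c 0) ↔ ¬(c (p i) = c 0)) := by
    intro i h1 h2
    rw [hc i h1 h2]
    cases c (p i) <;> cases c 0 <;> simp
  have main : ∀ i, 1 ≤ i → i ≤ k + 1 → ∃ f : ℕ → Fin n, f 0 = u0 ∧
      (∀ a b, a < i → b < i → f a = f b → a = b) ∧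
      (∀ a, a < i → (c a = c 0 → f a ≤ u0) ∧ (¬(c a = c 0) → v0 ≤ f a)) ∧
      (∀ a, 1 ≤ a → a < i →
        if c a = c 0 then (f a, f (p a)) ∈ SS k H (k - a)
        else (f (p a), f a) ∈ SS k H (k - a)) := by
    intro i
    induction i with
    | zero => intro h; omega
    | succ i ihi =>
      intro _ hik1
      by_cases hi0 : i = 0
      · subst hi0
        refine ⟨fun _ => u0, rfl, fun a b ha hb _ => by omega, ?_, fun a h1 h2 => by omega⟩
        intro a ha
        have ha0 : a = 0 := by omega
        subst ha0
        exact ⟨fun _ => le_rfl, fun h => absurd rfl h⟩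
      · have hi1 : 1 ≤ i := by omega
        have hik : i ≤ k := by omega
        obtain ⟨f, h0, hinj, hside, hpair⟩ := ihi hi1 (by omega)
        set a := p i with ha_def
        have hai : a < i := hp i hi1 hik
        -- get the pair certificate for a, in both cases
        have hkey : ∃ γ : Fin n, (∀ b, b < i → f b ≠ γ) ∧
            (if c i = c 0 then (γ ≤ u0 ∧ (γ, f a) ∈ SS k H (k - i))
             else (v0 ≤ γ ∧ (f a, γ) ∈ SS k H (k - i))) := by
          have hka : 1 ≤ k - a := by omega
          have hkaeq : k - a = (k - a - 1) + 1 := by omega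
          by_cases hca : c a = c 0
          -- CASE A : a is on the left, new vertex on the right
          · have hβ : ∃ β : Fin n, v0 ≤ β ∧ (f a, β) ∈ SS k H (k - a) := by
              by_cases ha0 : a = 0
              · refine ⟨v0, le_rfl, ?_⟩
                rw [ha0, h0]
                simpa [Nat.sub_zero] using hroot
              · have h1a : 1 ≤ a := by omega
                have hpa := hpair a h1a hai
                rw [if_pos hca] at hpa
                refine ⟨f (p a), ?_, hpa⟩
                exact (hside (p a) ((hp a h1a (by omega)).trans hai)).2 ((hiff a h1a (by omega)).mp hca)
            obtain ⟨β, hβv, hmemβ⟩ := hβ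
            rw [hkaeq] at hmemβ
            have hrich : k ≤ ((SS k H (k - a - 1)).filter
                fun r => r.1 = f a ∧ β ≤ r.2).card := (SS_rich hmemβ).1
            set T := (SS k H (k - a - 1)).filter fun r => r.1 = f a ∧ β ≤ r.2 with hT
            set cand := T.image Prod.snd with hcand
            have hcandcard : k ≤ cand.card := by
              rw [hcand, Finset.card_image_of_injOn]
              · exact hrich
              · intro r hr r' hr' heq
                have h1 := (Finset.mem_filter.mp hr).2.1
                have h2 := (Finset.mem_filter.mp hr').2.1
                exact Prod.ext (h1.trans h2.symm) heq
            set used := (Finset.range i).image f with hused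
            have husedcard : used.card ≤ i := Finset.card_image_le.trans (by simp)
            have hfau : f a ∈ used := Finset.mem_image.mpr ⟨a, Finset.mem_range.mpr hai, rfl⟩
            have hfaleq : f a ≤ u0 := (hside a hai).1 hca
            have hcand_lb : ∀ x ∈ cand, v0 ≤ x := by
              intro x hx
              obtain ⟨r, hrT, hr2⟩ := Finset.mem_image.mp hx
              have := (Finset.mem_filter.mp hrT).2.2
              rw [hr2] at this
              exact hβv.trans this
            have hintersub : cand ∩ used ⊆ used.erase (f a) := by
              intro x hx
              have hxc := (Finset.mem_inter.mp hx).1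
              have hxu := (Finset.mem_inter.mp hx).2
              refine Finset.mem_erase.mpr ⟨?_, hxu⟩
              intro hcontra
              have := hcand_lb x hxc
              rw [hcontra] at this
              exact absurd (lt_of_lt_of_le hu0v0 this) (not_lt.mpr hfaleq)
            have hintercard : (cand ∩ used).card ≤ i - 1 := by
              refine (Finset.card_le_card hintersub).trans ?_
              rw [Finset.card_erase_of_mem hfau]
              omega
            have htotal := Finset.card_inter_add_card_sdiff cand used
            have hne : (cand \ used).Nonempty := by
              rw [← Finset.card_pos]
              omega
            obtain ⟨γ, hγ⟩ := hne
            have hγc := (Finset.mem_sdiff.mp hγ).1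
            have hγu := (Finset.mem_sdiff.mp hγ).2
            obtain ⟨r, hrT, hr2⟩ := Finset.mem_image.mp hγc
            have hr1 := (Finset.mem_filter.mp hrT).2.1
            have hrS := (Finset.mem_filter.mp hrT).1
            have hmem : (f a, γ) ∈ SS k H (k - a - 1) := by
              rw [← hr1, ← hr2]
              exact hrS
            have hci : ¬ (c i = c 0) := by
              rw [hiff i hi1 hik]
              simpa using hca
            refine ⟨γ, ?_, ?_⟩
            · intro b hb heq
              exact hγu (Finset.mem_image.mpr ⟨b, Finset.mem_range.mpr hb, heq⟩)
            · rw [if_neg hci]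
              refine ⟨hcand_lb γ hγc, ?_⟩
              exact SS_mono (by omega) hmem
          -- CASE B : a is on the right, new vertex on the left
          · have ha0 : a ≠ 0 := by
              intro h
              rw [h] at hca
              exact hca rfl
            have h1a : 1 ≤ a := by omega
            have hpa := hpair a h1a hai
            rw [if_neg hca] at hpa
            set α := f (p a) with hα
            have hαu : α ≤ u0 := by
              refine (hside (p a) ((hp a h1a (by omega)).trans hai)).1 ?_
              have := (hiff a h1a (by omega))
              by_contra hcon
              exact hca (this.mpr hcon)
            have hfav : v0 ≤ f a := (hside a hai).2 hca
            rw [hkaeq] at hpa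
            have hrich : k ≤ ((SS k H (k - a - 1)).filter
                fun r => r.2 = f a ∧ r.1 ≤ α).card := (SS_rich hpa).2
            set T := (SS k H (k - a - 1)).filter fun r => r.2 = f a ∧ r.1 ≤ α with hT
            set cand := T.image Prod.fst with hcand
            have hcandcard : k ≤ cand.card := by
              rw [hcand, Finset.card_image_of_injOn]
              · exact hrich
              · intro r hr r' hr' heq
                have h1 := (Finset.mem_filter.mp hr).2.1
                have h2 := (Finset.mem_filter.mp hr').2.1
                exact Prod.ext heq (h1.trans h2.symm)
            set used := (Finset.range i).image f with hused
            have husedcard : used.card ≤ i := Finset.card_image_le.trans (by simp)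
            have hfau : f a ∈ used := Finset.mem_image.mpr ⟨a, Finset.mem_range.mpr hai, rfl⟩
            have hcand_ub : ∀ x ∈ cand, x ≤ u0 := by
              intro x hx
              obtain ⟨r, hrT, hr2⟩ := Finset.mem_image.mp hx
              have := (Finset.mem_filter.mp hrT).2.2
              rw [hr2] at this
              exact this.trans hαu
            have hintersub : cand ∩ used ⊆ used.erase (f a) := by
              intro x hx
              have hxc := (Finset.mem_inter.mp hx).1
              have hxu := (Finset.mem_inter.mp hx).2
              refine Finset.mem_erase.mpr ⟨?_, hxu⟩
              intro hcontra
              have := hcand_ub x hxc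
              rw [hcontra] at this
              exact absurd (lt_of_le_of_lt this hu0v0) (not_lt.mpr hfav)
            have hintercard : (cand ∩ used).card ≤ i - 1 := by
              refine (Finset.card_le_card hintersub).trans ?_
              rw [Finset.card_erase_of_mem hfau]
              omega
            have htotal := Finset.card_inter_add_card_sdiff cand used
            have hne : (cand \ used).Nonempty := by
              rw [← Finset.card_pos]
              omega
            obtain ⟨γ, hγ⟩ := hne
            have hγc := (Finset.mem_sdiff.mp hγ).1
            have hγu := (Finset.mem_sdiff.mp hγ).2
            obtain ⟨r, hrT, hr2⟩ := Finset.mem_image.mp hγc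
            have hr1 := (Finset.mem_filter.mp hrT).2.1
            have hrS := (Finset.mem_filter.mp hrT).1
            have hmem : (γ, f a) ∈ SS k H (k - a - 1) := by
              rw [← hr1, ← hr2]
              exact hrS
            have hci : c i = c 0 := by
              have := hiff i hi1 hik
              by_contra hcon
              exact hcon (this.mpr (by simpa using hca))
            refine ⟨γ, ?_, ?_⟩
            · intro b hb heq
              exact hγu (Finset.mem_image.mpr ⟨b, Finset.mem_range.mpr hb, heq⟩)
            · rw [if_pos hci]
              refine ⟨hcand_ub γ hγc, ?_⟩
              exact SS_mono (by omega) hmem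
        -- now extend f by γ at index i
        obtain ⟨γ, hγnew, hγprop⟩ := hkey
        set f' := Function.update f i γ with hf'
        have hfeq : ∀ b, b < i → f' b = f b := by
          intro b hb
          exact Function.update_of_ne (by omega) _ _
        have hf'i : f' i = γ := Function.update_self _ _ _
        refine ⟨f', ?_, ?_, ?_, ?_⟩
        · rw [hfeq 0 (by omega)]; exact h0
        · intro aa bb haa hbb heq
          by_cases haai : aa = i <;> by_cases hbbi : bb = i
          · omega
          · exfalso
            rw [haai, hf'i, hfeq bb (by omega)] at heq
            exact hγnew bb (by omega) heq.symm
          · exfalso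
            rw [hbbi, hf'i, hfeq aa (by omega)] at heq
            exact hγnew aa (by omega) heq
          · rw [hfeq aa (by omega), hfeq bb (by omega)] at heq
            exact hinj aa bb (by omega) (by omega) heq
        · intro aa haa
          by_cases haai : aa = i
          · subst haai
            rw [hf'i]
            by_cases hci : c aa = c 0
            · rw [if_pos hci] at hγprop
              exact ⟨fun _ => hγprop.1, fun h => absurd hci h⟩
            · rw [if_neg hci] at hγprop
              exact ⟨fun h => absurd h hci, fun _ => hγprop.1⟩
          · have haa' : aa < i := by omega
            rw [hfeq aa haa']
            exact hside aa haa'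
        · intro aa h1aa haa
          by_cases haai : aa = i
          · subst haai
            rw [hf'i, hfeq (p aa) hai]
            by_cases hci : c aa = c 0
            · rw [if_pos hci] at hγprop ⊢
              exact hγprop.2
            · rw [if_neg hci] at hγprop ⊢
              exact hγprop.2
          · have haa' : aa < i := by omega
            have hpaa : p aa < aa := hp aa h1aa (by omega)
            rw [hfeq aa haa', hfeq (p aa) (by omega)]
            exact hpair aa h1aa haa'
  obtain ⟨f, h0, hinj, hside, hpair⟩ := main (k + 1) (by omega) le_rfl
  exact ⟨f, fun a b ha hb => hinj a b (by omega) (by omega),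
    fun a ha => hside a (by omega), fun a h1 h2 => hpair a h1 (by omega)⟩


end OTIB

open OTIB Finset in
/-- Every ordered graph on [n] (modelled as Fin n with its order) with more than
2k²n edges contains an interval 2-partite copy of any given tree F with k edges:
an injective adjacency-preserving map f of F into H and intervals A = [a,b],
B = [c,d] with b < c such that every edge of the copy has one endpoint in A and
one in B. -/
theorem ordered_tree_interval_bipartite (k : ℕ) (V : Type*) [Fintype V]
    (F : SimpleGraph V) [DecidableRel F.Adj]
    (hF : F.IsTree) (hFk : F.edgeFinset.card = k)
    (n : ℕ) (H : SimpleGraph (Fin n)) [DecidableRel H.Adj]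
    (hH : 2 * k ^ 2 * n < H.edgeFinset.card) :
    ∃ f : V → Fin n, Function.Injective f ∧
      (∀ u v : V, F.Adj u v → H.Adj (f u) (f v)) ∧
      ∃ a b c d : Fin n, (b : ℕ) < (c : ℕ) ∧
        ∀ u v : V, F.Adj u v →
          (f u ∈ Finset.Icc a b ∧ f v ∈ Finset.Icc c d) ∨
          (f v ∈ Finset.Icc a b ∧ f u ∈ Finset.Icc c d) := by
  classical
  have hcardV : Fintype.card V = k + 1 := by
    have := hF.card_edgeFinset
    omega
  by_cases hk0 : k = 0
  · -- degenerate case : F is a single vertex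
    subst hk0
    have hHpos : 0 < H.edgeFinset.card := by simpa using hH
    obtain ⟨e, he⟩ := Finset.card_pos.mp hHpos
    have hadj : H.Adj e.out.1 e.out.2 := by
      rw [SimpleGraph.mem_edgeFinset] at he
      have heq : e = s(e.out.1, e.out.2) := by
        exact e.out_eq.symm
      rw [heq] at he
      exact he
    have h2n : 2 ≤ n := by
      have h1 := e.out.1.isLt
      have h2 := e.out.2.isLt
      have hne : (e.out.1 : ℕ) ≠ (e.out.2 : ℕ) := fun h => hadj.ne (Fin.ext h)
      omega
    haveI hsub : Subsingleton V := by
      rw [← Fintype.card_le_one_iff_subsingleton]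
      omega
    have hnoadj : ∀ u v : V, ¬ F.Adj u v := by
      intro u v hadj'
      have : u = v := Subsingleton.elim u v
      rw [this] at hadj'
      exact F.loopless.irrefl v hadj'
    refine ⟨fun _ => ⟨0, by omega⟩, fun a b _ => Subsingleton.elim a b,
      fun u v h => absurd h (hnoadj u v),
      ⟨0, by omega⟩, ⟨0, by omega⟩, ⟨1, by omega⟩, ⟨1, by omega⟩, by simp,
      fun u v h => absurd h (hnoadj u v)⟩
  · have hk : 1 ≤ k := by omega
    obtain ⟨w, p, c, hsurj, hinj, hp, hcadj, hcalt, hcov⟩ :=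
      tree_enum k V F hF.isConnected hcardV hFk
    -- SS k H k is nonempty
    have hSkpos : 0 < (SS k H k).card := by
      have h1 : (SS k H 0).card = (base H).card := rfl
      have h2 := card_SS (k := k) (H := H) k
      have h3 : H.edgeFinset.card ≤ (base H).card := card_base
      have h4 : k * (2 * k * n) = 2 * k ^ 2 * n := by ring
      omega
    obtain ⟨⟨u0, v0⟩, hroot⟩ := Finset.card_pos.mp hSkpos
    have hu0v0 : u0 < v0 := (mem_base (SS_subset_base k hroot)).2
    obtain ⟨f, hfinj, hfside, hfpair⟩ := exists_embedding H hk p c hp hcalt u0 v0 hroot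
    choose idx hidxle hidxw using hsurj
    have hidu : ∀ (z : V) (j : ℕ), j ≤ k → w j = z → idx z = j := by
      intro z j hj hwj
      exact hinj _ _ (hidxle z) hj (by rw [hidxw z, hwj])
    have hnpos : 0 < n := by
      have := u0.isLt
      omega
    have hadjSS : ∀ i, 1 ≤ i → i ≤ k → H.Adj (f (p i)) (f i) := by
      intro i h1 h2
      have hpairi := hfpair i h1 h2
      by_cases hci : c i = c 0
      · rw [if_pos hci] at hpairi
        exact ((mem_base (SS_subset_base _ hpairi)).1).symm
      · rw [if_neg hci] at hpairi
        exact (mem_base (SS_subset_base _ hpairi)).1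
    refine ⟨fun v => f (idx v), ?_, ?_, ?_⟩
    · intro u v heq
      have := hfinj _ _ (hidxle u) (hidxle v) heq
      rw [← hidxw u, ← hidxw v, this]
    · intro u v hadj
      obtain ⟨i, hi1, hik, hcase⟩ := hcov u v hadj
      have hpi := hp i hi1 hik
      rcases hcase with ⟨hwa, hwb⟩ | ⟨hwa, hwb⟩
      · dsimp only
        rw [hidu u (p i) (by omega) hwa, hidu v i hik hwb]
        exact hadjSS i hi1 hik
      · dsimp only
        rw [hidu v (p i) (by omega) hwa, hidu u i hik hwb]
        exact (hadjSS i hi1 hik).symm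
    · refine ⟨⟨0, hnpos⟩, u0, v0, ⟨n - 1, by omega⟩, hu0v0, ?_⟩
      have hmem1 : ∀ x : Fin n, x ≤ u0 → x ∈ Finset.Icc (⟨0, hnpos⟩ : Fin n) u0 := by
        intro x hx
        refine Finset.mem_Icc.mpr ⟨?_, hx⟩
        show (0 : ℕ) ≤ (x : ℕ)
        omega
      have hmem2 : ∀ x : Fin n, v0 ≤ x → x ∈ Finset.Icc v0 (⟨n - 1, by omega⟩ : Fin n) := by
        intro x hx
        refine Finset.mem_Icc.mpr ⟨hx, ?_⟩
        show (x : ℕ) ≤ n - 1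
        have := x.isLt
        omega
      intro u v hadj
      obtain ⟨i, hi1, hik, hcase⟩ := hcov u v hadj
      have hpi := hp i hi1 hik
      have hsidei := hfside i hik
      have hsidep := hfside (p i) (by omega)
      have hiff : (c i = c 0) ↔ ¬(c (p i) = c 0) := by
        rw [hcalt i hi1 hik]
        cases c (p i) <;> cases c 0 <;> simp
      by_cases hci : c i = c 0
      · have h1 : f i ≤ u0 := hsidei.1 hci
        have h2 : v0 ≤ f (p i) := hsidep.2 (hiff.mp hci)
        rcases hcase with ⟨hwa, hwb⟩ | ⟨hwa, hwb⟩
        · dsimp only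
          rw [hidu u (p i) (by omega) hwa, hidu v i hik hwb]
          exact Or.inr ⟨hmem1 _ h1, hmem2 _ h2⟩
        · dsimp only
          rw [hidu v (p i) (by omega) hwa, hidu u i hik hwb]
          exact Or.inl ⟨hmem1 _ h1, hmem2 _ h2⟩
      · have h1 : v0 ≤ f i := hsidei.2 hci
        have h2 : f (p i) ≤ u0 := by
          refine hsidep.1 ?_
          by_contra hcon
          exact hci (hiff.mpr hcon)
        rcases hcase with ⟨hwa, hwb⟩ | ⟨hwa, hwb⟩
        · dsimp only
          rw [hidu u (p i) (by omega) hwa, hidu v i hik hwb]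
          exact Or.inl ⟨hmem1 _ h2, hmem2 _ h1⟩
        · dsimp only
          rw [hidu v (p i) (by omega) hwa, hidu u i hik hwb]
          exact Or.inr ⟨hmem1 _ h2, hmem2 _ h1⟩
end

section
/- Let r ≥ 3 and suppose a family 𝓕 of (r-1)-graphs satisfies ex_→(n, ord(𝓕)) ≤ c·n^{r-2} for all n > 1. Then there is a constant c' (depending on c, r, and the maximum number M of edges of a graph in 𝓕⁺) such that ex_→(n, ord(𝓕⁺)) ≤ c'·n^{r-1} for all n. -/
/-- `H` contains an interval s-partite copy of the hypergraph `F`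
(a member of ord(F)). -/
def ContainsOrdCopy (s : ℕ) (F H : Finset (Finset ℕ)) : Prop :=
  ∃ f : ℕ → ℕ, Set.InjOn f ↑(F.sup id) ∧
    F.image (fun e => e.image f) ⊆ H ∧
    IntervalPartiteExact s (F.image (fun e => e.image f))

/-- `H` contains an interval r-partite copy of the expansion F⁺ of the
(r-1)-graph `F`: each edge of the copy of `F` is enlarged by a new vertex,
the new vertices being distinct from each other and from the copy of F. -/
def ContainsOrdExpansionCopy (r : ℕ) (F H : Finset (Finset ℕ)) : Prop :=
  ∃ f : ℕ → ℕ, ∃ w : Finset ℕ → ℕ,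
    Set.InjOn f ↑(F.sup id) ∧
    (∀ e₁ ∈ F, ∀ e₂ ∈ F, e₁ ≠ e₂ → w e₁ ≠ w e₂) ∧
    (∀ e ∈ F, ∀ v ∈ F.sup id, w e ≠ f v) ∧
    F.image (fun e => insert (w e) (e.image f)) ⊆ H ∧
    IntervalPartiteExact r (F.image (fun e => insert (w e) (e.image f)))


section ExpansionAux

/-- Greedy choice of a system of distinct representatives. -/
lemma greedy_sdr {α β : Type*} [DecidableEq α] [DecidableEq β] [Inhabited β] :
    ∀ (F : Finset α) (W : α → Finset β), (∀ e ∈ F, F.card ≤ (W e).card) →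
      ∃ w : α → β, (∀ e₁ ∈ F, ∀ e₂ ∈ F, e₁ ≠ e₂ → w e₁ ≠ w e₂) ∧ ∀ e ∈ F, w e ∈ W e := by
  intro F
  induction F using Finset.induction_on with
  | empty =>
    intro W _
    exact ⟨fun _ => default, by simp, by simp⟩
  | @insert a s ha ih =>
    intro W hW
    have hpos : 0 < (W a).card := by
      have h0 := hW a (Finset.mem_insert_self a s)
      have h1 : 0 < (insert a s).card := Finset.card_pos.mpr ⟨a, Finset.mem_insert_self a s⟩
      omega
    obtain ⟨x, hx⟩ := Finset.card_pos.mp hpos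
    obtain ⟨w', hw'inj, hw'mem⟩ := ih (fun e => (W e).erase x) (by
      intro e he
      show s.card ≤ ((W e).erase x).card
      have h1 := hW e (Finset.mem_insert_of_mem he)
      have h2 : (insert a s).card = s.card + 1 := Finset.card_insert_of_notMem ha
      by_cases hxe : x ∈ W e
      · rw [Finset.card_erase_of_mem hxe]; omega
      · rw [Finset.erase_eq_of_notMem hxe]; omega)
    refine ⟨fun e => if e = a then x else w' e, ?_, ?_⟩
    · intro e₁ he₁ e₂ he₂ hne
      by_cases h1 : e₁ = a <;> by_cases h2 : e₂ = a
      · exact absurd (h1.trans h2.symm) hne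
      · have he₂s : e₂ ∈ s := by
          rcases Finset.mem_insert.mp he₂ with h | h
          · exact absurd h h2
          · exact h
        simp only [if_pos h1, if_neg h2]
        exact fun h => (Finset.ne_of_mem_erase (hw'mem e₂ he₂s)) h.symm
      · have he₁s : e₁ ∈ s := by
          rcases Finset.mem_insert.mp he₁ with h | h
          · exact absurd h h1
          · exact h
        simp only [if_neg h1, if_pos h2]
        exact Finset.ne_of_mem_erase (hw'mem e₁ he₁s)
      · have he₁s : e₁ ∈ s := by
          rcases Finset.mem_insert.mp he₁ with h | h
          · exact absurd h h1
          · exact h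
        have he₂s : e₂ ∈ s := by
          rcases Finset.mem_insert.mp he₂ with h | h
          · exact absurd h h2
          · exact h
        simp only [if_neg h1, if_neg h2]
        exact hw'inj e₁ he₁s e₂ he₂s hne
    · intro e he
      by_cases h1 : e = a
      · subst h1; simpa using hx
      · have hes : e ∈ s := by
          rcases Finset.mem_insert.mp he with h | h
          · exact absurd h h1
          · exact h
        simp only [if_neg h1]
        exact Finset.mem_of_mem_erase (hw'mem e hes)

/-- The set of extension vertices of a set `s`: vertices `v` above all of `s`
with `insert v s ∈ H`. -/
def Nb (n : ℕ) (H : Finset (Finset ℕ)) (s : Finset ℕ) : Finset ℕ :=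
  (Finset.Icc 1 n).filter (fun v => (∀ x ∈ s, x < v) ∧ insert v s ∈ H)

/-- The auxiliary (r-1)-graph at threshold `T`: the (r-1)-sets inside `[1,T]`
having at least `M` extension vertices above `T`. -/
def Gaux (r n M T : ℕ) (H : Finset (Finset ℕ)) : Finset (Finset ℕ) :=
  ((Finset.Icc 1 n).powersetCard (r-1)).filter
    (fun s => s ⊆ Finset.Icc 1 T ∧ M ≤ ((Nb n H s).filter (fun v => T < v)).card)

lemma interval_inter_Icc {A : Finset ℕ} (h : IsIntervalN A) (c d : ℕ) :
    IsIntervalN (A ∩ Finset.Icc c d) := by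
  obtain ⟨a, b, rfl⟩ := h
  refine ⟨max a c, min b d, ?_⟩
  ext x
  simp only [Finset.mem_inter, Finset.mem_Icc, max_le_iff, le_min_iff]
  omega

/-- If the auxiliary graph contains an interval (r-1)-partite copy of `F`,
then `H` contains an interval r-partite copy of the expansion of `F`. -/
lemma gaux_free {r n M T : ℕ} (hr : 3 ≤ r) {H : Finset (Finset ℕ)}
    {F : Finset (Finset ℕ)} (hMF : F.card ≤ M)
    (hcopy : ContainsOrdCopy (r-1) F (Gaux r n M T H)) :
    ContainsOrdExpansionCopy r F H := by
  classical
  obtain ⟨f, hinj, himg, J, hJint, hJprec, hJedge⟩ := hcopy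
  have hginfo : ∀ e ∈ F, (e.image f ⊆ Finset.Icc 1 T ∧
      M ≤ ((Nb n H (e.image f)).filter (fun v => T < v)).card) := by
    intro e he
    have h1 : e.image f ∈ Gaux r n M T H :=
      himg (Finset.mem_image_of_mem _ he)
    exact (Finset.mem_filter.mp h1).2
  obtain ⟨w, hwinj, hwmem⟩ := greedy_sdr F
      (fun e => (Nb n H (e.image f)).filter (fun v => T < v))
      (fun e he => le_trans hMF (hginfo e he).2)
  have hwN : ∀ e ∈ F, w e ∈ Nb n H (e.image f) :=
    fun e he => (Finset.mem_filter.mp (hwmem e he)).1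
  have hwT : ∀ e ∈ F, T < w e :=
    fun e he => (Finset.mem_filter.mp (hwmem e he)).2
  have hwIcc : ∀ e ∈ F, w e ∈ Finset.Icc 1 n :=
    fun e he => (Finset.mem_filter.mp (hwN e he)).1
  have hwH : ∀ e ∈ F, insert (w e) (e.image f) ∈ H :=
    fun e he => (Finset.mem_filter.mp (hwN e he)).2.2
  have hvT : ∀ e ∈ F, ∀ y ∈ e.image f, y ≤ T := by
    intro e he y hy
    exact (Finset.mem_Icc.mp ((hginfo e he).1 hy)).2
  refine ⟨f, w, hinj, hwinj, ?_, ?_, ?_⟩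
  · intro e he v hv
    obtain ⟨e', he', hve'⟩ := Finset.mem_sup.mp hv
    have h1 : f v ≤ T := hvT e' he' (f v) (Finset.mem_image_of_mem f hve')
    have h2 : T < w e := hwT e he
    omega
  · intro E hE
    obtain ⟨e, he, rfl⟩ := Finset.mem_image.mp hE
    exact hwH e he
  · refine ⟨fun j => if j = r - 1 then Finset.Icc (T+1) n else (J j) ∩ Finset.Icc 0 T,
      ?_, ?_, ?_⟩
    · intro j hj
      dsimp only
      by_cases hjr : j = r - 1
      · rw [if_pos hjr]; exact ⟨T+1, n, rfl⟩
      · rw [if_neg hjr]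
        exact interval_inter_Icc (hJint j (by omega)) 0 T
    · intro j j' hjj' hj'
      dsimp only
      have hjne : j ≠ r - 1 := by omega
      by_cases hjr : j' = r - 1
      · rw [if_neg hjne, if_pos hjr]
        intro x hx y hy
        have h1 : x ≤ T := (Finset.mem_Icc.mp (Finset.mem_inter.mp hx).2).2
        have h2 : T + 1 ≤ y := (Finset.mem_Icc.mp hy).1
        omega
      · rw [if_neg hjne, if_neg hjr]
        intro x hx y hy
        exact hJprec j j' hjj' (by omega) x (Finset.mem_inter.mp hx).1 y
          (Finset.mem_inter.mp hy).1
    · intro E hE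
      obtain ⟨e, he, rfl⟩ := Finset.mem_image.mp hE
      have hcopye : e.image f ∈ F.image (fun e => e.image f) :=
        Finset.mem_image_of_mem _ he
      obtain ⟨hcov, hone⟩ := hJedge (e.image f) hcopye
      constructor
      · intro x hx
        rcases Finset.mem_insert.mp hx with rfl | hx'
        · refine ⟨r - 1, by omega, ?_⟩
          dsimp only
          rw [if_pos rfl]
          rw [Finset.mem_Icc]
          have h1 := hwT e he
          have h2 := (Finset.mem_Icc.mp (hwIcc e he)).2
          omega
        · obtain ⟨j, hj, hxj⟩ := hcov x hx'
          refine ⟨j, by omega, ?_⟩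
          dsimp only
          rw [if_neg (show j ≠ r - 1 by omega)]
          refine Finset.mem_inter.mpr ⟨hxj, Finset.mem_Icc.mpr ⟨Nat.zero_le _, hvT e he x hx'⟩⟩
      · intro j hj
        dsimp only
        by_cases hjr : j = r - 1
        · rw [if_pos hjr]
          have : insert (w e) (e.image f) ∩ Finset.Icc (T+1) n = {w e} := by
            ext y
            simp only [Finset.mem_inter, Finset.mem_insert, Finset.mem_Icc,
              Finset.mem_singleton]
            constructor
            · rintro ⟨rfl | hy, hy2⟩
              · rfl
              · exact absurd (hvT e he y hy) (by omega)
            · rintro rfl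
              have h1 := hwT e he
              have h2 := (Finset.mem_Icc.mp (hwIcc e he)).2
              exact ⟨Or.inl rfl, by omega, h2⟩
          rw [this, Finset.card_singleton]
        · rw [if_neg hjr]
          have heq : insert (w e) (e.image f) ∩ (J j ∩ Finset.Icc 0 T)
              = e.image f ∩ J j := by
            ext y
            simp only [Finset.mem_inter, Finset.mem_insert, Finset.mem_Icc]
            constructor
            · rintro ⟨rfl | hy, hyJ, _, hyT⟩
              · exact absurd hyT (by have := hwT e he; omega)
              · exact ⟨hy, hyJ⟩
            · rintro ⟨hy, hyJ⟩
              exact ⟨Or.inr hy, hyJ, Nat.zero_le _, hvT e he y hy⟩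
          rw [heq]
          exact hone j (by omega)

end ExpansionAux

/-- Theorem 5 (expansions): let r ≥ 3 and 𝓕 a family of (r-1)-graphs with
ex_→(n, ord(𝓕)) ≤ c·n^{r-2} for all n > 1. Then there is a constant c'
(depending on c, r and the maximum number M of edges of a member of 𝓕)
with ex_→(n, ord(𝓕⁺)) ≤ c'·n^{r-1} for all n. -/
theorem expansion_extremal (r : ℕ) (hr : 3 ≤ r)
    (𝓕 : Set (Finset (Finset ℕ))) (h𝓕 : ∀ F ∈ 𝓕, ∀ e ∈ F, e.card = r - 1)
    (M : ℕ) (hM : ∀ F ∈ 𝓕, F.card ≤ M) (c : ℝ)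
    (hex : ∀ n : ℕ, 1 < n → ∀ G : Finset (Finset ℕ),
      (∀ e ∈ G, e ⊆ Finset.Icc 1 n ∧ e.card = r - 1) →
      (¬ ∃ F ∈ 𝓕, ContainsOrdCopy (r - 1) F G) →
      (G.card : ℝ) ≤ c * (n : ℝ) ^ (r - 2)) :
    ∃ c' : ℝ, ∀ n : ℕ, ∀ H : Finset (Finset ℕ),
      (∀ e ∈ H, e ⊆ Finset.Icc 1 n ∧ e.card = r) →
      (¬ ∃ F ∈ 𝓕, ContainsOrdExpansionCopy r F H) →
      (H.card : ℝ) ≤ c' * (n : ℝ) ^ (r - 1) := by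
  classical
  refine ⟨max c 0 + 2 * M, ?_⟩
  intro n H hH1 hH2
  set c₀ : ℝ := max c 0 with hc₀def
  have hc₀ : 0 ≤ c₀ := le_max_right c 0
  have hcc₀ : c ≤ c₀ := le_max_left c 0
  set sk : Finset ℕ → Finset ℕ := fun e => e.erase (e.sup id) with hskdef
  set S : Finset (Finset ℕ) := (Finset.Icc 1 n).powersetCard (r-1) with hSdef
  -- basic facts about edges of H
  have hedge : ∀ e ∈ H, e.sup id ∈ e ∧ sk e ∈ S ∧ e.sup id ∈ Nb n H (sk e) ∧
      insert (e.sup id) (sk e) = e := by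
    intro e he
    obtain ⟨hsub, hcard⟩ := hH1 e he
    have hne : e.Nonempty := Finset.card_pos.mp (by omega)
    obtain ⟨b, hb, hbe⟩ := Finset.exists_mem_eq_sup e hne id
    have htop : e.sup id ∈ e := by rw [hbe]; exact hb
    have hins : insert (e.sup id) (sk e) = e := Finset.insert_erase htop
    have hlt : ∀ x ∈ sk e, x < e.sup id := by
      intro x hx
      have h1 : x ∈ e := Finset.mem_of_mem_erase hx
      have h2 : x ≠ e.sup id := Finset.ne_of_mem_erase hx
      have h3 : x ≤ e.sup id := Finset.le_sup (f := id) h1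
      omega
    have hskcard : (sk e).card = r - 1 := by
      show (e.erase (e.sup id)).card = r - 1
      rw [Finset.card_erase_of_mem htop, hcard]
    have hsksub : sk e ⊆ Finset.Icc 1 n :=
      fun x hx => hsub (Finset.mem_of_mem_erase hx)
    refine ⟨htop, Finset.mem_powersetCard.mpr ⟨hsksub, hskcard⟩, ?_, hins⟩
    refine Finset.mem_filter.mpr ⟨hsub htop, hlt, ?_⟩
    rw [hins]; exact he
  -- fibers of sk inject into extension sets
  have hfiber : ∀ (H' : Finset (Finset ℕ)), H' ⊆ H → ∀ s : Finset ℕ,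
      (H'.filter (fun e => sk e = s)).card ≤ (Nb n H s).card := by
    intro H' hH' s
    apply Finset.card_le_card_of_injOn (fun e => e.sup id)
    · intro e he
      obtain ⟨he1, he2⟩ := Finset.mem_filter.mp he
      have h := (hedge e (hH' he1)).2.2.1
      rwa [he2] at h
    · intro e₁ he₁ e₂ he₂ heq
      simp only [Finset.coe_filter, Set.mem_setOf_eq] at he₁ he₂
      have h₁ := (hedge e₁ (hH' he₁.1)).2.2.2
      have h₂ := (hedge e₂ (hH' he₂.1)).2.2.2
      have heq' : e₁.sup id = e₂.sup id := heq
      rw [← h₁, ← h₂, heq', he₁.2, he₂.2]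
  set Hheavy : Finset (Finset ℕ) := H.filter (fun e => M ≤ (Nb n H (sk e)).card) with hHh
  set Hlight : Finset (Finset ℕ) := H.filter (fun e => ¬ M ≤ (Nb n H (sk e)).card) with hHl
  have hsplit : Hheavy.card + Hlight.card = H.card :=
    Finset.card_filter_add_card_filter_not _
  -- the light edges
  have hlight : Hlight.card ≤ S.card * (M - 1) := by
    have h1 : Hlight.card = ∑ s ∈ S, (Hlight.filter (fun e => sk e = s)).card := by
      apply Finset.card_eq_sum_card_fiberwise
      intro e he
      exact (hedge e (Finset.mem_of_mem_filter e he)).2.1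
    rw [h1]
    have h2 : ∀ s ∈ S, (Hlight.filter (fun e => sk e = s)).card ≤ M - 1 := by
      intro s hs
      rcases (Hlight.filter (fun e => sk e = s)).eq_empty_or_nonempty with h | ⟨e0, he0⟩
      · rw [h]; simp
      · obtain ⟨he01, he02⟩ := Finset.mem_filter.mp he0
        have h3 : ¬ M ≤ (Nb n H (sk e0)).card := (Finset.mem_filter.mp he01).2
        rw [he02] at h3
        have h4 := hfiber Hlight (Finset.filter_subset _ _) s
        omega
    calc ∑ s ∈ S, (Hlight.filter (fun e => sk e = s)).card
        ≤ ∑ _s ∈ S, (M-1) := Finset.sum_le_sum h2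
      _ = S.card * (M-1) := by rw [Finset.sum_const, smul_eq_mul]
  -- the heavy edges
  set Sh : Finset (Finset ℕ) := S.filter (fun s => M ≤ (Nb n H s).card) with hShdef
  have hheavy1 : Hheavy.card ≤ ∑ s ∈ Sh, (Nb n H s).card := by
    have h1 : Hheavy.card = ∑ s ∈ Sh, (Hheavy.filter (fun e => sk e = s)).card := by
      apply Finset.card_eq_sum_card_fiberwise
      intro e he
      obtain ⟨he1, he2⟩ := Finset.mem_filter.mp he
      exact Finset.mem_filter.mpr ⟨(hedge e he1).2.1, he2⟩
    rw [h1]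
    exact Finset.sum_le_sum (fun s _ => hfiber Hheavy (Finset.filter_subset _ _) s)
  -- each heavy extension set is controlled by the auxiliary graphs
  have hkey : ∀ s ∈ Sh, (Nb n H s).card ≤
      ((Finset.range n).filter (fun T => s ∈ Gaux r n M T H)).card + (M - 1) := by
    intro s hs
    obtain ⟨hsS, _⟩ := Finset.mem_filter.mp hs
    obtain ⟨hssub, hscard⟩ := Finset.mem_powersetCard.mp hsS
    set Ns : Finset ℕ := Nb n H s with hNsdef
    set B : Finset ℕ := Ns.filter (fun v => M ≤ (Ns.filter (fun u => v ≤ u)).card) with hBdef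
    have hBC : B.card + (Ns.filter (fun v => ¬ M ≤ (Ns.filter (fun u => v ≤ u)).card)).card
        = Ns.card := Finset.card_filter_add_card_filter_not _
    have hC : (Ns.filter (fun v => ¬ M ≤ (Ns.filter (fun u => v ≤ u)).card)).card ≤ M - 1 := by
      set C : Finset ℕ := Ns.filter (fun v => ¬ M ≤ (Ns.filter (fun u => v ≤ u)).card) with hCdef
      rcases C.eq_empty_or_nonempty with h | hne
      · rw [h]; simp
      · have hv₀ := C.min'_mem hne
        have h1 : ¬ M ≤ (Ns.filter (fun u => C.min' hne ≤ u)).card :=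
          (Finset.mem_filter.mp hv₀).2
        have h2 : C ⊆ Ns.filter (fun u => C.min' hne ≤ u) := by
          intro v hv
          exact Finset.mem_filter.mpr ⟨Finset.mem_of_mem_filter v hv, C.min'_le v hv⟩
        have h3 := Finset.card_le_card h2
        omega
    have hB : B.card ≤ ((Finset.range n).filter (fun T => s ∈ Gaux r n M T H)).card := by
      apply Finset.card_le_card_of_injOn (fun v => v - 1)
      · intro v hv
        obtain ⟨hvNs, hvM⟩ := Finset.mem_filter.mp hv
        obtain ⟨hvIcc, hvlt, _⟩ := Finset.mem_filter.mp hvNs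
        obtain ⟨hv1, hvn⟩ := Finset.mem_Icc.mp hvIcc
        refine Finset.mem_filter.mpr ⟨Finset.mem_range.mpr (by dsimp only at *; omega), ?_⟩
        refine Finset.mem_filter.mpr ⟨hsS, ?_, ?_⟩
        · intro x hx
          have h1 := Finset.mem_Icc.mp (hssub hx)
          have h2 := hvlt x hx
          exact Finset.mem_Icc.mpr ⟨h1.1, by dsimp only at *; omega⟩
        · refine le_trans hvM (Finset.card_le_card ?_)
          intro u hu
          obtain ⟨hu1, hu2⟩ := Finset.mem_filter.mp hu
          exact Finset.mem_filter.mpr ⟨hu1, by dsimp only at *; omega⟩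
      · intro v hv v' hv' heq
        have h1 : 1 ≤ v := (Finset.mem_Icc.mp
          (Finset.mem_filter.mp (Finset.mem_of_mem_filter v hv)).1).1
        have h2 : 1 ≤ v' := (Finset.mem_Icc.mp
          (Finset.mem_filter.mp (Finset.mem_of_mem_filter v' hv')).1).1
        have heq' : v - 1 = v' - 1 := heq
        omega
    omega
  -- sum over thresholds
  have hswap : ∑ s ∈ Sh, ((Finset.range n).filter (fun T => s ∈ Gaux r n M T H)).card
      ≤ ∑ T ∈ Finset.range n, (Gaux r n M T H).card := by
    have h1 : ∀ s ∈ Sh, ((Finset.range n).filter (fun T => s ∈ Gaux r n M T H)).card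
        = ∑ T ∈ Finset.range n, if s ∈ Gaux r n M T H then 1 else 0 := by
      intro s _
      rw [Finset.card_filter]
    rw [Finset.sum_congr rfl h1, Finset.sum_comm]
    apply Finset.sum_le_sum
    intro T _
    have h2 : (∑ s ∈ Sh, if s ∈ Gaux r n M T H then 1 else 0)
        = (Sh.filter (fun s => s ∈ Gaux r n M T H)).card := (Finset.card_filter _ _).symm
    rw [h2]
    apply Finset.card_le_card
    intro s hs
    exact (Finset.mem_filter.mp hs).2
  -- bounding each auxiliary graph via the hypothesis
  have hGT : ∀ T ∈ Finset.range n, ((Gaux r n M T H).card : ℝ) ≤ c₀ * (n:ℝ) ^ (r-2) := by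
    intro T hT
    have hTn : T < n := Finset.mem_range.mp hT
    by_cases h2T : 2 ≤ T
    · have hnocopy : ¬ ∃ F ∈ 𝓕, ContainsOrdCopy (r - 1) F (Gaux r n M T H) := by
        rintro ⟨F, hF, hcopy⟩
        exact hH2 ⟨F, hF, gaux_free hr (hM F hF) hcopy⟩
      have hedges : ∀ e ∈ Gaux r n M T H, e ⊆ Finset.Icc 1 T ∧ e.card = r - 1 := by
        intro e he
        obtain ⟨he1, he2, _⟩ := Finset.mem_filter.mp he
        exact ⟨he2, (Finset.mem_powersetCard.mp he1).2⟩
      have h3 := hex T (by omega) (Gaux r n M T H) hedges hnocopy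
      calc ((Gaux r n M T H).card : ℝ) ≤ c * (T:ℝ) ^ (r-2) := h3
        _ ≤ c₀ * (T:ℝ) ^ (r-2) := by
            apply mul_le_mul_of_nonneg_right hcc₀ (by positivity)
        _ ≤ c₀ * (n:ℝ) ^ (r-2) := by
            apply mul_le_mul_of_nonneg_left _ hc₀
            exact pow_le_pow_left₀ (by positivity) (by exact_mod_cast hTn.le) _
    · have hempty : Gaux r n M T H = ∅ := by
        rw [Finset.eq_empty_iff_forall_notMem]
        intro s hs
        obtain ⟨hs1, hs2, _⟩ := Finset.mem_filter.mp hs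
        have h1 : s.card = r - 1 := (Finset.mem_powersetCard.mp hs1).2
        have h2 : s.card ≤ (Finset.Icc 1 T).card := Finset.card_le_card hs2
        rw [Nat.card_Icc] at h2
        omega
      rw [hempty]
      simp only [Finset.card_empty, Nat.cast_zero]
      positivity
  -- assemble the bound in ℕ
  set K : ℕ := ∑ T ∈ Finset.range n, (Gaux r n M T H).card with hKdef
  have hheavy2 : Hheavy.card ≤ K + Sh.card * (M - 1) := by
    have h1 : ∑ s ∈ Sh, (Nb n H s).card ≤
        ∑ s ∈ Sh, (((Finset.range n).filter (fun T => s ∈ Gaux r n M T H)).card + (M - 1)) :=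
      Finset.sum_le_sum hkey
    rw [Finset.sum_add_distrib, Finset.sum_const, smul_eq_mul] at h1
    omega
  have hScard : S.card ≤ n ^ (r-1) := by
    rw [hSdef, Finset.card_powersetCard, Nat.card_Icc]
    calc (n + 1 - 1).choose (r-1) = n.choose (r-1) := by norm_num
      _ ≤ n ^ (r-1) := Nat.choose_le_pow n (r-1)
  have hShcard : Sh.card ≤ n ^ (r-1) :=
    le_trans (Finset.card_le_card (Finset.filter_subset _ _)) hScard
  have htotal : H.card ≤ K + 2 * (n ^ (r-1) * (M-1)) := by
    have h1 : Hlight.card ≤ n ^ (r-1) * (M-1) :=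
      le_trans hlight (Nat.mul_le_mul_right _ hScard)
    have h2 : Sh.card * (M-1) ≤ n ^ (r-1) * (M-1) := Nat.mul_le_mul_right _ hShcard
    omega
  -- pass to the reals
  have hKR : (K : ℝ) ≤ c₀ * (n:ℝ) ^ (r-1) := by
    have h1 : (K : ℝ) = ∑ T ∈ Finset.range n, ((Gaux r n M T H).card : ℝ) := by
      rw [hKdef]; push_cast; ring
    rw [h1]
    calc ∑ T ∈ Finset.range n, ((Gaux r n M T H).card : ℝ)
        ≤ ∑ _T ∈ Finset.range n, c₀ * (n:ℝ) ^ (r-2) := Finset.sum_le_sum hGT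
      _ = (n:ℝ) * (c₀ * (n:ℝ) ^ (r-2)) := by
          rw [Finset.sum_const, Finset.card_range, nsmul_eq_mul]
      _ = c₀ * ((n:ℝ) ^ (r-2) * (n:ℝ)) := by ring
      _ = c₀ * (n:ℝ) ^ (r-1) := by
          rw [← pow_succ]
          congr 2
          omega
  have hpow0 : (0:ℝ) ≤ (n:ℝ) ^ (r-1) := by positivity
  have hMR : ((n ^ (r-1) * (M-1) : ℕ) : ℝ) ≤ (M:ℝ) * (n:ℝ) ^ (r-1) := by
    push_cast
    have h1 : ((M - 1 : ℕ) : ℝ) ≤ (M:ℝ) := by exact_mod_cast Nat.sub_le M 1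
    nlinarith
  calc (H.card : ℝ) ≤ ((K + 2 * (n ^ (r-1) * (M-1)) : ℕ) : ℝ) := by exact_mod_cast htotal
    _ = (K:ℝ) + 2 * ((n ^ (r-1) * (M-1) : ℕ) : ℝ) := by push_cast; ring
    _ ≤ c₀ * (n:ℝ) ^ (r-1) + 2 * ((M:ℝ) * (n:ℝ) ^ (r-1)) := by linarith
    _ = (c₀ + 2 * M) * (n:ℝ) ^ (r-1) := by ring
end

section
/- For fixed r ≥ d+1 ≥ 3, the maximum number of edges in an ordered n-vertex r-graph containing no interval r-partite copy of any d-dimensional r-simplex is O(n^{r-1}); explicitly, ex_→(n, ord(𝓢_d^r)) ≤ r^{10dr}·n^{r-1}. -/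
/-- A d-dimensional r-simplex: d+1 edges of size r such that every d of them
have a common vertex but all d+1 have empty intersection. -/
def IsSimplex (d r : ℕ) (F : Finset (Finset ℕ)) : Prop :=
  F.card = d + 1 ∧ (∀ e ∈ F, e.card = r) ∧
  (∀ G ⊆ F, G.card = d → ∃ x, ∀ e ∈ G, x ∈ e) ∧
  ¬ ∃ x, ∀ e ∈ F, x ∈ e

open Finset

theorem Finset.card_filter_card_filter_lt_le {α : Type*} [LinearOrder α] (s : Finset α) (j : ℕ) :
    #{c ∈ s | #{y ∈ s | c < y} < j} ≤ j := by
  set t := {c ∈ s | #{y ∈ s | c < y} < j}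
  rcases t.eq_empty_or_nonempty with ht | ht
  · simp [ht]
  -- the rest of `t` lies above `t.min' ht`, which has fewer than `j` elements of `s` above it
  have hm : t.min' ht ∈ t := t.min'_mem ht
  have hsub : t.erase (t.min' ht) ⊆ {y ∈ s | t.min' ht < y} := fun x hx =>
    mem_filter.2 ⟨(mem_filter.1 (mem_of_mem_erase hx)).1, t.min'_lt_of_mem_erase_min' ht hx⟩
  have := card_le_card hsub
  rw [card_erase_of_mem hm] at this
  have := (mem_filter.1 hm).2
  omega

theorem Finset.exists_injOn_mem_of_card_le {ι α : Type*} [DecidableEq α] [Nonempty α]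
    {s : Finset ι} {t : ι → Finset α} (h : ∀ i ∈ s, #s ≤ #(t i)) :
    ∃ f : ι → α, Set.InjOn f s ∧ ∀ i ∈ s, f i ∈ t i := by
  classical
  obtain ⟨f, hf, hft⟩ := (all_card_le_biUnion_card_iff_exists_injective
    fun i : s => t i).1 fun u => by
      rcases u.eq_empty_or_nonempty with rfl | ⟨i, hi⟩
      · simp
      · calc #u ≤ #s := by simpa using card_le_univ u
          _ ≤ #(t i) := h i i.2
          _ ≤ #(u.biUnion fun i : s => t i) :=
            card_le_card (subset_biUnion_of_mem (fun i : s => t i) hi)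
  refine ⟨fun i => if hi : i ∈ s then f ⟨i, hi⟩ else Classical.arbitrary α, ?_, fun i hi => ?_⟩
  · intro i hi i' hi' h
    rw [mem_coe] at hi hi'
    have h' : f ⟨i, hi⟩ = f ⟨i', hi'⟩ := by simpa [hi, hi'] using h
    simpa using hf h'
  · simpa [dif_pos hi] using hft ⟨i, hi⟩

theorem Finset.sup_id_mem {α : Type*} [LinearOrder α] [OrderBot α] {s : Finset α}
    (hs : s.Nonempty) : s.sup id ∈ s := by
  obtain ⟨x, hx, h⟩ := s.exists_mem_eq_sup hs id
  exact h ▸ hx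

theorem Finset.eq_of_sup_id_eq_of_erase_eq {α : Type*} [LinearOrder α] [OrderBot α]
    {e e' : Finset α} (he : e.Nonempty) (he' : e'.Nonempty) (htop : e.sup id = e'.sup id)
    (hbody : e.erase (e.sup id) = e'.erase (e'.sup id)) : e = e' := by
  rw [← insert_erase (sup_id_mem he), ← insert_erase (sup_id_mem he')]
  exact congrArg₂ insert htop hbody

theorem Finset.image_update_range_add_one {α : Type*} [DecidableEq α] (g : ℕ → α) (k : ℕ)
    (v : α) :
    (range (k + 1)).image (Function.update g k v) = insert v ((range k).image g) := by
  rw [range_add_one, image_insert, Function.update_self]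
  congr 1
  refine image_congr fun p hp => Function.update_of_ne ?_ _ _
  exact (mem_range.1 hp).ne

theorem IsIntervalN.filter_lt {I : Finset ℕ} (hI : IsIntervalN I) (c : ℕ) :
    IsIntervalN {x ∈ I | x < c} := by
  obtain ⟨a, b, rfl⟩ := hI
  rcases Nat.eq_zero_or_pos c with rfl | hc
  · exact ⟨1, 0, by simp⟩
  · exact ⟨a, min b (c - 1), by ext; simp only [mem_filter, mem_Icc]; omega⟩

theorem image_range_inter_eq_singleton {k : ℕ} {I : ℕ → Finset ℕ}
    (hI : ∀ j j', j < j' → j' < k → Precedes (I j) (I j')) {g : ℕ → ℕ}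
    (hg : ∀ q < k, g q ∈ I q) {q : ℕ} (hq : q < k) :
    (range k).image g ∩ I q = {g q} := by
  ext x
  simp only [mem_inter, mem_image, mem_range, mem_singleton]
  constructor
  · rintro ⟨⟨p, hp, rfl⟩, hx⟩
    rcases lt_trichotomy p q with hpq | rfl | hpq
    · exact absurd (hI p q hpq hq _ (hg p hp) _ hx) (lt_irrefl _)
    · rfl
    · exact absurd (hI q p hpq hp _ hx _ (hg p hp)) (lt_irrefl _)
  · rintro rfl
    exact ⟨⟨q, hq, rfl⟩, hg q hq⟩

theorem card_image_range_eq {k : ℕ} {I : ℕ → Finset ℕ}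
    (hI : ∀ j j', j < j' → j' < k → Precedes (I j) (I j')) {g : ℕ → ℕ}
    (hg : ∀ q < k, g q ∈ I q) : #((range k).image g) = k := by
  rw [card_image_of_injOn, card_range]
  intro p hp q hq hpq
  simp only [coe_range, Set.mem_Iio] at hp hq
  rcases lt_trichotomy p q with h | h | h
  · exact absurd hpq (hI p q h hq _ (hg p hp) _ (hg q hq)).ne
  · exact h
  · exact absurd hpq (hI q p h hp _ (hg q hq) _ (hg p hp)).ne'

theorem intervalPartiteExact_iff_transversal {k : ℕ} {F : Finset (Finset ℕ)} :
    IntervalPartiteExact k F ↔ ∃ I : ℕ → Finset ℕ, (∀ j < k, IsIntervalN (I j)) ∧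
      (∀ j j', j < j' → j' < k → Precedes (I j) (I j')) ∧
      ∀ e ∈ F, ∃ g : ℕ → ℕ, (∀ q < k, g q ∈ I q) ∧ e = (range k).image g := by
  refine exists_congr fun I => and_congr_right fun _ => and_congr_right fun hprec =>
    forall₂_congr fun e _ => ⟨fun ⟨hcov, hone⟩ => ?_, fun ⟨g, hg, he⟩ => ?_⟩
  · have hpt : ∀ q, ∃ x, q < k → e ∩ I q = {x} := fun q => by
      by_cases hq : q < k
      · obtain ⟨x, hx⟩ := card_eq_one.1 (hone q hq)
        exact ⟨x, fun _ => hx⟩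
      · exact ⟨0, fun h => absurd h hq⟩
    choose g hg using hpt
    have hgI : ∀ q < k, g q ∈ e ∧ g q ∈ I q := fun q hq =>
      mem_inter.1 ((hg q hq).symm ▸ mem_singleton_self _)
    refine ⟨g, fun q hq => (hgI q hq).2, ?_⟩
    ext x
    refine ⟨fun hx => ?_, ?_⟩
    · obtain ⟨q, hq, hxq⟩ := hcov x hx
      have : x ∈ e ∩ I q := mem_inter.2 ⟨hx, hxq⟩
      rw [hg q hq, mem_singleton] at this
      exact mem_image.2 ⟨q, mem_range.2 hq, this.symm⟩
    · simp only [mem_image, mem_range]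
      rintro ⟨q, hq, rfl⟩
      exact (hgI q hq).1
  · subst he
    refine ⟨?_, fun q hq => by rw [image_range_inter_eq_singleton hprec hg hq, card_singleton]⟩
    simp only [mem_image, mem_range]
    rintro _ ⟨q, hq, rfl⟩
    exact ⟨q, hq, hg q hq⟩

theorem IntervalPartiteExact.image_insert {r c : ℕ} {F : Finset (Finset ℕ)}
    (hF : IntervalPartiteExact r F) (hlt : ∀ z ∈ F, ∀ x ∈ z, x < c) {f : Finset ℕ → ℕ}
    (hf : ∀ z ∈ F, c < f z) : IntervalPartiteExact (r + 1) (F.image fun z => insert (f z) z) := by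
  obtain ⟨J, hJ, hprec, htr⟩ := intervalPartiteExact_iff_transversal.1 hF
  refine intervalPartiteExact_iff_transversal.2
    ⟨fun q => if q < r then {x ∈ J q | x < c} else Icc (c + 1) (F.sup f), fun q hq => ?_,
      fun p q hpq hq x hx y hy => ?_, ?_⟩
  · dsimp only
    split_ifs with h
    · exact (hJ q h).filter_lt c
    · exact ⟨_, _, rfl⟩
  · simp only [if_pos (show p < r by omega), mem_filter] at hx
    dsimp only at hy
    split_ifs at hy with h
    · exact hprec p q hpq h x hx.1 y (mem_filter.1 hy).1
    · have := (mem_Icc.1 hy).1; omega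
  · simp only [mem_image]
    rintro _ ⟨z, hz, rfl⟩
    obtain ⟨g, hg, rfl⟩ := htr z hz
    refine ⟨Function.update g r (f _), fun q hq => ?_, (image_update_range_add_one g r _).symm⟩
    split_ifs with h
    · rw [Function.update_of_ne h.ne]
      exact mem_filter.2 ⟨hg q h, hlt _ hz _ (mem_image_of_mem g (mem_range.2 h))⟩
    · obtain rfl : q = r := by omega
      rw [Function.update_self]
      exact mem_Icc.2 ⟨hf _ hz, le_sup (f := f) hz⟩

theorem isSimplex_iff {d r : ℕ} {F : Finset (Finset ℕ)} : IsSimplex d r F ↔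
    #F = d + 1 ∧ (∀ e ∈ F, #e = r) ∧ (∀ t ∈ F, ∃ x, ∀ e ∈ F, e ≠ t → x ∈ e) ∧
      ¬∃ x, ∀ e ∈ F, x ∈ e := by
  refine and_congr_right fun hF => and_congr_right fun _ => and_congr_left fun _ =>
    ⟨fun h t ht => ?_, fun h G hG hGcard => ?_⟩
  · obtain ⟨x, hx⟩ := h (F.erase t) (erase_subset t F) (by rw [card_erase_of_mem ht, hF]; rfl)
    exact ⟨x, fun e he het => hx e (mem_erase.2 ⟨het, he⟩)⟩
  · obtain ⟨t, ht, htG⟩ := exists_mem_notMem_of_card_lt_card (s := G) (t := F) (by omega)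
    obtain ⟨x, hx⟩ := h t ht
    exact ⟨x, fun e he => hx e (hG he) fun het => htG (het ▸ he)⟩

theorem IsSimplex.image_insert {d r : ℕ} (hd : 1 ≤ d) {F : Finset (Finset ℕ)}
    (hF : IsSimplex d r F) {f : Finset ℕ → ℕ} (hf : Set.InjOn f F)
    (hfF : ∀ z ∈ F, ∀ z' ∈ F, f z ∉ z') :
    IsSimplex d (r + 1) (F.image fun z => insert (f z) z) := by
  obtain ⟨hcard, hsize, hcommon, hempty⟩ := isSimplex_iff.1 hF
  have hinj : Set.InjOn (fun z => insert (f z) z) F := fun z hz z' hz' h => by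
    have : f z ∈ insert (f z') z' := (show insert (f z) z = insert (f z') z' from h) ▸
      mem_insert_self (f z) z
    rcases mem_insert.1 this with h | h
    · exact hf hz hz' h
    · exact absurd h (hfF z hz z' hz')
  refine isSimplex_iff.2 ⟨by rw [card_image_of_injOn hinj, hcard], ?_, ?_, ?_⟩
  · simp only [mem_image]
    rintro _ ⟨z, hz, rfl⟩
    rw [card_insert_of_notMem (hfF z hz z hz), hsize z hz]
  · simp only [mem_image]
    rintro _ ⟨t, ht, rfl⟩
    obtain ⟨x, hx⟩ := hcommon t ht
    refine ⟨x, ?_⟩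
    rintro _ ⟨z, hz, rfl⟩ hzt
    exact mem_insert_of_mem (hx z hz fun h => hzt (h ▸ rfl))
  · rintro ⟨x, hx⟩
    obtain ⟨z, hz, hxz⟩ : ∃ z ∈ F, x ∉ z := by
      by_contra! h
      exact hempty ⟨x, h⟩
    obtain rfl : x = f z := (mem_insert.1 (hx _ (mem_image_of_mem _ hz))).resolve_right hxz
    obtain ⟨z', hz', hz'z⟩ := exists_mem_ne (by omega : 1 < #F) z
    rcases mem_insert.1 (hx _ (mem_image_of_mem _ hz')) with h | h
    · exact hz'z (hf hz' hz h.symm)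
    · exact hfF z hz z' hz' h

namespace OrderedHypergraph

def apexes (T : Finset (Finset ℕ)) (z : Finset ℕ) : Finset ℕ :=
  {c ∈ T.sup id | (∀ x ∈ z, x < c) ∧ insert c z ∈ T}

theorem mem_apexes {T : Finset (Finset ℕ)} {z : Finset ℕ} {c : ℕ} :
    c ∈ apexes T z ↔ (∀ x ∈ z, x < c) ∧ insert c z ∈ T := by
  refine mem_filter.trans ⟨And.right, fun h => ⟨?_, h⟩⟩
  exact mem_sup.2 ⟨_, h.2, mem_insert_self c z⟩

theorem sup_id_mem_apexes_erase {T : Finset (Finset ℕ)} {e : Finset ℕ} (he : e ∈ T)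
    (hne : e.Nonempty) : e.sup id ∈ apexes T (e.erase (e.sup id)) := by
  refine mem_apexes.2 ⟨fun x hx => ?_, by rwa [insert_erase (sup_id_mem hne)]⟩
  exact lt_of_le_of_ne (le_sup (f := id) (mem_of_mem_erase hx)) (ne_of_mem_erase hx)

def upperLink (j : ℕ) (T : Finset (Finset ℕ)) (c : ℕ) : Finset (Finset ℕ) :=
  {z ∈ T.image (·.erase c) | c ∈ apexes T z ∧ j ≤ #{y ∈ apexes T z | c < y}}

theorem mem_upperLink {j : ℕ} {T : Finset (Finset ℕ)} {c : ℕ} {z : Finset ℕ} :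
    z ∈ upperLink j T c ↔ c ∈ apexes T z ∧ j ≤ #{y ∈ apexes T z | c < y} := by
  refine mem_filter.trans ⟨And.right, fun h => ⟨mem_image.2 ⟨_, (mem_apexes.1 h.1).2, ?_⟩, h⟩⟩
  exact erase_insert fun hc => lt_irrefl c ((mem_apexes.1 h.1).1 c hc)

theorem upperLink_subset_powersetCard {j k n c : ℕ} {T : Finset (Finset ℕ)}
    (hT : T ⊆ (Icc 1 n).powersetCard (k + 1)) : upperLink j T c ⊆ (Icc 1 n).powersetCard k := by
  intro z hz
  obtain ⟨hlt, hzT⟩ := mem_apexes.1 (mem_upperLink.1 hz).1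
  obtain ⟨hsub, hcard⟩ := mem_powersetCard.1 (hT hzT)
  have hc : c ∉ z := fun hc => lt_irrefl c (hlt c hc)
  exact mem_powersetCard.2 ⟨(subset_insert c z).trans hsub, by
    rw [card_insert_of_notMem hc] at hcard; omega⟩

theorem card_filter_few_apexes_above_le {j k n : ℕ} {T : Finset (Finset ℕ)}
    (hT : T ⊆ (Icc 1 n).powersetCard (k + 1)) :
    #{e ∈ T | #{y ∈ apexes T (e.erase (e.sup id)) | e.sup id < y} < j} ≤ j * n ^ k := by
  have hne : ∀ e ∈ T, e.Nonempty := fun e he =>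
    card_pos.1 ((mem_powersetCard.1 (hT he)).2 ▸ k.succ_pos)
  calc _ ≤ j * #((Icc 1 n).powersetCard k) := by
        refine card_le_mul_card_image_of_maps_to (f := fun e => e.erase (e.sup id))
          (fun e he => ?_) j fun z _ => ?_
        · have he := (mem_filter.1 he).1
          obtain ⟨hsub, hcard⟩ := mem_powersetCard.1 (hT he)
          refine mem_powersetCard.2 ⟨(erase_subset _ _).trans hsub, ?_⟩
          rw [card_erase_of_mem (sup_id_mem (hne e he)), hcard, Nat.add_sub_cancel]
        · refine (card_le_card_of_injOn (·.sup id) (fun e he => ?_) fun e he e' he' h => ?_).trans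
            (card_filter_card_filter_lt_le (apexes T z) j)
          · obtain ⟨helow, rfl⟩ := mem_filter.1 he
            obtain ⟨he, hlow⟩ := mem_filter.1 helow
            exact mem_filter.2 ⟨sup_id_mem_apexes_erase he (hne e he), hlow⟩
          · obtain ⟨he, hz⟩ := mem_filter.1 (mem_coe.1 he)
            obtain ⟨he', hz'⟩ := mem_filter.1 (mem_coe.1 he')
            have he := (mem_filter.1 he).1
            have he' := (mem_filter.1 he').1
            exact eq_of_sup_id_eq_of_erase_eq (hne e he) (hne e' he') h (hz.trans hz'.symm)
    _ ≤ j * n ^ k := by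
        rw [card_powersetCard, Nat.card_Icc, Nat.add_sub_cancel]
        exact Nat.mul_le_mul_left j (Nat.choose_le_pow n k)

theorem card_filter_many_apexes_above_le {j k n g : ℕ} {T : Finset (Finset ℕ)}
    (hT : T ⊆ (Icc 1 n).powersetCard (k + 1)) (hg : ∀ c, #(upperLink j T c) ≤ g) :
    #{e ∈ T | j ≤ #{y ∈ apexes T (e.erase (e.sup id)) | e.sup id < y}} ≤ n * g := by
  have hne : ∀ e ∈ T, e.Nonempty := fun e he =>
    card_pos.1 ((mem_powersetCard.1 (hT he)).2 ▸ k.succ_pos)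
  calc _ ≤ g * #(Icc 1 n) := by
        refine card_le_mul_card_image_of_maps_to (f := (·.sup id)) (fun e he => ?_) g
          fun c _ => ?_
        · have he := (mem_filter.1 he).1
          exact (mem_powersetCard.1 (hT he)).1 (sup_id_mem (hne e he))
        · refine (card_le_card_of_injOn (fun e => e.erase (e.sup id)) (fun e he => ?_)
            fun e he e' he' h => ?_).trans (hg c)
          · obtain ⟨hehigh, rfl⟩ := mem_filter.1 he
            obtain ⟨he, hhigh⟩ := mem_filter.1 hehigh
            exact mem_upperLink.2 ⟨sup_id_mem_apexes_erase he (hne e he), hhigh⟩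
          · obtain ⟨he, hc⟩ := mem_filter.1 (mem_coe.1 he)
            obtain ⟨he', hc'⟩ := mem_filter.1 (mem_coe.1 he')
            have he := (mem_filter.1 he).1
            have he' := (mem_filter.1 he').1
            exact eq_of_sup_id_eq_of_erase_eq (hne e he) (hne e' he') (hc.trans hc'.symm) h
    _ = n * g := by rw [Nat.card_Icc, Nat.add_sub_cancel, mul_comm]

/-- Each edge is `z ∪ {c}` with `c` its top vertex. Edges whose `c` has fewer than `j` apexes of
`z` above it are at most `j` per `z`; the others, grouped by `c`, are the upper links. -/
theorem card_le_of_card_upperLink_le {j k n g : ℕ} {T : Finset (Finset ℕ)}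
    (hT : T ⊆ (Icc 1 n).powersetCard (k + 1)) (hg : ∀ c, #(upperLink j T c) ≤ g) :
    #T ≤ j * n ^ k + n * g := by
  rw [← card_filter_add_card_filter_not (s := T)
    fun e => j ≤ #{y ∈ apexes T (e.erase (e.sup id)) | e.sup id < y}, add_comm]
  simp only [not_le]
  exact add_le_add (card_filter_few_apexes_above_le hT) (card_filter_many_apexes_above_le hT hg)

/-- `T` contains a base edge `{a₀, …, a_{k-1}}` together with the `k` edges obtained from it by
switching one `aₚ` to `bₚ ≠ aₚ`, where the pairs `{aₚ, bₚ}` lie in consecutive blocks. -/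
def HasSwitchStar (k : ℕ) (T : Finset (Finset ℕ)) : Prop :=
  ∃ a b : ℕ → ℕ, (∀ p q, p < q → q < k → max (a p) (b p) < min (a q) (b q)) ∧
    (∀ p < k, a p ≠ b p) ∧ (range k).image a ∈ T ∧
    ∀ j < k, (range k).image (Function.update a j (b j)) ∈ T

/-- A switch star in the upper link of `c` extends by the block `{c, c'}`, where `c'` is an apex
of the base above `c`. -/
theorem HasSwitchStar.of_upperLink {k c : ℕ} {T : Finset (Finset ℕ)}
    (h : HasSwitchStar k (upperLink 1 T c)) : HasSwitchStar (k + 1) T := by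
  obtain ⟨a, b, hblock, hab, hbase, hswitch⟩ := h
  obtain ⟨hbase_c, hbase_up⟩ := mem_upperLink.1 hbase
  obtain ⟨c', hc'⟩ := card_pos.1 hbase_up
  obtain ⟨hc'T, hcc'⟩ := mem_filter.1 hc'
  have hswitch_c : ∀ j < k, c ∈ apexes T ((range k).image (Function.update a j (b j))) :=
    fun j hj => (mem_upperLink.1 (hswitch j hj)).1
  have ha : ∀ p < k, a p < c := fun p hp =>
    (mem_apexes.1 hbase_c).1 _ (mem_image_of_mem _ (mem_range.2 hp))
  have hb : ∀ p < k, b p < c := fun p hp => by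
    simpa using (mem_apexes.1 (hswitch_c p hp)).1 _ (mem_image_of_mem _ (mem_range.2 hp))
  refine ⟨Function.update a k c, Function.update b k c', fun p q hpq hq => ?_, fun p hp => ?_, ?_,
    fun j hj => ?_⟩
  · have hp : p < k := by omega
    rw [Function.update_of_ne hp.ne, Function.update_of_ne hp.ne]
    rcases Nat.lt_succ_iff_lt_or_eq.1 hq with hq | rfl
    · rw [Function.update_of_ne hq.ne, Function.update_of_ne hq.ne]
      exact hblock p q hpq hq
    · rw [Function.update_self, Function.update_self]
      have := ha p hp; have := hb p hp; omega
  · simp only [Function.update_apply]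
    split_ifs with hpk
    · omega
    · exact hab p (by omega)
  · rw [image_update_range_add_one]
    exact (mem_apexes.1 hbase_c).2
  · rcases Nat.lt_succ_iff_lt_or_eq.1 hj with hj | rfl
    · rw [Function.update_of_ne hj.ne, Function.update_comm hj.ne', image_update_range_add_one]
      exact (mem_apexes.1 (hswitch_c j hj)).2
    · rw [Function.update_self, Function.update_idem, image_update_range_add_one]
      exact (mem_apexes.1 hc'T).2

theorem card_le_of_not_hasSwitchStar {k n : ℕ} {T : Finset (Finset ℕ)}
    (hT : T ⊆ (Icc 1 n).powersetCard k) (h : ¬HasSwitchStar k T) : #T ≤ k * n ^ (k - 1) := by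
  induction k generalizing T with
  | zero =>
    rw [zero_mul, Nat.le_zero, card_eq_zero]
    refine eq_empty_of_forall_notMem fun e he => h ⟨id, id, by simp, by simp, ?_, by simp⟩
    simpa [card_eq_zero.1 (mem_powersetCard.1 (hT he)).2] using he
  | succ k ih =>
    calc #T ≤ 1 * n ^ k + n * (k * n ^ (k - 1)) :=
          card_le_of_card_upperLink_le hT fun c =>
            ih (upperLink_subset_powersetCard hT) fun hstar => h hstar.of_upperLink
      _ = (k + 1) * n ^ (k + 1 - 1) := by
          rcases Nat.eq_zero_or_pos k with rfl | hk
          · simp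
          · rw [Nat.add_sub_cancel, ← mul_pow_sub_one hk.ne' n]
            ring

section SwitchEdges

variable {k : ℕ} {a b : ℕ → ℕ}

def blockInterval (a b : ℕ → ℕ) (q : ℕ) : Finset ℕ :=
  Icc (min (a q) (b q)) (max (a q) (b q))

def switchEdges (k : ℕ) (a b : ℕ → ℕ) : Finset (Finset ℕ) :=
  (range k).image fun j => (range k).image (Function.update a j (b j))

theorem update_mem_blockInterval (j q : ℕ) :
    Function.update a j (b j) q ∈ blockInterval a b q := by
  simp only [blockInterval, mem_Icc, Function.update_apply]
  split_ifs with h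
  · subst h; omega
  · omega

theorem precedes_blockInterval
    (hblock : ∀ p q, p < q → q < k → max (a p) (b p) < min (a q) (b q)) :
    ∀ p q, p < q → q < k → Precedes (blockInterval a b p) (blockInterval a b q) :=
  fun p q hpq hq x hx y hy => by
    have := hblock p q hpq hq
    simp only [blockInterval, mem_Icc] at hx hy
    omega

theorem mem_image_update_iff
    (hblock : ∀ p q, p < q → q < k → max (a p) (b p) < min (a q) (b q)) {j q x : ℕ}
    (hq : q < k) (hx : x ∈ blockInterval a b q) :
    x ∈ (range k).image (Function.update a j (b j)) ↔ x = Function.update a j (b j) q := by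
  rw [← mem_singleton, ← image_range_inter_eq_singleton (precedes_blockInterval hblock)
    (fun q _ => update_mem_blockInterval j q) hq, mem_inter, and_iff_left hx]

theorem intervalPartiteExact_switchEdges
    (hblock : ∀ p q, p < q → q < k → max (a p) (b p) < min (a q) (b q)) :
    IntervalPartiteExact k (switchEdges k a b) := by
  refine intervalPartiteExact_iff_transversal.2
    ⟨blockInterval a b, fun q _ => ⟨_, _, rfl⟩, precedes_blockInterval hblock, ?_⟩
  simp only [switchEdges, mem_image, mem_range]
  rintro _ ⟨j, -, rfl⟩
  exact ⟨_, fun q _ => update_mem_blockInterval j q, rfl⟩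

/-- All switched edges but the `i`-th contain `aᵢ`, while a common vertex of all of them would
have to be both `a q` and `b q` for its block `q`. -/
theorem isSimplex_switchEdges {d : ℕ} (hd : 1 ≤ d)
    (hblock : ∀ p q, p < q → q < d + 1 → max (a p) (b p) < min (a q) (b q))
    (hab : ∀ p < d + 1, a p ≠ b p) : IsSimplex d (d + 1) (switchEdges (d + 1) a b) := by
  set e : ℕ → Finset ℕ := fun j => (range (d + 1)).image (Function.update a j (b j))
  have hb_mem : ∀ {i j}, i < d + 1 → (b i ∈ e j ↔ i = j) := fun {i j} hi => by
    have hbi : b i ∈ blockInterval a b i := by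
      simpa using update_mem_blockInterval (a := a) (b := b) i i
    rw [mem_image_update_iff hblock hi hbi, Function.update_apply]
    split_ifs with h
    · exact ⟨fun _ => h, fun _ => h ▸ rfl⟩
    · exact ⟨fun h' => absurd h'.symm (hab i hi), fun h' => absurd h' h⟩
  have he_inj : Set.InjOn e (range (d + 1)) := fun i hi j hj hij => by
    simp only [coe_range, Set.mem_Iio] at hi hj
    exact (hb_mem hi).1 (hij ▸ (hb_mem hi).2 rfl)
  refine isSimplex_iff.2 ⟨card_image_of_injOn he_inj ▸ card_range _, ?_, ?_, ?_⟩
  · simp only [switchEdges, mem_image, mem_range]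
    rintro _ ⟨j, -, rfl⟩
    exact card_image_range_eq (precedes_blockInterval hblock)
      fun q _ => update_mem_blockInterval j q
  · simp only [switchEdges, mem_image, mem_range]
    rintro _ ⟨i, hi, rfl⟩
    refine ⟨a i, ?_⟩
    rintro _ ⟨j, hj, rfl⟩ hji
    exact mem_image.2 ⟨i, mem_range.2 hi, Function.update_of_ne (by rintro rfl; exact hji rfl) ..⟩
  · rintro ⟨x, hx⟩
    have hxe : ∀ j < d + 1, x ∈ e j := fun j hj => hx _ (mem_image_of_mem e (mem_range.2 hj))
    obtain ⟨q, hq, rfl⟩ := mem_image.1 (hxe 0 (by omega))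
    obtain ⟨j, hj, hjq⟩ : ∃ j < d + 1, j ≠ q := ⟨if q = 0 then 1 else 0, by split_ifs <;> omega⟩
    have hq' := mem_range.1 hq
    have hxI := update_mem_blockInterval (a := a) (b := b) 0 q
    have hxb := (mem_image_update_iff hblock hq' hxI).1 (hxe q hq')
    have hxa := (mem_image_update_iff hblock hq' hxI).1 (hxe j hj)
    rw [Function.update_self] at hxb
    rw [Function.update_of_ne hjq.symm] at hxa
    exact hab q hq' (hxa.symm.trans hxb)

end SwitchEdges

def HasIntervalSimplex (d r : ℕ) (H : Finset (Finset ℕ)) : Prop :=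
  ∃ F ⊆ H, IsSimplex d r F ∧ IntervalPartiteExact r F

theorem HasSwitchStar.hasIntervalSimplex {d : ℕ} (hd : 1 ≤ d) {H : Finset (Finset ℕ)}
    (h : HasSwitchStar (d + 1) H) : HasIntervalSimplex d (d + 1) H := by
  obtain ⟨a, b, hblock, hab, -, hswitch⟩ := h
  refine ⟨switchEdges (d + 1) a b, ?_, isSimplex_switchEdges hd hblock hab,
    intervalPartiteExact_switchEdges hblock⟩
  simp only [switchEdges, subset_iff, mem_image, mem_range]
  rintro _ ⟨j, hj, rfl⟩
  exact hswitch j hj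

/-- Each edge `z` of the simplex has at least `d + 1` apexes above `c`, so the `d + 1` edges can be
given distinct apexes. -/
theorem HasIntervalSimplex.of_upperLink {d r c : ℕ} (hd : 1 ≤ d) {H : Finset (Finset ℕ)}
    (h : HasIntervalSimplex d r (upperLink (d + 1) H c)) : HasIntervalSimplex d (r + 1) H := by
  obtain ⟨F, hFH, hS, hI⟩ := h
  have hlink : ∀ z ∈ F, c ∈ apexes H z ∧ d + 1 ≤ #{y ∈ apexes H z | c < y} := fun z hz =>
    mem_upperLink.1 (hFH hz)
  obtain ⟨f, hf, hfA⟩ := exists_injOn_mem_of_card_le (s := F)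
    (t := fun z => {y ∈ apexes H z | c < y}) fun z hz => hS.1 ▸ (hlink z hz).2
  have hfA : ∀ z ∈ F, f z ∈ apexes H z ∧ c < f z := fun z hz => mem_filter.1 (hfA z hz)
  have hlt : ∀ z ∈ F, ∀ x ∈ z, x < c := fun z hz => (mem_apexes.1 (hlink z hz).1).1
  refine ⟨F.image fun z => insert (f z) z, ?_, hS.image_insert hd hf fun z hz z' hz' hfz => ?_,
    hI.image_insert hlt fun z hz => (hfA z hz).2⟩
  · simp only [subset_iff, mem_image]
    rintro _ ⟨z, hz, rfl⟩
    exact (mem_apexes.1 (hfA z hz).1).2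
  · exact absurd (hlt z' hz' _ hfz) (hfA z hz).2.not_gt

theorem card_le_of_not_hasIntervalSimplex {d r n : ℕ} (hd : 1 ≤ d) (hr : d + 1 ≤ r)
    {H : Finset (Finset ℕ)} (hH : H ⊆ (Icc 1 n).powersetCard r) (h : ¬HasIntervalSimplex d r H) :
    #H ≤ (d + 1) * (r - d) * n ^ (r - 1) := by
  induction r, hr using Nat.le_induction generalizing H with
  | base =>
    simpa using card_le_of_not_hasSwitchStar hH fun hstar => h (hstar.hasIntervalSimplex hd)
  | succ r hr ih =>
    calc #H ≤ (d + 1) * n ^ r + n * ((d + 1) * (r - d) * n ^ (r - 1)) :=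
          card_le_of_card_upperLink_le hH fun c =>
            ih (upperLink_subset_powersetCard hH) fun hS => h (hS.of_upperLink hd)
      _ = (d + 1) * (r + 1 - d) * n ^ (r + 1 - 1) := by
          rw [Nat.add_sub_cancel, show r + 1 - d = r - d + 1 by omega,
            ← mul_pow_sub_one (show r ≠ 0 by omega) n]
          ring

end OrderedHypergraph

/-- Theorem 4 (simplices): for r ≥ d+1 ≥ 3, every ordered n-vertex r-graph with no
interval r-partite copy of any d-dimensional r-simplex has at most r^{10dr}·n^{r-1}
edges. -/
theorem simplex_extremal (d r n : ℕ) (hd : 3 ≤ d + 1) (hr : d + 1 ≤ r)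
    (H : Finset (Finset ℕ)) (hH : ∀ e ∈ H, e ⊆ Finset.Icc 1 n ∧ e.card = r)
    (hfree : ¬ ∃ F : Finset (Finset ℕ), IsSimplex d r F ∧ ContainsOrdCopy r F H) :
    H.card ≤ r ^ (10 * d * r) * n ^ (r - 1) := by
  have hsimplex : ¬OrderedHypergraph.HasIntervalSimplex d r H := fun ⟨F, hFH, hS, hI⟩ =>
    hfree ⟨F, hS, id, Set.injOn_id _, by simpa using hFH, by simpa using hI⟩
  have hcoeff : (d + 1) * (r - d) ≤ r ^ (10 * d * r) :=
    calc (d + 1) * (r - d) ≤ r ^ 2 := by rw [sq]; exact Nat.mul_le_mul hr (Nat.sub_le r d)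
      _ ≤ r ^ (10 * d * r) := Nat.pow_le_pow_right (by omega) (by nlinarith)
  calc H.card ≤ (d + 1) * (r - d) * n ^ (r - 1) :=
        OrderedHypergraph.card_le_of_not_hasIntervalSimplex (by omega) hr
          (fun e he => mem_powersetCard.2 (hH e he)) hsimplex
    _ ≤ r ^ (10 * d * r) * n ^ (r - 1) := Nat.mul_le_mul_right _ hcoeff
end

section
/- Let 𝓕_RS = {I₂, T₃}, where I₂ is the 3-graph of two edges sharing exactly two vertices and T₃ is the loose triangle (three edges e, f, g with |e∩f| = |f∩g| = |g∩e| = 1 and e∩f∩g = ∅). Then ex_→(n, ord(𝓕_RS)) = o(n²): for every ε > 0 there is n₀ such that every ordered 3-graph on [n] with n ≥ n₀ and at least ε·n² edges contains an interval 3-partite copy of I₂ or of T₃. -/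
open scoped Classical

namespace ORS

/-- The disjunctive conclusion of the theorem. -/
def Concl (H : Finset (Finset ℕ)) : Prop :=
  (∃ e ∈ H, ∃ f ∈ H, e ≠ f ∧ (e ∩ f).card = 2 ∧
    IntervalPartiteExact 3 {e, f}) ∨
  (∃ e ∈ H, ∃ f ∈ H, ∃ g ∈ H, (e ∩ f).card = 1 ∧ (f ∩ g).card = 1 ∧
    (g ∩ e).card = 1 ∧ e ∩ f ∩ g = ∅ ∧
    IntervalPartiteExact 3 {e, f, g})

lemma triple_ext {a b c a' b' c' : ℕ} (hab : a < b) (hbc : b < c) (hab' : a' < b')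
    (hbc' : b' < c') (h : ({a,b,c} : Finset ℕ) = {a',b',c'}) : a = a' ∧ b = b' ∧ c = c' := by
  have h1 := Finset.ext_iff.mp h
  simp only [Finset.mem_insert, Finset.mem_singleton] at h1
  have := h1 a; have := h1 b; have := h1 c; have := h1 a'; have := h1 b'; have := h1 c'
  omega

lemma ipe3 (S : Finset (Finset ℕ)) (l0 h0 l1 h1 l2 h2 : ℕ)
    (hint1 : l1 ≤ h1) (h01 : h0 < l1) (h12 : h1 < l2)
    (hS : ∀ e ∈ S,
      (∀ x ∈ e, x ∈ Finset.Icc l0 h0 ∨ x ∈ Finset.Icc l1 h1 ∨ x ∈ Finset.Icc l2 h2) ∧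
      (e ∩ Finset.Icc l0 h0).card = 1 ∧ (e ∩ Finset.Icc l1 h1).card = 1 ∧
      (e ∩ Finset.Icc l2 h2).card = 1) :
    IntervalPartiteExact 3 S := by
  refine ⟨fun j => if j = 0 then Finset.Icc l0 h0 else if j = 1 then Finset.Icc l1 h1
    else Finset.Icc l2 h2, ?_, ?_, ?_⟩
  · intro j _; dsimp only; split_ifs <;> exact ⟨_, _, rfl⟩
  · intro j j' hjj' hj'
    interval_cases j' <;> interval_cases j <;> simp only [if_true, if_false] <;>
      · intro x hx y hy
        simp only [Finset.mem_Icc] at *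
        simp_all
        omega
  · intro e he
    obtain ⟨hcov, c0, c1, c2⟩ := hS e he
    constructor
    · intro x hx
      rcases hcov x hx with h | h | h
      · exact ⟨0, by omega, by simpa using h⟩
      · exact ⟨1, by omega, by simpa using h⟩
      · exact ⟨2, by omega, by simpa using h⟩
    · intro j hj; interval_cases j <;> simpa

lemma inj_low {H : Finset (Finset ℕ)} (hnc : ¬ Concl H) {a b c c' : ℕ}
    (h1 : a < b) (h2 : b < c) (h2' : b < c')
    (he : ({a,b,c} : Finset ℕ) ∈ H) (hf : ({a,b,c'} : Finset ℕ) ∈ H) : c = c' := by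
  by_contra hne
  apply hnc; left
  refine ⟨{a,b,c}, he, {a,b,c'}, hf, ?_, ?_, ?_⟩
  · intro h; exact hne (triple_ext h1 h2 h1 h2' h).2.2
  · have : ({a,b,c} : Finset ℕ) ∩ {a,b,c'} = {a,b} := by ext v; simp; omega
    rw [this, Finset.card_insert_of_notMem (by simp; omega), Finset.card_singleton]
  · refine ipe3 _ a a b b (min c c') (max c c') le_rfl h1 (by omega) ?_
    intro e he'
    simp only [Finset.mem_insert, Finset.mem_singleton] at he'
    rcases he' with rfl | rfl
    · refine ⟨by intro x hx; simp only [Finset.mem_insert, Finset.mem_singleton] at hx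
                 simp [Finset.mem_Icc]; omega, ?_, ?_, ?_⟩
      · rw [show ({a,b,c} : Finset ℕ) ∩ Finset.Icc a a = {a} from by
          ext v; simp only [Finset.mem_inter, Finset.mem_insert, Finset.mem_singleton, Finset.mem_Icc]; omega]
        exact Finset.card_singleton _
      · rw [show ({a,b,c} : Finset ℕ) ∩ Finset.Icc b b = {b} from by
          ext v; simp only [Finset.mem_inter, Finset.mem_insert, Finset.mem_singleton, Finset.mem_Icc]; omega]
        exact Finset.card_singleton _
      · rw [show ({a,b,c} : Finset ℕ) ∩ Finset.Icc (min c c') (max c c') = {c} from by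
          ext v; simp only [Finset.mem_inter, Finset.mem_insert, Finset.mem_singleton, Finset.mem_Icc]; omega]
        exact Finset.card_singleton _
    · refine ⟨by intro x hx; simp only [Finset.mem_insert, Finset.mem_singleton] at hx
                 simp [Finset.mem_Icc]; omega, ?_, ?_, ?_⟩
      · rw [show ({a,b,c'} : Finset ℕ) ∩ Finset.Icc a a = {a} from by
          ext v; simp only [Finset.mem_inter, Finset.mem_insert, Finset.mem_singleton, Finset.mem_Icc]; omega]
        exact Finset.card_singleton _
      · rw [show ({a,b,c'} : Finset ℕ) ∩ Finset.Icc b b = {b} from by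
          ext v; simp only [Finset.mem_inter, Finset.mem_insert, Finset.mem_singleton, Finset.mem_Icc]; omega]
        exact Finset.card_singleton _
      · rw [show ({a,b,c'} : Finset ℕ) ∩ Finset.Icc (min c c') (max c c') = {c'} from by
          ext v; simp only [Finset.mem_inter, Finset.mem_insert, Finset.mem_singleton, Finset.mem_Icc]; omega]
        exact Finset.card_singleton _

lemma inj_high {H : Finset (Finset ℕ)} (hnc : ¬ Concl H) {a a' b c : ℕ}
    (h1 : a < b) (h1' : a' < b) (h2 : b < c)
    (he : ({a,b,c} : Finset ℕ) ∈ H) (hf : ({a',b,c} : Finset ℕ) ∈ H) : a = a' := by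
  by_contra hne
  apply hnc; left
  refine ⟨{a,b,c}, he, {a',b,c}, hf, ?_, ?_, ?_⟩
  · intro h; exact hne (triple_ext h1 h2 h1' h2 h).1
  · have : ({a,b,c} : Finset ℕ) ∩ {a',b,c} = {b,c} := by ext v; simp; omega
    rw [this, Finset.card_insert_of_notMem (by simp; omega), Finset.card_singleton]
  · refine ipe3 _ (min a a') (max a a') b b c c le_rfl (by omega) h2 ?_
    intro e he'
    simp only [Finset.mem_insert, Finset.mem_singleton] at he'
    rcases he' with rfl | rfl
    · refine ⟨by intro x hx; simp only [Finset.mem_insert, Finset.mem_singleton] at hx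
                 simp [Finset.mem_Icc]; omega, ?_, ?_, ?_⟩
      · rw [show ({a,b,c} : Finset ℕ) ∩ Finset.Icc (min a a') (max a a') = {a} from by
          ext v; simp only [Finset.mem_inter, Finset.mem_insert, Finset.mem_singleton, Finset.mem_Icc]; omega]
        exact Finset.card_singleton _
      · rw [show ({a,b,c} : Finset ℕ) ∩ Finset.Icc b b = {b} from by
          ext v; simp only [Finset.mem_inter, Finset.mem_insert, Finset.mem_singleton, Finset.mem_Icc]; omega]
        exact Finset.card_singleton _
      · rw [show ({a,b,c} : Finset ℕ) ∩ Finset.Icc c c = {c} from by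
          ext v; simp only [Finset.mem_inter, Finset.mem_insert, Finset.mem_singleton, Finset.mem_Icc]; omega]
        exact Finset.card_singleton _
    · refine ⟨by intro x hx; simp only [Finset.mem_insert, Finset.mem_singleton] at hx
                 simp [Finset.mem_Icc]; omega, ?_, ?_, ?_⟩
      · rw [show ({a',b,c} : Finset ℕ) ∩ Finset.Icc (min a a') (max a a') = {a'} from by
          ext v; simp only [Finset.mem_inter, Finset.mem_insert, Finset.mem_singleton, Finset.mem_Icc]; omega]
        exact Finset.card_singleton _
      · rw [show ({a',b,c} : Finset ℕ) ∩ Finset.Icc b b = {b} from by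
          ext v; simp only [Finset.mem_inter, Finset.mem_insert, Finset.mem_singleton, Finset.mem_Icc]; omega]
        exact Finset.card_singleton _
      · rw [show ({a',b,c} : Finset ℕ) ∩ Finset.Icc c c = {c} from by
          ext v; simp only [Finset.mem_inter, Finset.mem_insert, Finset.mem_singleton, Finset.mem_Icc]; omega]
        exact Finset.card_singleton _

lemma inj_outer {H : Finset (Finset ℕ)} (hnc : ¬ Concl H) {a b b' c : ℕ}
    (h1 : a < b) (h2 : b < c) (h1' : a < b') (h2' : b' < c)
    (he : ({a,b,c} : Finset ℕ) ∈ H) (hf : ({a,b',c} : Finset ℕ) ∈ H) : b = b' := by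
  by_contra hne
  apply hnc; left
  refine ⟨{a,b,c}, he, {a,b',c}, hf, ?_, ?_, ?_⟩
  · intro h; exact hne (triple_ext h1 h2 h1' h2' h).2.1
  · have : ({a,b,c} : Finset ℕ) ∩ {a,b',c} = {a,c} := by ext v; simp; omega
    rw [this, Finset.card_insert_of_notMem (by simp; omega), Finset.card_singleton]
  · refine ipe3 _ a a (min b b') (max b b') c c (by omega) (by omega) (by omega) ?_
    intro e he'
    simp only [Finset.mem_insert, Finset.mem_singleton] at he'
    rcases he' with rfl | rfl
    · refine ⟨by intro x hx; simp only [Finset.mem_insert, Finset.mem_singleton] at hx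
                 simp [Finset.mem_Icc]; omega, ?_, ?_, ?_⟩
      · rw [show ({a,b,c} : Finset ℕ) ∩ Finset.Icc a a = {a} from by
          ext v; simp only [Finset.mem_inter, Finset.mem_insert, Finset.mem_singleton, Finset.mem_Icc]; omega]
        exact Finset.card_singleton _
      · rw [show ({a,b,c} : Finset ℕ) ∩ Finset.Icc (min b b') (max b b') = {b} from by
          ext v; simp only [Finset.mem_inter, Finset.mem_insert, Finset.mem_singleton, Finset.mem_Icc]; omega]
        exact Finset.card_singleton _
      · rw [show ({a,b,c} : Finset ℕ) ∩ Finset.Icc c c = {c} from by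
          ext v; simp only [Finset.mem_inter, Finset.mem_insert, Finset.mem_singleton, Finset.mem_Icc]; omega]
        exact Finset.card_singleton _
    · refine ⟨by intro x hx; simp only [Finset.mem_insert, Finset.mem_singleton] at hx
                 simp [Finset.mem_Icc]; omega, ?_, ?_, ?_⟩
      · rw [show ({a,b',c} : Finset ℕ) ∩ Finset.Icc a a = {a} from by
          ext v; simp only [Finset.mem_inter, Finset.mem_insert, Finset.mem_singleton, Finset.mem_Icc]; omega]
        exact Finset.card_singleton _
      · rw [show ({a,b',c} : Finset ℕ) ∩ Finset.Icc (min b b') (max b b') = {b'} from by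
          ext v; simp only [Finset.mem_inter, Finset.mem_insert, Finset.mem_singleton, Finset.mem_Icc]; omega]
        exact Finset.card_singleton _
      · rw [show ({a,b',c} : Finset ℕ) ∩ Finset.Icc c c = {c} from by
          ext v; simp only [Finset.mem_inter, Finset.mem_insert, Finset.mem_singleton, Finset.mem_Icc]; omega]
        exact Finset.card_singleton _


/-- Key structural lemma: a "rainbow triangle" with the three parts separated
forces all three edges to coincide, in the absence of forbidden configurations. -/
lemma tri {H : Finset (Finset ℕ)} (hnc : ¬ Concl H) {a b x y z c : ℕ}
    (hab : a < b) (haz : a < z) (hyb : y < b) (hyz : y < z)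
    (hbx : b < x) (hbc : b < c) (hzx : z < x) (hzc : z < c)
    (he1 : ({a,b,x} : Finset ℕ) ∈ H) (he2 : ({y,b,c} : Finset ℕ) ∈ H)
    (he3 : ({a,z,c} : Finset ℕ) ∈ H) : a = y ∧ b = z ∧ x = c := by
  by_cases hay : a = y
  · subst hay
    by_cases hbz : b = z
    · subst hbz
      exact ⟨rfl, rfl, inj_low hnc hab hbx hbc he1 he2⟩
    · exact absurd (inj_outer hnc hab hbc haz hzc he2 he3) hbz
  · by_cases hbz : b = z
    · subst hbz
      exact absurd (inj_high hnc hyb hab hbc he2 he3).symm hay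
    · by_cases hxc : x = c
      · subst hxc
        exact absurd (inj_outer hnc hab hbx haz hzx he1 he3) hbz
      · -- the loose triangle case: contradiction with hnc
        exfalso
        apply hnc; right
        refine ⟨{a,b,x}, he1, {y,b,c}, he2, {a,z,c}, he3, ?_, ?_, ?_, ?_, ?_⟩
        · rw [show ({a,b,x} : Finset ℕ) ∩ {y,b,c} = {b} from by
            ext v; simp only [Finset.mem_inter, Finset.mem_insert, Finset.mem_singleton]; omega]
          exact Finset.card_singleton _
        · rw [show ({y,b,c} : Finset ℕ) ∩ {a,z,c} = {c} from by
            ext v; simp only [Finset.mem_inter, Finset.mem_insert, Finset.mem_singleton]; omega]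
          exact Finset.card_singleton _
        · rw [show ({a,z,c} : Finset ℕ) ∩ {a,b,x} = {a} from by
            ext v; simp only [Finset.mem_inter, Finset.mem_insert, Finset.mem_singleton]; omega]
          exact Finset.card_singleton _
        · ext v; simp only [Finset.mem_inter, Finset.mem_insert, Finset.mem_singleton,
            Finset.notMem_empty, iff_false]; omega
        · refine ipe3 _ (min a y) (max a y) (min b z) (max b z) (min x c) (max x c)
            (by omega) (by omega) (by omega) ?_
          intro e he'
          simp only [Finset.mem_insert, Finset.mem_singleton] at he'
          rcases he' with rfl | rfl | rfl
          · refine ⟨by intro w hw; simp only [Finset.mem_insert, Finset.mem_singleton] at hw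
                       simp [Finset.mem_Icc]; omega, ?_, ?_, ?_⟩
            · rw [show ({a,b,x} : Finset ℕ) ∩ Finset.Icc (min a y) (max a y) = {a} from by
                ext v; simp only [Finset.mem_inter, Finset.mem_insert, Finset.mem_singleton, Finset.mem_Icc]; omega]
              exact Finset.card_singleton _
            · rw [show ({a,b,x} : Finset ℕ) ∩ Finset.Icc (min b z) (max b z) = {b} from by
                ext v; simp only [Finset.mem_inter, Finset.mem_insert, Finset.mem_singleton, Finset.mem_Icc]; omega]
              exact Finset.card_singleton _
            · rw [show ({a,b,x} : Finset ℕ) ∩ Finset.Icc (min x c) (max x c) = {x} from by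
                ext v; simp only [Finset.mem_inter, Finset.mem_insert, Finset.mem_singleton, Finset.mem_Icc]; omega]
              exact Finset.card_singleton _
          · refine ⟨by intro w hw; simp only [Finset.mem_insert, Finset.mem_singleton] at hw
                       simp [Finset.mem_Icc]; omega, ?_, ?_, ?_⟩
            · rw [show ({y,b,c} : Finset ℕ) ∩ Finset.Icc (min a y) (max a y) = {y} from by
                ext v; simp only [Finset.mem_inter, Finset.mem_insert, Finset.mem_singleton, Finset.mem_Icc]; omega]
              exact Finset.card_singleton _
            · rw [show ({y,b,c} : Finset ℕ) ∩ Finset.Icc (min b z) (max b z) = {b} from by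
                ext v; simp only [Finset.mem_inter, Finset.mem_insert, Finset.mem_singleton, Finset.mem_Icc]; omega]
              exact Finset.card_singleton _
            · rw [show ({y,b,c} : Finset ℕ) ∩ Finset.Icc (min x c) (max x c) = {c} from by
                ext v; simp only [Finset.mem_inter, Finset.mem_insert, Finset.mem_singleton, Finset.mem_Icc]; omega]
              exact Finset.card_singleton _
          · refine ⟨by intro w hw; simp only [Finset.mem_insert, Finset.mem_singleton] at hw
                       simp [Finset.mem_Icc]; omega, ?_, ?_, ?_⟩
            · rw [show ({a,z,c} : Finset ℕ) ∩ Finset.Icc (min a y) (max a y) = {a} from by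
                ext v; simp only [Finset.mem_inter, Finset.mem_insert, Finset.mem_singleton, Finset.mem_Icc]; omega]
              exact Finset.card_singleton _
            · rw [show ({a,z,c} : Finset ℕ) ∩ Finset.Icc (min b z) (max b z) = {z} from by
                ext v; simp only [Finset.mem_inter, Finset.mem_insert, Finset.mem_singleton, Finset.mem_Icc]; omega]
              exact Finset.card_singleton _
            · rw [show ({a,z,c} : Finset ℕ) ∩ Finset.Icc (min x c) (max x c) = {c} from by
                ext v; simp only [Finset.mem_inter, Finset.mem_insert, Finset.mem_singleton, Finset.mem_Icc]; omega]
              exact Finset.card_singleton _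

/-- A "typed" sorted triple: an edge of `H` whose three vertices lie in blocks `i`, `j`, `l`
of the partition of `ℕ` into blocks of length `t` (block of `x` is `(x-1)/t`). -/
def Typed (H : Finset (Finset ℕ)) (t i j l a b c : ℕ) : Prop :=
  ({a,b,c} : Finset ℕ) ∈ H ∧ a < b ∧ b < c ∧ (a-1)/t = i ∧ (b-1)/t = j ∧ (c-1)/t = l

lemma lt_of_div_lt {t u v : ℕ} (h : (u-1)/t < (v-1)/t) : u < v := by
  by_contra hc
  push_neg at hc
  exact absurd (Nat.div_le_div_right (c := t) (Nat.sub_le_sub_right hc 1)) (by omega)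

/-- The auxiliary tripartite graph. -/
def TG (H : Finset (Finset ℕ)) (n t i j l : ℕ) : SimpleGraph (Fin 3 × Fin (n+1)) where
  Adj u v :=
    (u.1 = 0 ∧ v.1 = 1 ∧ ∃ c, Typed H t i j l u.2 v.2 c) ∨
    (u.1 = 1 ∧ v.1 = 0 ∧ ∃ c, Typed H t i j l v.2 u.2 c) ∨
    (u.1 = 1 ∧ v.1 = 2 ∧ ∃ a, Typed H t i j l a u.2 v.2) ∨
    (u.1 = 2 ∧ v.1 = 1 ∧ ∃ a, Typed H t i j l a v.2 u.2) ∨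
    (u.1 = 0 ∧ v.1 = 2 ∧ ∃ b, Typed H t i j l u.2 b v.2) ∨
    (u.1 = 2 ∧ v.1 = 0 ∧ ∃ b, Typed H t i j l v.2 b u.2)
  symm := by
    constructor
    intro u v h
    rcases h with ⟨h1,h2,h3⟩|⟨h1,h2,h3⟩|⟨h1,h2,h3⟩|⟨h1,h2,h3⟩|⟨h1,h2,h3⟩|⟨h1,h2,h3⟩
    · exact Or.inr (Or.inl ⟨h2,h1,h3⟩)
    · exact Or.inl ⟨h2,h1,h3⟩
    · exact Or.inr (Or.inr (Or.inr (Or.inl ⟨h2,h1,h3⟩)))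
    · exact Or.inr (Or.inr (Or.inl ⟨h2,h1,h3⟩))
    · exact Or.inr (Or.inr (Or.inr (Or.inr (Or.inr ⟨h2,h1,h3⟩))))
    · exact Or.inr (Or.inr (Or.inr (Or.inr (Or.inl ⟨h2,h1,h3⟩))))
  loopless := by
    constructor
    intro u h
    rcases h with ⟨h1,h2,_⟩|⟨h1,h2,_⟩|⟨h1,h2,_⟩|⟨h1,h2,_⟩|⟨h1,h2,_⟩|⟨h1,h2,_⟩ <;>
      exact absurd (h1.symm.trans h2) (by decide)

variable {H : Finset (Finset ℕ)} {n t i j l : ℕ}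

lemma adj01 {u v : Fin 3 × Fin (n+1)} (h : (TG H n t i j l).Adj u v)
    (hu : u.1 = 0) (hv : v.1 = 1) : ∃ c, Typed H t i j l u.2 v.2 c := by
  rcases h with ⟨h1,h2,h3⟩|⟨h1,h2,h3⟩|⟨h1,h2,h3⟩|⟨h1,h2,h3⟩|⟨h1,h2,h3⟩|⟨h1,h2,h3⟩ <;>
    first
    | exact h3
    | exact absurd (hu.symm.trans h1) (by decide)
    | exact absurd (hv.symm.trans h2) (by decide)

lemma adj12 {u v : Fin 3 × Fin (n+1)} (h : (TG H n t i j l).Adj u v)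
    (hu : u.1 = 1) (hv : v.1 = 2) : ∃ a, Typed H t i j l a u.2 v.2 := by
  rcases h with ⟨h1,h2,h3⟩|⟨h1,h2,h3⟩|⟨h1,h2,h3⟩|⟨h1,h2,h3⟩|⟨h1,h2,h3⟩|⟨h1,h2,h3⟩ <;>
    first
    | exact h3
    | exact absurd (hu.symm.trans h1) (by decide)
    | exact absurd (hv.symm.trans h2) (by decide)

lemma adj02 {u v : Fin 3 × Fin (n+1)} (h : (TG H n t i j l).Adj u v)
    (hu : u.1 = 0) (hv : v.1 = 2) : ∃ b, Typed H t i j l u.2 b v.2 := by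
  rcases h with ⟨h1,h2,h3⟩|⟨h1,h2,h3⟩|⟨h1,h2,h3⟩|⟨h1,h2,h3⟩|⟨h1,h2,h3⟩|⟨h1,h2,h3⟩ <;>
    first
    | exact h3
    | exact absurd (hu.symm.trans h1) (by decide)
    | exact absurd (hv.symm.trans h2) (by decide)

lemma adj_parts_ne {u v : Fin 3 × Fin (n+1)} (h : (TG H n t i j l).Adj u v) : u.1 ≠ v.1 := by
  rcases h with ⟨h1,h2,_⟩|⟨h1,h2,_⟩|⟨h1,h2,_⟩|⟨h1,h2,_⟩|⟨h1,h2,_⟩|⟨h1,h2,_⟩ <;>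
    · rw [h1, h2]; decide

lemma classify_norm (hnc : ¬ Concl H) (hij : i < j) (hjl : j < l)
    {u v w : Fin 3 × Fin (n+1)}
    (huv : (TG H n t i j l).Adj u v) (hvw : (TG H n t i j l).Adj v w)
    (huw : (TG H n t i j l).Adj u w)
    (hu : u.1 = 0) (hv : v.1 = 1) (hw : w.1 = 2) :
    Typed H t i j l u.2 v.2 w.2 := by
  obtain ⟨x, T1⟩ := adj01 huv hu hv
  obtain ⟨y, T2⟩ := adj12 hvw hv hw
  obtain ⟨z, T3⟩ := adj02 huw hu hw
  obtain ⟨m1, o1, o2, d1, d2, d3⟩ := T1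
  obtain ⟨m2, o3, o4, d4, d5, d6⟩ := T2
  obtain ⟨m3, o5, o6, d7, d8, d9⟩ := T3
  have haz : (u.2 : ℕ) < z := lt_of_div_lt (by rw [d1, d8]; exact hij)
  have hyz : y < z := lt_of_div_lt (by rw [d4, d8]; exact hij)
  have hbc : (v.2 : ℕ) < (w.2 : ℕ) := lt_of_div_lt (by rw [d2, d6]; exact hjl)
  have hzx : z < x := lt_of_div_lt (by rw [d8, d3]; exact hjl)
  have hzc : z < (w.2 : ℕ) := lt_of_div_lt (by rw [d8, d6]; exact hjl)
  obtain ⟨e1, e2, e3⟩ := tri hnc o1 haz o3 hyz o2 hbc hzx hzc m1 m2 m3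
  exact ⟨by rw [← e3]; exact m1, o1, hbc, d1, d2, d6⟩

lemma clique_classify (hnc : ¬ Concl H) (hij : i < j) (hjl : j < l)
    {S : Finset (Fin 3 × Fin (n+1))} (hS : (TG H n t i j l).IsNClique 3 S) :
    ∃ a b c : Fin (n+1), Typed H t i j l a b c ∧
      S = {((0 : Fin 3), a), ((1 : Fin 3), b), ((2 : Fin 3), c)} := by
  rw [SimpleGraph.is3Clique_iff] at hS
  obtain ⟨u, v, w, huv, huw, hvw, rfl⟩ := hS
  have h3 : ∀ p : Fin 3, p = 0 ∨ p = 1 ∨ p = 2 := by decide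
  have pneuv := adj_parts_ne huv
  have pneuw := adj_parts_ne huw
  have pnevw := adj_parts_ne hvw
  have seq : ∀ a b c : Fin 3 × Fin (n+1),
      ({u,v,w} : Finset _) = {a,b,c} → a.1 = 0 → b.1 = 1 → c.1 = 2 →
      (TG H n t i j l).Adj a b → (TG H n t i j l).Adj b c → (TG H n t i j l).Adj a c →
      ∃ a' b' c' : Fin (n+1), Typed H t i j l a' b' c' ∧
        ({u,v,w} : Finset _) = {((0 : Fin 3), a'), ((1 : Fin 3), b'), ((2 : Fin 3), c')} := by
    intro a b c hset ha hb hc hab hbc hac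
    refine ⟨a.2, b.2, c.2, classify_norm hnc hij hjl hab hbc hac ha hb hc, ?_⟩
    rw [hset]
    congr 1
    · rw [← ha]
    congr 1
    · rw [← hb]
    · rw [← hc]
  rcases h3 u.1 with hu|hu|hu <;> rcases h3 v.1 with hv|hv|hv <;> rcases h3 w.1 with hw|hw|hw <;>
    first
    | exact absurd (hu.trans hv.symm) pneuv
    | exact absurd (hu.trans hw.symm) pneuw
    | exact absurd (hv.trans hw.symm) pnevw
    | exact seq u v w rfl hu hv hw huv hvw huw
    | exact seq u w v (by ext p; simp [Finset.mem_insert]; tauto) hu hw hv huw hvw.symm huv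
    | exact seq v u w (by ext p; simp [Finset.mem_insert]; tauto) hv hu hw huv.symm huw hvw
    | exact seq v w u (by ext p; simp [Finset.mem_insert]; tauto) hv hw hu hvw huw.symm huv.symm
    | exact seq w u v (by ext p; simp [Finset.mem_insert]; tauto) hw hu hv huw.symm huv hvw.symm
    | exact seq w v u (by ext p; simp [Finset.mem_insert]; tauto) hw hv hu hvw.symm huv.symm huw.symm

lemma typed_clique {a b c : ℕ} {va vb vc : Fin (n+1)} (hT : Typed H t i j l a b c)
    (hva : (va : ℕ) = a) (hvb : (vb : ℕ) = b) (hvc : (vc : ℕ) = c) :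
    (TG H n t i j l).IsNClique 3 {((0 : Fin 3), va), ((1 : Fin 3), vb), ((2 : Fin 3), vc)} := by
  subst hva hvb hvc
  rw [SimpleGraph.is3Clique_triple_iff]
  refine ⟨Or.inl ⟨rfl, rfl, _, hT⟩, ?_, ?_⟩
  · exact Or.inr (Or.inr (Or.inr (Or.inr (Or.inl ⟨rfl, rfl, _, hT⟩))))
  · exact Or.inr (Or.inr (Or.inl ⟨rfl, rfl, _, hT⟩))

lemma exists_triple {e : Finset ℕ} (h : e.card = 3) :
    ∃ a b c : ℕ, a < b ∧ b < c ∧ e = {a,b,c} := by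
  rw [Finset.card_eq_three] at h
  obtain ⟨p, q, r, hpq, hpr, hqr, rfl⟩ := h
  obtain h1 | h1 := hpq.lt_or_gt <;> obtain h2 | h2 := hpr.lt_or_gt <;>
    obtain h3 | h3 := hqr.lt_or_gt
  · exact ⟨p, q, r, h1, h3, rfl⟩
  · exact ⟨p, r, q, h2, h3, by ext v; simp; omega⟩
  · exact absurd (h1.trans h3) (by omega)
  · exact ⟨r, p, q, h2, h1, by ext v; simp; omega⟩
  · exact ⟨q, p, r, h1, h2, by ext v; simp; omega⟩
  · exact absurd (h2.trans h3) (by omega)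
  · exact ⟨q, r, p, h3, h2, by ext v; simp; omega⟩
  · exact ⟨r, q, p, h3, h1, by ext v; simp; omega⟩

/-- smallest element of a finset (0 for the empty set). -/
noncomputable def elo (e : Finset ℕ) : ℕ := if h : e.Nonempty then e.min' h else 0
/-- largest element of a finset. -/
noncomputable def ehi (e : Finset ℕ) : ℕ := if h : e.Nonempty then e.max' h else 0
/-- middle element of a 3-element finset. -/
noncomputable def emd (e : Finset ℕ) : ℕ := e.sum id - elo e - ehi e

lemma trip_spec {a b c : ℕ} (h1 : a < b) (h2 : b < c) :
    elo {a,b,c} = a ∧ emd {a,b,c} = b ∧ ehi {a,b,c} = c := by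
  have hane : a ∉ ({b,c} : Finset ℕ) := by simp; omega
  have hbne : b ∉ ({c} : Finset ℕ) := by simp; omega
  have hne : ({a,b,c} : Finset ℕ).Nonempty := ⟨a, by simp⟩
  have hsum : ({a,b,c} : Finset ℕ).sum id = a + (b + c) := by
    rw [Finset.sum_insert hane, Finset.sum_insert hbne, Finset.sum_singleton]; rfl
  have hlo : elo {a,b,c} = a := by
    rw [elo, dif_pos hne]
    refine le_antisymm (Finset.min'_le _ a (by simp)) (Finset.le_min' _ _ _ ?_)
    intro y hy; simp at hy; omega
  have hhi : ehi {a,b,c} = c := by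
    rw [ehi, dif_pos hne]
    refine le_antisymm (Finset.max'_le _ _ _ ?_) (Finset.le_max' _ c (by simp))
    intro y hy; simp at hy; omega
  refine ⟨hlo, ?_, hhi⟩
  simp only [emd, hsum, hlo, hhi]; omega

lemma div_sub_lt {a b t : ℕ} (ht : 0 < t) (ha : 1 ≤ a) (hab : a ≤ b)
    (h : (a-1)/t = (b-1)/t) : b - a < t := by
  have h1 : t * ((a-1)/t) ≤ a-1 := by rw [Nat.mul_comm]; exact Nat.div_mul_le_self _ _
  have e2 := Nat.div_add_mod (b-1) t
  rw [← h] at e2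
  have m2 := Nat.mod_lt (b-1) ht
  generalize t * ((a-1)/t) = M at h1 e2
  omega

lemma card_low_pairs {H : Finset (Finset ℕ)} (hnc : ¬ Concl H) {n t : ℕ} (ht : 0 < t)
    (hH : ∀ e ∈ H, e ⊆ Finset.Icc 1 n ∧ e.card = 3) :
    (H.filter fun e => ∃ a b c : ℕ, a < b ∧ b < c ∧ e = {a,b,c} ∧ (a-1)/t = (b-1)/t).card
      ≤ n * t := by
  classical
  refine le_trans (Finset.card_le_card_of_injOn
    (t := Finset.Icc 1 n ×ˢ Finset.Icc 1 t)
    (fun e => (elo e, emd e - elo e)) ?_ ?_)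
    (by simp [Finset.card_product, Nat.card_Icc])
  · intro e he
    rw [Finset.mem_coe, Finset.mem_filter] at he
    obtain ⟨heH, a, b, c, h1, h2, rfl, hdiv⟩ := he
    obtain ⟨la, mb, hc2⟩ := trip_spec h1 h2
    have hsub := (hH _ heH).1
    have hamem : a ∈ Finset.Icc 1 n := hsub (by simp)
    rw [Finset.mem_Icc] at hamem
    have hblt : b - a < t := div_sub_lt ht (by omega) (by omega) hdiv
    dsimp only
    rw [la, mb, Finset.mem_coe, Finset.mem_product, Finset.mem_Icc, Finset.mem_Icc]
    omega
  · intro e he e' he' heq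
    rw [Finset.mem_coe, Finset.mem_filter] at he he'
    obtain ⟨heH, a, b, c, h1, h2, rfl, hdiv⟩ := he
    obtain ⟨heH', a', b', c', h1', h2', rfl, hdiv'⟩ := he'
    obtain ⟨la, mb, -⟩ := trip_spec h1 h2
    obtain ⟨la', mb', -⟩ := trip_spec h1' h2'
    dsimp only at heq
    rw [la, mb] at heq; rw [la', mb'] at heq
    rw [Prod.mk.injEq] at heq
    have haa : a = a' := heq.1
    have hbb : b = b' := by omega
    subst haa hbb
    have := inj_low hnc h1 h2 h2' heH heH'
    rw [this]

lemma card_high_pairs {H : Finset (Finset ℕ)} (hnc : ¬ Concl H) {n t : ℕ} (ht : 0 < t)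
    (hH : ∀ e ∈ H, e ⊆ Finset.Icc 1 n ∧ e.card = 3) :
    (H.filter fun e => ∃ a b c : ℕ, a < b ∧ b < c ∧ e = {a,b,c} ∧ (b-1)/t = (c-1)/t).card
      ≤ n * t := by
  classical
  refine le_trans (Finset.card_le_card_of_injOn
    (t := Finset.Icc 1 n ×ˢ Finset.Icc 1 t)
    (fun e => (emd e, ehi e - emd e)) ?_ ?_)
    (by simp [Finset.card_product, Nat.card_Icc])
  · intro e he
    rw [Finset.mem_coe, Finset.mem_filter] at he
    obtain ⟨heH, a, b, c, h1, h2, rfl, hdiv⟩ := he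
    obtain ⟨la, mb, hc2⟩ := trip_spec h1 h2
    have hsub := (hH _ heH).1
    have hbmem : b ∈ Finset.Icc 1 n := hsub (by simp)
    rw [Finset.mem_Icc] at hbmem
    have hclt : c - b < t := div_sub_lt ht (by omega) (by omega) hdiv
    dsimp only
    rw [mb, hc2, Finset.mem_coe, Finset.mem_product, Finset.mem_Icc, Finset.mem_Icc]
    omega
  · intro e he e' he' heq
    rw [Finset.mem_coe, Finset.mem_filter] at he he'
    obtain ⟨heH, a, b, c, h1, h2, rfl, hdiv⟩ := he
    obtain ⟨heH', a', b', c', h1', h2', rfl, hdiv'⟩ := he'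
    obtain ⟨-, mb, hc2⟩ := trip_spec h1 h2
    obtain ⟨-, mb', hc2'⟩ := trip_spec h1' h2'
    dsimp only at heq
    rw [mb, hc2] at heq; rw [mb', hc2'] at heq
    rw [Prod.mk.injEq] at heq
    have hbb : b = b' := heq.1
    have hcc : c = c' := by omega
    subst hbb hcc
    have := inj_high hnc h1 h1' h2 heH heH'
    rw [this]

lemma far_aux {H : Finset (Finset ℕ)} {n t i j l : ℕ} (hnc : ¬ Concl H)
    {T : Finset (Finset ℕ)}
    (hT : ∀ e ∈ T, ∃ a b c : ℕ, Typed H t i j l a b c ∧ e = {a,b,c} ∧ c ≤ n)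
    ⦃s : Finset (Sym2 (Fin 3 × Fin (n+1)))⦄
    (hfree : ((TG H n t i j l).deleteEdges ↑s).CliqueFree 3) : T.card ≤ s.card := by
  classical
  have key : ∀ e ∈ T, ∃ q, q ∈ s ∧
      ∃ a b c : ℕ, ∃ (ha : a < n+1) (hb : b < n+1) (hc : c < n+1),
        Typed H t i j l a b c ∧ e = {a,b,c} ∧
        (q = s(((0:Fin 3), (⟨a, ha⟩ : Fin (n+1))), ((1:Fin 3), (⟨b, hb⟩ : Fin (n+1)))) ∨
         q = s(((0:Fin 3), (⟨a, ha⟩ : Fin (n+1))), ((2:Fin 3), (⟨c, hc⟩ : Fin (n+1)))) ∨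
         q = s(((1:Fin 3), (⟨b, hb⟩ : Fin (n+1))), ((2:Fin 3), (⟨c, hc⟩ : Fin (n+1))))) := by
    intro e he
    obtain ⟨a, b, c, hTy, rfl, hcn⟩ := hT e he
    have ho1 : a < b := hTy.2.1
    have ho2 : b < c := hTy.2.2.1
    have ha : a < n+1 := by omega
    have hb : b < n+1 := by omega
    have hc : c < n+1 := by omega
    have hclq := typed_clique (va := ⟨a, ha⟩) (vb := ⟨b, hb⟩) (vc := ⟨c, hc⟩) hTy rfl rfl rfl
    rw [SimpleGraph.is3Clique_triple_iff] at hclq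
    obtain ⟨hAB, hAC, hBC⟩ := hclq
    by_cases h1 : s(((0:Fin 3), (⟨a, ha⟩ : Fin (n+1))), ((1:Fin 3), ⟨b, hb⟩)) ∈ s
    · exact ⟨_, h1, a, b, c, ha, hb, hc, hTy, rfl, Or.inl rfl⟩
    by_cases h2 : s(((0:Fin 3), (⟨a, ha⟩ : Fin (n+1))), ((2:Fin 3), ⟨c, hc⟩)) ∈ s
    · exact ⟨_, h2, a, b, c, ha, hb, hc, hTy, rfl, Or.inr (Or.inl rfl)⟩
    by_cases h3 : s(((1:Fin 3), (⟨b, hb⟩ : Fin (n+1))), ((2:Fin 3), ⟨c, hc⟩)) ∈ s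
    · exact ⟨_, h3, a, b, c, ha, hb, hc, hTy, rfl, Or.inr (Or.inr rfl)⟩
    exfalso
    apply hfree {((0:Fin 3), (⟨a, ha⟩ : Fin (n+1))), ((1:Fin 3), ⟨b, hb⟩), ((2:Fin 3), ⟨c, hc⟩)}
    rw [SimpleGraph.is3Clique_triple_iff]
    simp only [SimpleGraph.deleteEdges_adj, Finset.mem_coe]
    exact ⟨⟨hAB, h1⟩, ⟨hAC, h2⟩, ⟨hBC, h3⟩⟩
  choose! f hf using key
  refine Finset.card_le_card_of_injOn f (fun e he => (hf e he).1) ?_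
  intro e he e' he' heq
  rw [Finset.mem_coe] at he he'
  obtain ⟨-, a, b, c, ha, hb, hc, Ty, rfl, hq⟩ := hf _ he
  obtain ⟨-, a', b', c', ha', hb', hc', Ty', rfl, hq'⟩ := hf _ he'
  rcases hq with hq | hq | hq <;> rcases hq' with hq' | hq' | hq' <;>
    have hqq := hq.symm.trans (heq.trans hq') <;>
    simp only [Sym2.eq_iff, Prod.mk.injEq, Fin.mk.injEq] at hqq <;>
    simp at hqq
  · obtain ⟨haa, hbb⟩ := hqq
    subst haa; subst hbb
    rw [inj_low hnc Ty.2.1 Ty.2.2.1 Ty'.2.2.1 Ty.1 Ty'.1]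
  · obtain ⟨haa, hcc⟩ := hqq
    subst haa; subst hcc
    rw [inj_outer hnc Ty.2.1 Ty.2.2.1 Ty'.2.1 Ty'.2.2.1 Ty.1 Ty'.1]
  · obtain ⟨hbb, hcc⟩ := hqq
    subst hbb; subst hcc
    rw [inj_high hnc Ty.2.1 Ty'.2.1 Ty.2.2.1 Ty.1 Ty'.1]

lemma clique_count {H : Finset (Finset ℕ)} {n t i j l : ℕ} (hnc : ¬ Concl H)
    (hij : i < j) (hjl : j < l) :
    ((TG H n t i j l).cliqueFinset 3).card ≤ (n+1) * (n+1) := by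
  classical
  have hmain : ∀ S ∈ (TG H n t i j l).cliqueFinset 3,
      ∃ p : Fin (n+1) × Fin (n+1) × Fin (n+1),
        Typed H t i j l p.1 p.2.1 p.2.2 ∧
        S = {((0:Fin 3), p.1), ((1:Fin 3), p.2.1), ((2:Fin 3), p.2.2)} := by
    intro S hS
    rw [SimpleGraph.mem_cliqueFinset_iff] at hS
    obtain ⟨a, b, c, hTy, hSeq⟩ := clique_classify hnc hij hjl hS
    exact ⟨(a, b, c), hTy, hSeq⟩
  refine le_trans (Finset.card_le_card_of_injOn
      (t := (Finset.univ : Finset (Fin (n+1) × Fin (n+1))))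
      (fun S => if h : ∃ p : Fin (n+1) × Fin (n+1) × Fin (n+1),
          Typed H t i j l p.1 p.2.1 p.2.2 ∧
          S = {((0:Fin 3), p.1), ((1:Fin 3), p.2.1), ((2:Fin 3), p.2.2)}
        then (h.choose.1, h.choose.2.1) else default)
      (fun _ _ => Finset.mem_univ _) ?_) (by simp)
  intro S hS S' hS' heq
  rw [Finset.mem_coe] at hS hS'
  have h1 := hmain S hS
  have h2 := hmain S' hS'
  dsimp only at heq
  rw [dif_pos h1, dif_pos h2] at heq
  obtain ⟨Ty1, Seq1⟩ := h1.choose_spec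
  obtain ⟨Ty2, Seq2⟩ := h2.choose_spec
  rw [Prod.mk.injEq] at heq
  have hab : h1.choose.1 = h2.choose.1 := heq.1
  have hbb : h1.choose.2.1 = h2.choose.2.1 := heq.2
  have hmem2 : ({(h1.choose.1 : ℕ), (h1.choose.2.1 : ℕ), (h2.choose.2.2 : ℕ)} : Finset ℕ) ∈ H := by
    rw [hab, hbb]; exact Ty2.1
  have hlt2 : (h1.choose.2.1 : ℕ) < (h2.choose.2.2 : ℕ) := by
    rw [hbb]; exact Ty2.2.2.1
  have hcc : (h1.choose.2.2 : ℕ) = (h2.choose.2.2 : ℕ) :=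
    inj_low hnc Ty1.2.1 Ty1.2.2.1 hlt2 Ty1.1 hmem2
  have hcc' : h1.choose.2.2 = h2.choose.2.2 := Fin.ext hcc
  rw [Seq1, Seq2, hab, hbb, hcc']

end ORS

set_option maxHeartbeats 2000000 in
/-- Theorem 6 (ordered Ruzsa–Szemerédi): for every ε > 0 there is n₀ such that every
ordered 3-graph on [n], n ≥ n₀, with at least ε·n² edges contains an interval
3-partite copy of I₂ (two edges sharing exactly two vertices) or of the loose
triangle T₃. -/
theorem ordered_ruzsa_szemeredi (ε : ℝ) (hε : 0 < ε) :
    ∃ n₀ : ℕ, ∀ n : ℕ, n₀ ≤ n → ∀ H : Finset (Finset ℕ),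
      (∀ e ∈ H, e ⊆ Finset.Icc 1 n ∧ e.card = 3) →
      ε * (n : ℝ) ^ 2 ≤ (H.card : ℝ) →
      (∃ e ∈ H, ∃ f ∈ H, e ≠ f ∧ (e ∩ f).card = 2 ∧
        IntervalPartiteExact 3 {e, f}) ∨
      (∃ e ∈ H, ∃ f ∈ H, ∃ g ∈ H, (e ∩ f).card = 1 ∧ (f ∩ g).card = 1 ∧
        (g ∩ e).card = 1 ∧ e ∩ f ∩ g = ∅ ∧
        IntervalPartiteExact 3 {e, f, g}) := by
  classical
  set ε' : ℝ := min ε 1 with hε'def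
  have hε'pos : 0 < ε' := lt_min hε one_pos
  have hε'le1 : ε' ≤ 1 := min_le_right _ _
  set k : ℕ := ⌈(8:ℝ)/ε'⌉₊ with hkdef
  have hk8 : (8:ℝ)/ε' ≤ (k:ℝ) := Nat.le_ceil _
  have hkpos : 0 < k := Nat.ceil_pos.mpr (by positivity)
  have hkR : (0:ℝ) < k := by exact_mod_cast hkpos
  have hek : 8 ≤ ε' * k := by
    rw [div_le_iff₀ hε'pos] at hk8; linarith
  set δ : ℝ := ε' / (72 * (k:ℝ)^3) with hδdef
  have hδpos : 0 < δ := by positivity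
  have hδle1 : δ ≤ 1 := by
    rw [hδdef, div_le_one (by positivity)]
    have h1 : (1:ℝ) ≤ (k:ℝ) := by exact_mod_cast hkpos
    have hk2 : (1:ℝ) ≤ (k:ℝ)^2 := by nlinarith
    have hk3 : (1:ℝ) ≤ (k:ℝ)^3 := by nlinarith
    linarith
  set B : ℝ := SimpleGraph.triangleRemovalBound δ with hBdef
  have hBpos : 0 < B := SimpleGraph.triangleRemovalBound_pos hδpos
  refine ⟨⌈(16:ℝ)/ε'⌉₊ + ⌈1/(27*B)⌉₊ + 2, ?_⟩
  intro n hn H hH hcard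
  by_contra hcon
  have hnc : ¬ ORS.Concl H := hcon
  have hn2 : 2 ≤ n := by omega
  have hnR : (2:ℝ) ≤ n := by exact_mod_cast hn2
  have hn16 : (16:ℝ)/ε' ≤ n := by
    refine le_trans (Nat.le_ceil _) ?_
    exact_mod_cast (by omega : ⌈(16:ℝ)/ε'⌉₊ ≤ n)
  have h16 : 16 ≤ ε' * n := by rw [div_le_iff₀ hε'pos] at hn16; linarith
  have hεn : ε' * (n:ℝ)^2 ≤ (H.card : ℝ) :=
    le_trans (mul_le_mul_of_nonneg_right (min_le_left ε 1) (by positivity)) hcard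
  set t : ℕ := (n-1)/k + 1 with htdef
  have htpos : 0 < t := Nat.succ_pos _
  -- split H into low-pair-close, high-pair-close, and spread edges
  set SA := H.filter
    (fun e => ∃ a b c : ℕ, a < b ∧ b < c ∧ e = {a,b,c} ∧ (a-1)/t = (b-1)/t) with hSA
  set SB := H.filter
    (fun e => ∃ a b c : ℕ, a < b ∧ b < c ∧ e = {a,b,c} ∧ (b-1)/t = (c-1)/t) with hSB
  set SC := H.filter
    (fun e => ∃ a b c : ℕ, a < b ∧ b < c ∧ e = {a,b,c} ∧
      (a-1)/t < (b-1)/t ∧ (b-1)/t < (c-1)/t) with hSC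
  have hcover : H ⊆ SA ∪ SB ∪ SC := by
    intro e he
    obtain ⟨hsub, h3⟩ := hH e he
    obtain ⟨a, b, c, h1, h2, rfl⟩ := ORS.exists_triple h3
    have d1 : (a-1)/t ≤ (b-1)/t := Nat.div_le_div_right (by omega)
    have d2 : (b-1)/t ≤ (c-1)/t := Nat.div_le_div_right (by omega)
    rcases eq_or_lt_of_le d1 with hd1 | hd1
    · exact Finset.mem_union_left _ (Finset.mem_union_left _
        (Finset.mem_filter.mpr ⟨he, a, b, c, h1, h2, rfl, hd1⟩))
    rcases eq_or_lt_of_le d2 with hd2 | hd2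
    · exact Finset.mem_union_left _ (Finset.mem_union_right _
        (Finset.mem_filter.mpr ⟨he, a, b, c, h1, h2, rfl, hd2⟩))
    · exact Finset.mem_union_right _
        (Finset.mem_filter.mpr ⟨he, a, b, c, h1, h2, rfl, hd1, hd2⟩)
  have hsplit : H.card ≤ SA.card + SB.card + SC.card := by
    refine le_trans (Finset.card_le_card hcover) ?_
    refine le_trans (Finset.card_union_le _ _) ?_
    exact Nat.add_le_add_right (Finset.card_union_le _ _) _
  have hAle : SA.card ≤ n * t := ORS.card_low_pairs hnc htpos hH
  have hBle : SB.card ≤ n * t := ORS.card_high_pairs hnc htpos hH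
  -- pigeonhole over types
  set τ : Finset ℕ → ℕ × ℕ × ℕ :=
    fun e => ((ORS.elo e - 1)/t, (ORS.emd e - 1)/t, (ORS.ehi e - 1)/t) with hτ
  set typ : Finset (ℕ × ℕ × ℕ) := Finset.range k ×ˢ Finset.range k ×ˢ Finset.range k with htyp
  have hidxlt : ∀ x : ℕ, x ≤ n → (x-1)/t < k := by
    intro x hx
    have hkt : n - 1 < k * t := by
      have h0 := Nat.div_add_mod (n-1) k
      have h1 : k * t = k * ((n-1)/k) + k := by rw [htdef, Nat.mul_add, Nat.mul_one]
      have h2 := Nat.mod_lt (n-1) hkpos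
      omega
    have h3 : (x-1)/t ≤ (n-1)/t := Nat.div_le_div_right (by omega)
    have hkt' : n - 1 < t * k := by rw [Nat.mul_comm] at hkt; exact hkt
    have h4 : (n-1)/t < k := Nat.div_lt_of_lt_mul hkt'
    omega
  have hmapsto : ∀ e ∈ SC, τ e ∈ typ := by
    intro e he
    rw [hSC, Finset.mem_filter] at he
    obtain ⟨heH, a, b, c, h1, h2, rfl, hd1, hd2⟩ := he
    obtain ⟨la, mb, hc2⟩ := ORS.trip_spec h1 h2
    have hsub := (hH _ heH).1
    have hcn : c ≤ n := by
      have := hsub (show c ∈ ({a,b,c} : Finset ℕ) by simp)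
      rw [Finset.mem_Icc] at this; omega
    rw [htyp, hτ]
    dsimp only
    rw [la, mb, hc2, Finset.mem_product, Finset.mem_product]
    refine ⟨Finset.mem_range.mpr (hidxlt a (by omega)), Finset.mem_range.mpr (hidxlt b (by omega)),
      Finset.mem_range.mpr (hidxlt c hcn)⟩
  obtain ⟨y₀, hy₀, hy₀max⟩ := Finset.exists_max_image typ
    (fun y => (SC.filter (fun e => τ e = y)).card)
    ⟨(0,0,0), by simp [htyp, Finset.mem_product, hkpos]⟩
  obtain ⟨i, j, l⟩ := y₀
  set T := SC.filter (fun e => τ e = (i, j, l)) with hT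
  have hpig : SC.card ≤ k^3 * T.card := by
    rw [Finset.card_eq_sum_card_fiberwise hmapsto]
    refine le_trans (Finset.sum_le_card_nsmul typ _ T.card
      (fun y hy => hy₀max y hy)) ?_
    have h2 : typ.card = k^3 := by
      rw [htyp, Finset.card_product, Finset.card_product, Finset.card_range]; ring
    rw [h2, smul_eq_mul]
  -- real lower bound on T.card
  have htR : (t:ℝ) ≤ (n:ℝ)/k + 1 := by
    have h1 : (t:ℝ) = ((n-1)/k : ℕ) + 1 := by rw [htdef]; push_cast; ring
    rw [h1]
    have h2 : (((n-1)/k : ℕ) : ℝ) ≤ ((n-1 : ℕ) : ℝ)/(k:ℝ) := Nat.cast_div_le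
    have h3 : ((n-1 : ℕ) : ℝ) ≤ (n:ℝ) := by
      have : (n-1 : ℕ) ≤ n := by omega
      exact_mod_cast this
    have h4 : ((n-1 : ℕ) : ℝ)/(k:ℝ) ≤ (n:ℝ)/(k:ℝ) := by gcongr
    linarith
  have h2nt : 2*(n:ℝ)*t ≤ (ε'/2) * (n:ℝ)^2 := by
    have hkinv : 1/(k:ℝ) ≤ ε'/8 := by
      rw [div_le_div_iff₀ hkR (by norm_num)]
      linarith
    have h1 : 2*(n:ℝ)*t ≤ 2*(n:ℝ)*((n:ℝ)/k + 1) :=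
      mul_le_mul_of_nonneg_left htR (by positivity)
    have h3 : 2*(n:ℝ)^2/k ≤ ε'*(n:ℝ)^2/4 := by
      have hm := mul_le_mul_of_nonneg_left hkinv
        (show (0:ℝ) ≤ 2*(n:ℝ)^2 by positivity)
      calc 2*(n:ℝ)^2/k = 2*(n:ℝ)^2 * (1/(k:ℝ)) := by ring
        _ ≤ 2*(n:ℝ)^2 * (ε'/8) := hm
        _ = ε'*(n:ℝ)^2/4 := by ring
    have h4 : 2*(n:ℝ) ≤ ε'*(n:ℝ)^2/8 := by
      have hm := mul_le_mul_of_nonneg_right h16 (show (0:ℝ) ≤ (n:ℝ) by positivity)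
      nlinarith [hm, hnR]
    have h5 : 2*(n:ℝ)*((n:ℝ)/k + 1) = 2*(n:ℝ)^2/k + 2*(n:ℝ) := by ring
    linarith
  have hSCR : (ε'/2) * (n:ℝ)^2 ≤ (SC.card : ℝ) := by
    have hsplitR : (H.card : ℝ) ≤ (SA.card : ℝ) + SB.card + SC.card := by exact_mod_cast hsplit
    have hAR : (SA.card : ℝ) ≤ (n:ℝ)*t := by exact_mod_cast hAle
    have hBR : (SB.card : ℝ) ≤ (n:ℝ)*t := by exact_mod_cast hBle
    nlinarith
  have hTR : ε' * (n:ℝ)^2 ≤ 2 * (k:ℝ)^3 * T.card := by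
    have hp : (SC.card : ℝ) ≤ (k:ℝ)^3 * T.card := by exact_mod_cast hpig
    linarith
  have hTpos : 0 < T.card := by
    rcases Nat.eq_zero_or_pos T.card with h0 | h0
    · exfalso; rw [h0] at hTR; push_cast at hTR; nlinarith
    · exact h0
  -- extract i < j < l and the Typed description of T
  have hTfacts : ∀ e ∈ T, ∃ a b c : ℕ,
      ORS.Typed H t i j l a b c ∧ e = {a,b,c} ∧ c ≤ n := by
    intro e he
    rw [hT, Finset.mem_filter] at he
    obtain ⟨heSC, hτe⟩ := he
    rw [hSC, Finset.mem_filter] at heSC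
    obtain ⟨heH, a, b, c, h1, h2, rfl, hd1, hd2⟩ := heSC
    obtain ⟨la, mb, hc2⟩ := ORS.trip_spec h1 h2
    rw [hτ] at hτe
    dsimp only at hτe
    rw [la, mb, hc2, Prod.mk.injEq, Prod.mk.injEq] at hτe
    have hsub := (hH _ heH).1
    have hcn : c ≤ n := by
      have := hsub (show c ∈ ({a,b,c} : Finset ℕ) by simp)
      rw [Finset.mem_Icc] at this; omega
    exact ⟨a, b, c, ⟨heH, h1, h2, hτe.1, hτe.2.1, hτe.2.2⟩, rfl, hcn⟩
  have hijl : i < j ∧ j < l := by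
    obtain ⟨e₀, he₀⟩ := Finset.card_pos.mp hTpos
    have he₀T := he₀
    rw [hT, Finset.mem_filter] at he₀
    obtain ⟨heSC, hτe⟩ := he₀
    rw [hSC, Finset.mem_filter] at heSC
    obtain ⟨heH, a, b, c, h1, h2, heq, hd1, hd2⟩ := heSC
    subst heq
    obtain ⟨la, mb, hc2⟩ := ORS.trip_spec h1 h2
    rw [hτ] at hτe
    dsimp only at hτe
    rw [la, mb, hc2, Prod.mk.injEq, Prod.mk.injEq] at hτe
    omega
  -- the tripartite graph is far from triangle-free
  have hfar : (ORS.TG H n t i j l).FarFromTriangleFree δ := by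
    intro s hs hfree
    have hcT : T.card ≤ s.card := ORS.far_aux hnc hTfacts hfree
    have hcV : Fintype.card (Fin 3 × Fin (n+1)) = 3*(n+1) := by simp
    rw [hcV]
    have hmain2 : δ * ((3*((n:ℝ)+1))^2) ≤ (T.card : ℝ) := by
      rw [hδdef, div_mul_eq_mul_div, div_le_iff₀ (by positivity)]
      have hgeo : (0:ℝ) ≤ 3*(n:ℝ)^2 - 2*(n:ℝ) - 1 := by nlinarith [hnR]
      nlinarith [hTR, mul_nonneg hε'pos.le hgeo]
    calc δ * (((3*(n+1))^2 : ℕ) : ℝ) = δ * ((3*((n:ℝ)+1))^2) := by push_cast; ring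
      _ ≤ (T.card : ℝ) := hmain2
      _ ≤ (s.card : ℝ) := by exact_mod_cast hcT
  have hrem := hfar.le_card_cliqueFinset
  have hcc := ORS.clique_count (n := n) (t := t) hnc hijl.1 hijl.2
  have hcV : Fintype.card (Fin 3 × Fin (n+1)) = 3*(n+1) := by simp
  rw [hcV] at hrem
  have hcliqR : ((((ORS.TG H n t i j l)).cliqueFinset 3).card : ℝ) ≤ ((n:ℝ)+1)*((n:ℝ)+1) := by
    exact_mod_cast hcc
  have hchain : B * (3*((n:ℝ)+1))^3 ≤ ((n:ℝ)+1)*((n:ℝ)+1) := by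
    have h1 : ((3*(n+1) : ℕ) : ℝ) = 3*((n:ℝ)+1) := by push_cast; ring
    calc B * (3*((n:ℝ)+1))^3
        = SimpleGraph.triangleRemovalBound δ * (((3*(n+1) : ℕ)) : ℝ)^3 := by
          rw [hBdef, h1]
      _ ≤ _ := hrem
      _ ≤ _ := hcliqR
  have hnB : 1/(27*B) ≤ (n:ℝ) := by
    refine le_trans (Nat.le_ceil _) ?_
    exact_mod_cast (by omega : ⌈1/(27*B)⌉₊ ≤ n)
  have h27 : 1 ≤ (n:ℝ)*(27*B) := by
    rw [div_le_iff₀ (by positivity)] at hnB; linarith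
  have hXpos : (0:ℝ) < ((n:ℝ)+1)*((n:ℝ)+1) := by positivity
  have hexp : B * (3*((n:ℝ)+1))^3 = (27*B*((n:ℝ)+1)) * (((n:ℝ)+1)*((n:ℝ)+1)) := by ring
  rw [hexp] at hchain
  have hle1 : 27*B*((n:ℝ)+1) ≤ 1 := by
    by_contra hgt
    push_neg at hgt
    have := mul_lt_mul_of_pos_right hgt hXpos
    linarith
  nlinarith [h27, hle1, hBpos]
end
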